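/- arXiv:2112.08699 — 11 statements merged into one kernel-verified Lean document; each statement's English description precedes it below -/
import Mathlib

section
/- Let m ∈ ℕ and φ ∈ C^m(ℝ). The following are equivalent: (1) for every n ∈ ℕ there exist n' ∈ ℕ and C > 0 such that every f ∈ C^m(ℝ) satisfying |f^{(i)}(x)| ≤ (1+x²)^n for all 0 ≤ i ≤ m and all x ∈ ℝ satisfies |(f ∘ φ)^{(i)}(x)| ≤ C(1+x²)^{n'} for all 0 ≤ i ≤ m and all x ∈ ℝ; (2) there exist D > 0 and p ∈ ℕ such that |φ^{(j)}(x)| ≤ D(1+x²)^p for all 0 ≤ j ≤ m and all x ∈ ℝ. Moreover, if (2) holds with constants D and p, then in (1) one may take n' = p(2n+m). -/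
namespace CompOm

/-- All ways to increment one entry of a list by one. -/
def bumps : List ℕ → List (List ℕ)
  | [] => []
  | a :: t => ((a + 1) :: t) :: (bumps t).map (a :: ·)

/-- Expansion of one Faà di Bruno term under differentiation. -/
def expand (q : ℕ × List ℕ) : List (ℕ × List ℕ) :=
  (q.1 + 1, 1 :: q.2) :: (bumps q.2).map (fun js => (q.1, js))

/-- Symbolic Faà di Bruno terms of order `i`. -/
def Lk : ℕ → List (ℕ × List ℕ)
  | 0 => [(0, [])]
  | i + 1 => (Lk i).flatMap expand

noncomputable def term (f φ : ℝ → ℝ) (x : ℝ) (q : ℕ × List ℕ) : ℝ :=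
  iteratedDeriv q.1 f (φ x) * (q.2.map (fun j => iteratedDeriv j φ x)).prod

lemma mem_bumps {js js' : List ℕ} (h : js' ∈ bumps js) :
    js'.length = js.length ∧ ∀ j ∈ js', ∃ a ∈ js, j = a ∨ j = a + 1 := by
  induction js generalizing js' with
  | nil => simp [bumps] at h
  | cons a t ih =>
    simp only [bumps, List.mem_cons, List.mem_map] at h
    rcases h with rfl | ⟨l, hl, rfl⟩
    · refine ⟨rfl, ?_⟩
      intro j hj
      rcases List.mem_cons.1 hj with rfl | hj
      · exact ⟨a, by simp, Or.inr rfl⟩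
      · exact ⟨j, by simp [hj], Or.inl rfl⟩
    · obtain ⟨hlen, hmem⟩ := ih hl
      refine ⟨by simp [hlen], ?_⟩
      intro j hj
      rcases List.mem_cons.1 hj with rfl | hj
      · exact ⟨j, by simp, Or.inl rfl⟩
      · obtain ⟨b, hb, hb'⟩ := hmem j hj
        exact ⟨b, by simp [hb], hb'⟩

lemma Lk_mem : ∀ i, ∀ q ∈ Lk i, q.1 ≤ i ∧ q.2.length ≤ i ∧ ∀ j ∈ q.2, 1 ≤ j ∧ j ≤ i := by
  intro i
  induction i with
  | zero => intro q hq; simp [Lk] at hq; simp [hq]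
  | succ i ih =>
    intro q hq
    simp only [Lk, List.mem_flatMap] at hq
    obtain ⟨r, hr, hq⟩ := hq
    obtain ⟨h1, h2, h3⟩ := ih r hr
    simp only [expand, List.mem_cons, List.mem_map] at hq
    rcases hq with rfl | ⟨js, hjs, rfl⟩
    · refine ⟨by omega, by simp; omega, ?_⟩
      intro j hj
      rcases List.mem_cons.1 hj with rfl | hj
      · omega
      · have := h3 j hj; omega
    · obtain ⟨hlen, hmem⟩ := mem_bumps hjs
      refine ⟨by omega, by show js.length ≤ i + 1; omega, ?_⟩
      intro j hj
      obtain ⟨a, ha, ha'⟩ := hmem j hj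
      have := h3 a ha
      omega

lemma sum_map_flatMap {α β : Type*} (l : List α) (g : α → List β) (h : β → ℝ) :
    ((l.flatMap g).map h).sum = (l.map (fun a => ((g a).map h).sum)).sum := by
  induction l with
  | nil => simp
  | cons a t ih => simp [List.flatMap_cons, ih]

lemma hasDerivAt_list_sum {α : Type*} (l : List α) (F : α → ℝ → ℝ) (F' : α → ℝ) (x : ℝ)
    (h : ∀ a ∈ l, HasDerivAt (F a) (F' a) x) :
    HasDerivAt (fun y => (l.map (fun a => F a y)).sum) ((l.map F').sum) x := by
  induction l with
  | nil => simpa using hasDerivAt_const x (0 : ℝ)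
  | cons a t ih =>
    simp only [List.map_cons, List.sum_cons]
    exact (h a (by simp)).add (ih (fun b hb => h b (by simp [hb])))

lemma bumps_hasDerivAt {m : ℕ} (φ : ℝ → ℝ) (hφ : ContDiff ℝ (m : ℕ∞) φ) (x : ℝ) :
    ∀ js : List ℕ, (∀ j ∈ js, j < m) →
      HasDerivAt (fun y => (js.map (fun j => iteratedDeriv j φ y)).prod)
        (((bumps js).map (fun js' => (js'.map (fun j => iteratedDeriv j φ x)).prod)).sum) x := by
  intro js
  induction js with
  | nil => intro _; simpa [bumps] using hasDerivAt_const x (1 : ℝ)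
  | cons a t ih =>
    intro hj
    have ha : HasDerivAt (fun y => iteratedDeriv a φ y) (iteratedDeriv (a + 1) φ x) x := by
      have hd : Differentiable ℝ (iteratedDeriv a φ) := by
        apply hφ.differentiable_iteratedDeriv
        exact_mod_cast (hj a (by simp))
      have := (hd x).hasDerivAt
      rwa [iteratedDeriv_succ]
    have ht := ih (fun j hj' => hj j (by simp [hj']))
    have hmul := ha.mul ht
    have heq : (((bumps (a :: t)).map
          (fun js' => (js'.map (fun j => iteratedDeriv j φ x)).prod)).sum) =
        iteratedDeriv (a + 1) φ x * (t.map (fun j => iteratedDeriv j φ x)).prod +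
        iteratedDeriv a φ x *
          ((bumps t).map (fun js' => (js'.map (fun j => iteratedDeriv j φ x)).prod)).sum := by
      simp only [bumps, List.map_cons, List.sum_cons, List.map_map, List.prod_cons]
      congr 1
      rw [← List.sum_map_mul_left]
      congr 1
    rw [heq]
    simp only [List.map_cons, List.prod_cons]
    exact hmul

lemma key_identity {m : ℕ} (hm : 1 ≤ m) (φ f : ℝ → ℝ) (hφ : ContDiff ℝ (m : ℕ∞) φ)
    (hf : ContDiff ℝ (m : ℕ∞) f) :
    ∀ i ≤ m, ∀ x : ℝ, iteratedDeriv i (f ∘ φ) x = ((Lk i).map (term f φ x)).sum := by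
  intro i
  induction i with
  | zero => intro _ x; simp [Lk, term, Function.comp]
  | succ i ih =>
    intro him x
    have hi : i < m := by omega
    have hstep : ∀ y : ℝ, iteratedDeriv i (f ∘ φ) y = ((Lk i).map (term f φ y)).sum :=
      fun y => ih (by omega) y
    rw [iteratedDeriv_succ]
    have hcongr : deriv (iteratedDeriv i (f ∘ φ)) x =
        deriv (fun y => ((Lk i).map (term f φ y)).sum) x := by
      congr 1; funext y; exact hstep y
    rw [hcongr]
    have hφd : HasDerivAt φ (iteratedDeriv 1 φ x) x := by
      have hd : Differentiable ℝ φ := hφ.differentiable (by exact_mod_cast (show m ≠ 0 by omega))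
      have := (hd x).hasDerivAt
      rwa [iteratedDeriv_one]
    have hterm : ∀ q ∈ Lk i, HasDerivAt (fun y => term f φ y q)
        (((expand q).map (term f φ x)).sum) x := by
      intro q hq
      obtain ⟨hk, hlen, hjs⟩ := Lk_mem i q hq
      have hfk : HasDerivAt (iteratedDeriv q.1 f) (iteratedDeriv (q.1 + 1) f (φ x)) (φ x) := by
        have hd : Differentiable ℝ (iteratedDeriv q.1 f) := by
          apply hf.differentiable_iteratedDeriv
          exact_mod_cast (by omega : q.1 < m)
        have := (hd (φ x)).hasDerivAt
        rwa [iteratedDeriv_succ]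
      have hcomp : HasDerivAt (fun y => iteratedDeriv q.1 f (φ y))
          (iteratedDeriv (q.1 + 1) f (φ x) * iteratedDeriv 1 φ x) x := hfk.comp x hφd
      have hprod := bumps_hasDerivAt φ hφ x q.2 (fun j hj => by have := hjs j hj; omega)
      have hmul := hcomp.mul hprod
      have heq : ((expand q).map (term f φ x)).sum =
          iteratedDeriv (q.1 + 1) f (φ x) * iteratedDeriv 1 φ x *
            (q.2.map (fun j => iteratedDeriv j φ x)).prod +
          iteratedDeriv q.1 f (φ x) *
            ((bumps q.2).map (fun js' => (js'.map (fun j => iteratedDeriv j φ x)).prod)).sum := by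
        simp only [expand, List.map_cons, List.sum_cons, List.map_map, term, List.prod_cons]
        congr 1
        · ring
        · rw [← List.sum_map_mul_left]
          congr 1
      rw [heq]
      exact hmul
    have hsum := hasDerivAt_list_sum (Lk i) (fun q y => term f φ y q)
        (fun q => ((expand q).map (term f φ x)).sum) x hterm
    rw [hsum.deriv]
    show ((Lk i).map (fun q => ((expand q).map (term f φ x)).sum)).sum = _
    rw [← sum_map_flatMap]
    rfl

/-! ### Bounds -/

lemma Lk_length_mono : Monotone (fun i => (Lk i).length) := by
  apply monotone_nat_of_le_succ
  intro i
  show (Lk i).length ≤ (Lk (i + 1)).length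
  rw [show Lk (i + 1) = (Lk i).flatMap expand from rfl, List.length_flatMap]
  calc (Lk i).length = ((Lk i).map (fun _ => 1)).sum := by simp
    _ ≤ ((Lk i).map (List.length ∘ expand)).sum := by
        apply List.sum_le_sum
        intro q _
        simp [expand]

lemma abs_list_sum_le {α : Type*} (l : List α) (F : α → ℝ) (K : ℝ)
    (h : ∀ a ∈ l, |F a| ≤ K) : |(l.map F).sum| ≤ l.length * K := by
  induction l with
  | nil => simp
  | cons a t ih =>
    simp only [List.map_cons, List.sum_cons, List.length_cons]
    calc |F a + (t.map F).sum| ≤ |F a| + |(t.map F).sum| := abs_add_le _ _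
      _ ≤ K + t.length * K := by
          gcongr
          · exact h a (by simp)
          · exact ih (fun b hb => h b (by simp [hb]))
      _ = (t.length + 1) * K := by ring
      _ = _ := by push_cast; ring

lemma abs_list_prod_le (l : List ℕ) (g : ℕ → ℝ) (b : ℝ)
    (h : ∀ j ∈ l, |g j| ≤ b) : |(l.map g).prod| ≤ b ^ l.length := by
  induction l with
  | nil => simp
  | cons a t ih =>
    have hb : 0 ≤ b := le_trans (abs_nonneg _) (h a (by simp))
    simp only [List.map_cons, List.prod_cons, List.length_cons, abs_mul, pow_succ]
    rw [mul_comm (b ^ t.length) b]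
    exact mul_le_mul (h a (by simp)) (ih (fun j hj => h j (by simp [hj])))
      (abs_nonneg _) hb

lemma term_bound {m n p : ℕ} {D : ℝ} (hD : 0 < D) (φ f : ℝ → ℝ)
    (hφb : ∀ j ≤ m, ∀ x : ℝ, |iteratedDeriv j φ x| ≤ D * (1 + x ^ 2) ^ p)
    (hfb : ∀ i ≤ m, ∀ x : ℝ, |iteratedDeriv i f x| ≤ (1 + x ^ 2) ^ n)
    {i : ℕ} (him : i ≤ m) (x : ℝ) (q : ℕ × List ℕ) (hq : q ∈ Lk i) :
    |term f φ x q| ≤ (1 + D ^ 2) ^ n * (max D 1) ^ m * (1 + x ^ 2) ^ (p * (2 * n + m)) := by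
  obtain ⟨hk, hlen, hjs⟩ := Lk_mem i q hq
  have hx2 : (0:ℝ) ≤ 1 + x ^ 2 := by positivity
  have hx1 : (1:ℝ) ≤ 1 + x ^ 2 := by nlinarith [sq_nonneg x]
  have hφx : |φ x| ≤ D * (1 + x ^ 2) ^ p := by
    have := hφb 0 (by omega) x
    simpa using this
  have h1 : 1 + (φ x) ^ 2 ≤ (1 + D ^ 2) * ((1 + x ^ 2) ^ p) ^ 2 := by
    have h2 : (φ x) ^ 2 ≤ (D * (1 + x ^ 2) ^ p) ^ 2 := by
      rw [← sq_abs (φ x)]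
      apply pow_le_pow_left₀ (abs_nonneg _) hφx
    have h3 : (1:ℝ) ≤ ((1 + x ^ 2) ^ p) ^ 2 := one_le_pow₀ (one_le_pow₀ hx1)
    nlinarith
  have hfbd : |iteratedDeriv q.1 f (φ x)| ≤ (1 + D ^ 2) ^ n * (1 + x ^ 2) ^ (2 * p * n) := by
    calc |iteratedDeriv q.1 f (φ x)| ≤ (1 + (φ x) ^ 2) ^ n :=
          hfb q.1 (by omega) (φ x)
      _ ≤ ((1 + D ^ 2) * ((1 + x ^ 2) ^ p) ^ 2) ^ n := by
          apply pow_le_pow_left₀ (by positivity) h1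
      _ = (1 + D ^ 2) ^ n * (1 + x ^ 2) ^ (2 * p * n) := by
          rw [mul_pow, ← pow_mul, ← pow_mul]
          ring_nf
  have hbase : (1:ℝ) ≤ max D 1 * (1 + x ^ 2) ^ p := by
    have h4 : (1:ℝ) ≤ (1 + x ^ 2) ^ p := one_le_pow₀ hx1
    nlinarith [le_max_right D 1]
  have hprod : |(q.2.map (fun j => iteratedDeriv j φ x)).prod| ≤
      (max D 1) ^ m * (1 + x ^ 2) ^ (p * m) := by
    calc |(q.2.map (fun j => iteratedDeriv j φ x)).prod| ≤
        (max D 1 * (1 + x ^ 2) ^ p) ^ q.2.length := by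
          apply abs_list_prod_le
          intro j hj
          calc |iteratedDeriv j φ x| ≤ D * (1 + x ^ 2) ^ p :=
                hφb j (by have := hjs j hj; omega) x
            _ ≤ max D 1 * (1 + x ^ 2) ^ p := by gcongr; exact le_max_left D 1
      _ ≤ (max D 1 * (1 + x ^ 2) ^ p) ^ m := pow_le_pow_right₀ hbase (by omega)
      _ = (max D 1) ^ m * (1 + x ^ 2) ^ (p * m) := by
          rw [mul_pow, ← pow_mul, mul_comm p m]
  calc |term f φ x q| = |iteratedDeriv q.1 f (φ x)| *
        |(q.2.map (fun j => iteratedDeriv j φ x)).prod| := abs_mul _ _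
    _ ≤ ((1 + D ^ 2) ^ n * (1 + x ^ 2) ^ (2 * p * n)) *
        ((max D 1) ^ m * (1 + x ^ 2) ^ (p * m)) := by
        apply mul_le_mul hfbd hprod (abs_nonneg _) (by positivity)
    _ = (1 + D ^ 2) ^ n * (max D 1) ^ m * (1 + x ^ 2) ^ (2 * p * n + p * m) := by
        rw [pow_add]; ring
    _ = (1 + D ^ 2) ^ n * (max D 1) ^ m * (1 + x ^ 2) ^ (p * (2 * n + m)) := by
        rw [show 2 * p * n + p * m = p * (2 * n + m) from by ring]

/-- The main quantitative estimate. -/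
lemma main_bound {m : ℕ} (hm : 1 ≤ m) (φ : ℝ → ℝ) (hφ : ContDiff ℝ (m : ℕ∞) φ)
    {D : ℝ} (hD : 0 < D) (p : ℕ)
    (hφb : ∀ j ≤ m, ∀ x : ℝ, |iteratedDeriv j φ x| ≤ D * (1 + x ^ 2) ^ p)
    (n : ℕ) :
    ∃ C > (0 : ℝ), ∀ f : ℝ → ℝ, ContDiff ℝ (m : ℕ∞) f →
      (∀ i ≤ m, ∀ x : ℝ, |iteratedDeriv i f x| ≤ (1 + x ^ 2) ^ n) →
      ∀ i ≤ m, ∀ x : ℝ, |iteratedDeriv i (f ∘ φ) x| ≤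
        C * (1 + x ^ 2) ^ (p * (2 * n + m)) := by
  set K : ℝ := (1 + D ^ 2) ^ n * (max D 1) ^ m with hK
  have hKpos : 0 < K := by
    apply mul_pos (by positivity)
    exact pow_pos (lt_of_lt_of_le one_pos (le_max_right D 1)) m
  refine ⟨((Lk m).length + 1) * K, by positivity, ?_⟩
  intro f hf hfb i him x
  rw [key_identity hm φ f hφ hf i him x]
  have habs := abs_list_sum_le (Lk i) (term f φ x) (K * (1 + x ^ 2) ^ (p * (2 * n + m)))
    (fun q hq => by
      have := term_bound hD φ f hφb hfb him x q hq
      calc |term f φ x q| ≤ (1 + D ^ 2) ^ n * (max D 1) ^ m *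
          (1 + x ^ 2) ^ (p * (2 * n + m)) := this
        _ = K * (1 + x ^ 2) ^ (p * (2 * n + m)) := by rw [hK])
  have hlen : ((Lk i).length : ℝ) ≤ (Lk m).length + 1 := by
    have h := Lk_length_mono him
    have : (Lk i).length ≤ (Lk m).length + 1 := le_trans h (Nat.le_succ _)
    exact_mod_cast this
  calc |((Lk i).map (term f φ x)).sum| ≤
      (Lk i).length * (K * (1 + x ^ 2) ^ (p * (2 * n + m))) := habs
    _ ≤ ((Lk m).length + 1) * (K * (1 + x ^ 2) ^ (p * (2 * n + m))) := by
        apply mul_le_mul_of_nonneg_right hlen (by positivity)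
    _ = ((Lk m).length + 1) * K * (1 + x ^ 2) ^ (p * (2 * n + m)) := by ring

lemma iteratedDeriv_zero_fun : ∀ k, iteratedDeriv k (fun _ : ℝ => (0:ℝ)) = fun _ => 0
  | 0 => by simp [iteratedDeriv_zero]
  | k + 1 => by
      rw [iteratedDeriv_succ',
        show deriv (fun _ : ℝ => (0:ℝ)) = fun _ => (0:ℝ) from funext fun x => deriv_const x 0]
      exact iteratedDeriv_zero_fun k

end CompOm

/-- Characterization of the symbols `φ` for which the composition operator `C_φ`
maps `O^m(ℝ)` continuously into itself, together with the explicit choice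
`n' = p(2n+m)` of the target index. -/
theorem composition_Om_continuous_iff (m : ℕ) (hm : 1 ≤ m) (φ : ℝ → ℝ)
    (hφ : ContDiff ℝ (m : ℕ∞) φ) :
    ((∀ n : ℕ, ∃ n' : ℕ, ∃ C > (0 : ℝ), ∀ f : ℝ → ℝ, ContDiff ℝ (m : ℕ∞) f →
        (∀ i ≤ m, ∀ x : ℝ, |iteratedDeriv i f x| ≤ (1 + x ^ 2) ^ n) →
        ∀ i ≤ m, ∀ x : ℝ, |iteratedDeriv i (f ∘ φ) x| ≤ C * (1 + x ^ 2) ^ n') ↔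
      (∃ D > (0 : ℝ), ∃ p : ℕ, ∀ j ≤ m, ∀ x : ℝ,
        |iteratedDeriv j φ x| ≤ D * (1 + x ^ 2) ^ p)) ∧
    (∀ D > (0 : ℝ), ∀ p : ℕ,
      (∀ j ≤ m, ∀ x : ℝ, |iteratedDeriv j φ x| ≤ D * (1 + x ^ 2) ^ p) →
      ∀ n : ℕ, ∃ C > (0 : ℝ), ∀ f : ℝ → ℝ, ContDiff ℝ (m : ℕ∞) f →
        (∀ i ≤ m, ∀ x : ℝ, |iteratedDeriv i f x| ≤ (1 + x ^ 2) ^ n) →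
        ∀ i ≤ m, ∀ x : ℝ, |iteratedDeriv i (f ∘ φ) x| ≤
          C * (1 + x ^ 2) ^ (p * (2 * n + m))) := by
  constructor
  · constructor
    · -- (1) → (2): apply to f = id
      intro h
      obtain ⟨n', C, hC, hmain⟩ := h 1
      refine ⟨C, hC, n', ?_⟩
      intro j hj x
      have hid : ContDiff ℝ (m : ℕ∞) (fun x : ℝ => x) := contDiff_id
      have hidb : ∀ i ≤ m, ∀ x : ℝ, |iteratedDeriv i (fun x : ℝ => x) x| ≤ (1 + x ^ 2) ^ 1 := by
        intro i _ x
        have hx1 : (1:ℝ) ≤ (1 + x ^ 2) ^ 1 := by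
          rw [pow_one]; nlinarith [sq_nonneg x]
        match i with
        | 0 =>
          rw [iteratedDeriv_zero]
          rw [pow_one]
          nlinarith [sq_nonneg (|x| - 1), abs_nonneg x, sq_abs x]
        | 1 =>
          rw [iteratedDeriv_one, show deriv (fun x : ℝ => x) x = 1 from deriv_id x]
          simpa using hx1
        | (k + 2) =>
          rw [iteratedDeriv_succ',
            show deriv (fun x : ℝ => x) = fun _ => (1:ℝ) from funext fun y => deriv_id y,
            iteratedDeriv_succ',
            show deriv (fun _ : ℝ => (1:ℝ)) = fun _ => (0:ℝ) from
              funext fun y => deriv_const y 1,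
            CompOm.iteratedDeriv_zero_fun k]
          simp
          linarith
      have hres := hmain (fun x => x) hid hidb j hj x
      rwa [show ((fun x : ℝ => x) ∘ φ) = φ from rfl] at hres
    · -- (2) → (1)
      rintro ⟨D, hD, p, hφb⟩ n
      obtain ⟨C, hC, h⟩ := CompOm.main_bound hm φ hφ hD p hφb n
      exact ⟨p * (2 * n + m), C, hC, h⟩
  · intro D hD p hφb n
    exact CompOm.main_bound hm φ hφ hD p hφb n
end

section
/- Let φ: ℝ → ℝ be continuous and let C_φ: C(ℝ) → C(ℝ), g ↦ g ∘ φ, be the composition operator on the space C(ℝ) of continuous real-valued functions on ℝ endowed with the compact-open topology. Then C_φ is supercyclic if and only if C_φ is mixing. -/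
open Filter Topology

open Set Function

/-!
If `C_φ` is supercyclic with supercyclic vector `g`, then `φ` is injective (otherwise every
`g ∘ φⁿ`, `n ≥ 1`, takes equal values at two points), hence strictly monotone or antitone.
It has no fixed point `p`: `ψ = φ ∘ φ` is monotone, so every `y` lies with `p` in a compact
set `K` which `φ` either maps into itself or onto a superset of itself. In the first case the
orbit of `y` stays in `K`, so `c • g ∘ φⁿ` cannot approximate a function with `f p = g p` and
`f y` large; in the second case approximating the constant `g p` on `K` forces `g = g p` on
`K`. Thus `g` would be constant. A strictly antitone `φ` has a fixed point, so `φ` is strictly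
increasing and `φⁿ` pushes every compact set off itself; by Urysohn and Tietze one then finds
`h` equal to `f` on `K` with `h ∘ φⁿ` equal to `f'` on `K`, which is mixing.

Conversely, `C(ℝ)` is a separable Baire space, and Birkhoff's transitivity argument turns the
mixing property into a dense orbit.
-/

/-- The `n`-th iterate of a continuous self-map of `ℝ`, as a continuous map. -/
noncomputable def cmIter (φ : C(ℝ, ℝ)) (n : ℕ) : C(ℝ, ℝ) :=
  ⟨(⇑φ)^[n], φ.continuous.iterate n⟩

theorem exists_dense_range_of_forall_image_inter_nonempty {X : Type*} [TopologicalSpace X]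
    [BaireSpace X] [SecondCountableTopology X] [Nonempty X] (T : ℕ → X → X)
    (hT : ∀ n, Continuous (T n))
    (h : ∀ U V : Set X, IsOpen U → IsOpen V → U.Nonempty → V.Nonempty →
      ∃ n, (T n '' U ∩ V).Nonempty) :
    ∃ x, Dense (range fun n => T n x) := by
  obtain ⟨B, hBc, hB0, hB⟩ := TopologicalSpace.exists_countable_basis X
  have hopen : ∀ V ∈ B, IsOpen (⋃ n, T n ⁻¹' V) := fun V hV =>
    isOpen_iUnion fun n => (hB.isOpen hV).preimage (hT n)
  have hdense : ∀ V ∈ B, Dense (⋃ n, T n ⁻¹' V) := by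
    intro V hV
    refine dense_iff_inter_open.2 fun U hU hUne => ?_
    obtain ⟨n, _, ⟨x, hxU, rfl⟩, hxV⟩ :=
      h U V hU (hB.isOpen hV) hUne (nonempty_iff_ne_empty.2 fun hV0 => hB0 (hV0 ▸ hV))
    exact ⟨x, hxU, mem_iUnion.2 ⟨n, hxV⟩⟩
  obtain ⟨x, hx⟩ := (dense_biInter_of_isOpen hopen hBc hdense).nonempty
  refine ⟨x, hB.dense_iff.2 fun V hV _ => ?_⟩
  obtain ⟨n, hn⟩ := mem_iUnion.1 (mem_iInter₂.1 hx V hV)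
  exact ⟨T n x, hn, n, rfl⟩

namespace ContinuousMap

variable {X Y : Type*} [TopologicalSpace X]

theorem exists_isCompact_eqOn_subset [UniformSpace Y] {f : C(X, Y)} {U : Set C(X, Y)}
    (hU : U ∈ 𝓝 f) : ∃ K, IsCompact K ∧ {h : C(X, Y) | EqOn h f K} ⊆ U := by
  obtain ⟨⟨K, W⟩, ⟨hK, hW⟩, hKU⟩ :=
    (nhds_basis_uniformity' hasBasis_compactConvergenceUniformity).mem_iff.1 hU
  exact ⟨K, hK, fun h hh => hKU fun x hx => hh hx ▸ refl_mem_uniformity hW⟩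

theorem setOf_forall_dist_lt_mem_nhds [PseudoMetricSpace Y] (f : C(X, Y)) {K : Set X}
    (hK : IsCompact K) {ε : ℝ} (hε : 0 < ε) :
    {h : C(X, Y) | ∀ x ∈ K, dist (f x) (h x) < ε} ∈ 𝓝 f :=
  (nhds_basis_uniformity' hasBasis_compactConvergenceUniformity).mem_of_mem
    (i := (K, {q | dist q.1 q.2 < ε})) ⟨hK, Metric.dist_mem_uniformity hε⟩

theorem exists_eqOn_eqOn_of_disjoint [NormalSpace X] {s t : Set X} (hs : IsClosed s)
    (ht : IsClosed t) (hst : Disjoint s t) (f g : C(X, ℝ)) :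
    ∃ h : C(X, ℝ), EqOn h f s ∧ EqOn h g t := by
  obtain ⟨u, hu0, hu1, -⟩ := exists_continuous_zero_one_of_isClosed hs ht hst
  refine ⟨f + u * (g - f), fun x hx => ?_, fun x hx => ?_⟩
  · simp [hu0 hx]
  · simp [hu1 hx]

theorem exists_comp_eqOn_of_injOn [TopologicalSpace Y] [NormalSpace Y] [T2Space Y]
    (ψ : C(X, Y)) {K : Set X} (hK : IsCompact K) (hinj : InjOn ψ K) (f : C(X, ℝ)) :
    ∃ G : C(Y, ℝ), EqOn (G ∘ ψ) f K := by
  have := isCompact_iff_compactSpace.1 hK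
  have he : IsClosedEmbedding (K.domRestrict ψ) :=
    (ψ.continuous.comp continuous_subtype_val).isClosedEmbedding (injOn_iff_injective.1 hinj)
  obtain ⟨G, hG⟩ := exists_extension he (f.restrict K)
  exact ⟨G, fun x hx => DFunLike.congr_fun hG ⟨x, hx⟩⟩

theorem exists_eqOn_and_comp_eqOn [NormalSpace X] [T2Space X] (ψ : C(X, X)) {K : Set X}
    (hK : IsCompact K) (hinj : InjOn ψ K) (hdisj : Disjoint K (ψ '' K)) (f f' : C(X, ℝ)) :
    ∃ h : C(X, ℝ), EqOn h f K ∧ EqOn (h ∘ ψ) f' K := by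
  obtain ⟨G, hG⟩ := exists_comp_eqOn_of_injOn ψ hK hinj f'
  obtain ⟨h, hf, hG'⟩ := exists_eqOn_eqOn_of_disjoint hK.isClosed
    (hK.image ψ.continuous).isClosed hdisj f G
  exact ⟨h, hf, fun x hx => (hG' (mem_image_of_mem ψ hx)).trans (hG hx)⟩

theorem eventually_precomp_image_inter_nonempty [NormalSpace X] [T2Space X]
    (ψ : ℕ → C(X, X)) (hinj : ∀ n, Injective (ψ n))
    (hesc : ∀ K, IsCompact K → ∀ᶠ n in atTop, Disjoint K (ψ n '' K))
    {U V : Set C(X, ℝ)} (hU : IsOpen U) (hV : IsOpen V) (hUne : U.Nonempty)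
    (hVne : V.Nonempty) :
    ∀ᶠ n in atTop, ((fun g : C(X, ℝ) => g.comp (ψ n)) '' U ∩ V).Nonempty := by
  obtain ⟨f, hf⟩ := hUne
  obtain ⟨f', hf'⟩ := hVne
  obtain ⟨K, hK, hKU⟩ := exists_isCompact_eqOn_subset (hU.mem_nhds hf)
  obtain ⟨K', hK', hK'V⟩ := exists_isCompact_eqOn_subset (hV.mem_nhds hf')
  filter_upwards [hesc _ (hK.union hK')] with n hn
  obtain ⟨h, hhf, hhf'⟩ := exists_eqOn_and_comp_eqOn (ψ n) (hK.union hK') (hinj n).injOn hn f f'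
  exact ⟨h.comp (ψ n), ⟨h, hKU (hhf.mono subset_union_left), rfl⟩,
    hK'V (hhf'.mono subset_union_right)⟩

end ContinuousMap

theorem tendsto_iterate_atTop_of_forall_lt {α : Type*} [ConditionallyCompleteLinearOrder α]
    [TopologicalSpace α] [OrderTopology α] {f : α → α} (hf : Continuous f)
    (h : ∀ x, x < f x) (x : α) : Tendsto (fun n => f^[n] x) atTop atTop := by
  have hmono : Monotone fun n => f^[n] x :=
    monotone_nat_of_le_succ fun n => by rw [iterate_succ_apply']; exact (h _).le
  refine tendsto_atTop_atTop_of_monotone' hmono fun hbdd => ?_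
  exact (h _).ne' (isFixedPt_of_tendsto_iterate (tendsto_atTop_ciSup hmono hbdd) hf.continuousAt)

theorem tendsto_iterate_atBot_of_forall_lt {α : Type*} [ConditionallyCompleteLinearOrder α]
    [TopologicalSpace α] [OrderTopology α] {f : α → α} (hf : Continuous f)
    (h : ∀ x, f x < x) (x : α) : Tendsto (fun n => f^[n] x) atTop atBot :=
  tendsto_iterate_atTop_of_forall_lt (α := αᵒᵈ) hf h x

theorem exists_isFixedPt_of_le_of_le {f : ℝ → ℝ} (hf : Continuous f) {a b : ℝ} (ha : f a ≤ a)
    (hb : b ≤ f b) : ∃ p, IsFixedPt f p := by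
  obtain ⟨p, hp⟩ := intermediate_value_univ a b (hf.sub continuous_id)
    (show (0 : ℝ) ∈ Icc (f a - a) (f b - b) from ⟨by simpa, by simpa⟩)
  exact ⟨p, sub_eq_zero.1 hp⟩

theorem forall_lt_or_forall_gt_of_forall_not_isFixedPt {f : ℝ → ℝ} (hf : Continuous f)
    (hfix : ∀ x, ¬IsFixedPt f x) : (∀ x, x < f x) ∨ (∀ x, f x < x) := by
  by_contra! h
  obtain ⟨⟨a, ha⟩, ⟨b, hb⟩⟩ := h
  obtain ⟨p, hp⟩ := exists_isFixedPt_of_le_of_le hf ha hb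
  exact hfix p hp

theorem Antitone.exists_isFixedPt {f : ℝ → ℝ} (hanti : Antitone f) (hf : Continuous f) :
    ∃ p, IsFixedPt f p := by
  rcases le_total 0 (f 0) with h | h
  · exact exists_isFixedPt_of_le_of_le hf (hanti h) h
  · exact exists_isFixedPt_of_le_of_le hf h (hanti h)

theorem eventually_disjoint_image_iterate {φ : ℝ → ℝ} (hc : Continuous φ) (hm : Monotone φ)
    (hfix : ∀ x, ¬IsFixedPt φ x) {K : Set ℝ} (hK : IsCompact K) :
    ∀ᶠ n in atTop, Disjoint K (φ^[n] '' K) := by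
  obtain ⟨a, ha⟩ := hK.bddBelow
  obtain ⟨b, hb⟩ := hK.bddAbove
  rcases forall_lt_or_forall_gt_of_forall_not_isFixedPt hc hfix with hup | hdown
  · filter_upwards [(tendsto_iterate_atTop_of_forall_lt hc hup a).eventually_gt_atTop b]
      with n hn
    refine disjoint_left.2 fun z hz ⟨x, hx, hxz⟩ => ?_
    have := (hm.iterate n) (ha hx)
    linarith [hb hz]
  · filter_upwards [(tendsto_iterate_atBot_of_forall_lt hc hdown b).eventually_lt_atBot a]
      with n hn
    refine disjoint_left.2 fun z hz ⟨x, hx, hxz⟩ => ?_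
    have := (hm.iterate n) (hb hx)
    linarith [ha hz]

theorem exists_isCompact_mapsTo_or_subset_image {α : Type*} [ConditionallyCompleteLinearOrder α]
    [TopologicalSpace α] [OrderTopology α] [DenselyOrdered α] {ψ : α → α} (hc : Continuous ψ)
    (hm : Monotone ψ) {p : α} (hp : IsFixedPt ψ p) (y : α) :
    ∃ J, IsCompact J ∧ p ∈ J ∧ y ∈ J ∧ (MapsTo ψ J J ∨ J ⊆ ψ '' J) := by
  rcases le_total p y with hpy | hyp
  · refine ⟨Icc p y, isCompact_Icc, ⟨le_rfl, hpy⟩, ⟨hpy, le_rfl⟩, ?_⟩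
    rcases le_total (ψ y) y with h | h
    · exact .inl fun x hx => ⟨hp ▸ hm hx.1, (hm hx.2).trans h⟩
    · refine .inr fun x hx => intermediate_value_Icc hpy hc.continuousOn ?_
      exact ⟨hp.symm ▸ hx.1, hx.2.trans h⟩
  · refine ⟨Icc y p, isCompact_Icc, ⟨hyp, le_rfl⟩, ⟨le_rfl, hyp⟩, ?_⟩
    rcases le_total y (ψ y) with h | h
    · exact .inl fun x hx => ⟨h.trans (hm hx.1), hp ▸ hm hx.2⟩
    · refine .inr fun x hx => intermediate_value_Icc hyp hc.continuousOn ?_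
      exact ⟨h.trans hx.1, hp.symm ▸ hx.2⟩

theorem mapsTo_union_image_of_mapsTo_comp {α : Type*} {f : α → α} {J : Set α}
    (h : MapsTo (f ∘ f) J J) : MapsTo f (J ∪ f '' J) (J ∪ f '' J) := by
  rintro _ (hx | ⟨x, hx, rfl⟩)
  · exact .inr (mem_image_of_mem f hx)
  · exact .inl (h hx)

theorem union_image_subset_image_of_subset_image_comp {α : Type*} {f : α → α} {J : Set α}
    (h : J ⊆ (f ∘ f) '' J) : J ∪ f '' J ⊆ f '' (J ∪ f '' J) := by
  rw [image_comp] at h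
  exact union_subset (h.trans (image_mono subset_union_right))
    (image_mono subset_union_left)

theorem exists_continuousMap_apply_eq_and_apply_eq {a b : ℝ} (hab : a ≠ b) (u v : ℝ) :
    ∃ f : C(ℝ, ℝ), f a = u ∧ f b = v := by
  have hba : b - a ≠ 0 := sub_ne_zero.2 hab.symm
  refine ⟨⟨fun x => u + (v - u) * ((x - a) / (b - a)), by fun_prop⟩, ?_, ?_⟩
  · simp
  · simp [div_self hba]

/-- `g` is a supercyclic vector of the composition operator `C_φ`. -/
def IsSupercyclicVector (φ g : C(ℝ, ℝ)) : Prop :=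
  Dense {h : C(ℝ, ℝ) | ∃ c : ℝ, ∃ n : ℕ, h = c • g.comp (cmIter φ n)}

namespace IsSupercyclicVector

variable {φ g : C(ℝ, ℝ)}

theorem exists_forall_abs_sub_lt (hg : IsSupercyclicVector φ g) (f : C(ℝ, ℝ)) {K : Set ℝ}
    (hK : IsCompact K) {ε : ℝ} (hε : 0 < ε) :
    ∃ c : ℝ, ∃ n : ℕ, ∀ x ∈ K, |c * g ((⇑φ)^[n] x) - f x| < ε := by
  obtain ⟨_, hh, c, n, rfl⟩ :=
    mem_closure_iff_nhds.1 (hg f) _ (ContinuousMap.setOf_forall_dist_lt_mem_nhds f hK hε)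
  exact ⟨c, n, fun x hx => (abs_sub_comm _ _).trans_lt (hh x hx)⟩

theorem exists_abs_sub_lt_and_abs_sub_lt (hg : IsSupercyclicVector φ g) {a b : ℝ} (hab : a ≠ b)
    (u v : ℝ) {ε : ℝ} (hε : 0 < ε) :
    ∃ c : ℝ, ∃ n : ℕ, |c * g ((⇑φ)^[n] a) - u| < ε ∧ |c * g ((⇑φ)^[n] b) - v| < ε := by
  obtain ⟨f, rfl, rfl⟩ := exists_continuousMap_apply_eq_and_apply_eq hab u v
  obtain ⟨c, n, h⟩ := hg.exists_forall_abs_sub_lt f (Set.toFinite {a, b}).isCompact hε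
  exact ⟨c, n, h a (by simp), h b (by simp)⟩

theorem exists_apply_ne (hg : IsSupercyclicVector φ g) (r : ℝ) : ∃ x, g x ≠ r := by
  by_contra! hconst
  obtain ⟨c, n, h0, h1⟩ := hg.exists_abs_sub_lt_and_abs_sub_lt zero_ne_one 0 1 one_half_pos
  simp only [hconst, abs_lt] at h0 h1
  linarith [h0.2, h1.1]

theorem injective (hg : IsSupercyclicVector φ g) : Injective φ := by
  intro a b hφ
  by_contra hab
  -- For `n ≥ 1` the orbit cannot separate `a` from `b`, so targets that do must be hit at `n = 0`.
  have hzero : ∀ u v, |u - v| = 1 → ∃ c : ℝ, |c * g a - u| < 1 / 3 ∧ |c * g b - v| < 1 / 3 := by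
    intro u v huv
    obtain ⟨c, n, hu, hv⟩ :=
      hg.exists_abs_sub_lt_and_abs_sub_lt hab u v (by norm_num : (0 : ℝ) < 1 / 3)
    rcases n with _ | n
    · exact ⟨c, hu, hv⟩
    · rw [iterate_succ_apply, hφ] at hu
      rw [iterate_succ_apply] at hv
      rw [abs_lt] at hu hv
      rcases abs_eq (zero_le_one' ℝ) |>.1 huv with h | h <;> linarith [hu.1, hu.2, hv.1, hv.2]
  obtain ⟨c, hca, hcb⟩ := hzero 0 1 (by norm_num)
  obtain ⟨d, hda, hdb⟩ := hzero 1 0 (by norm_num)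
  have hprod : (c * g a) * (d * g b) = (c * g b) * (d * g a) := by ring
  rw [abs_lt] at hca hcb hda hdb
  nlinarith [hca.1, hca.2, hcb.1, hcb.2, hda.1, hda.2, hdb.1, hdb.2]

theorem apply_ne_zero (hg : IsSupercyclicVector φ g) {p : ℝ} (hp : IsFixedPt φ p) : g p ≠ 0 := by
  intro h0
  obtain ⟨c, n, h⟩ :=
    hg.exists_forall_abs_sub_lt (ContinuousMap.const ℝ 1) isCompact_singleton one_pos
  have := h p rfl
  simp [(hp.iterate n).eq, h0] at this

theorem eq_of_mapsTo (hg : IsSupercyclicVector φ g) {K : Set ℝ} (hK : IsCompact K)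
    (hmaps : MapsTo φ K K) {p y : ℝ} (hp : IsFixedPt φ p) (hpK : p ∈ K) (hyK : y ∈ K) :
    y = p := by
  by_contra hyp
  have hgp : 0 < |g p| := abs_pos.2 (hg.apply_ne_zero hp)
  obtain ⟨B, hB⟩ := hK.exists_bound_of_continuousOn g.continuous.continuousOn
  have hBp : |g p| ≤ B := hB p hpK
  obtain ⟨c, n, hcp, hcy⟩ := hg.exists_abs_sub_lt_and_abs_sub_lt (Ne.symm hyp) (g p) (2 * B + 1)
    (lt_min hgp one_pos)
  rw [(hp.iterate n).eq] at hcp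
  have hgy : |g ((⇑φ)^[n] y)| ≤ B := hB _ (hmaps.iterate n hyK)
  -- `c` is close to `1` because of `p`, so `c • g` is bounded by `2B` on the orbit of `y`.
  have hc : |c - 1| < 1 := by
    have : |c - 1| * |g p| < 1 * |g p| := by
      rw [← abs_mul, sub_mul, one_mul, one_mul]; exact hcp.trans_le (min_le_left _ _)
    exact lt_of_mul_lt_mul_right this hgp.le
  rw [abs_lt] at hc
  have hcy' := (abs_lt.1 (hcy.trans_le (min_le_right _ _))).1
  have := abs_le.1 hgy
  nlinarith

theorem apply_eq_of_subset_image (hg : IsSupercyclicVector φ g) {K : Set ℝ} (hK : IsCompact K)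
    (hexp : K ⊆ φ '' K) {p : ℝ} (hp : IsFixedPt φ p) (hpK : p ∈ K) {x : ℝ} (hx : x ∈ K) :
    g x = g p := by
  have hgp : 0 < |g p| := abs_pos.2 (hg.apply_ne_zero hp)
  have hexp' : ∀ n, K ⊆ (⇑φ)^[n] '' K := by
    intro n
    induction n with
    | zero => simp
    | succ n ih =>
      rw [iterate_succ', image_comp]
      exact hexp.trans (image_mono ih)
  -- Approximating the constant `g p` on `K ⊆ φⁿ '' K` gives `c g p ≈ g p` and `c g x ≈ g p`.
  suffices h : |g p| * |g x - g p| ≤ 0 by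
    exact sub_eq_zero.1 (abs_nonpos_iff.1 (nonpos_of_mul_nonpos_right h hgp))
  refine le_of_forall_pos_le_add fun ε hε => ?_
  have hM : 0 < |g x| + |g p| := by positivity
  obtain ⟨c, n, hc⟩ := hg.exists_forall_abs_sub_lt (ContinuousMap.const ℝ (g p)) hK
    (div_pos hε hM)
  obtain ⟨x', hx'K, rfl⟩ := hexp' n hx
  have hcp := hc p hpK
  have hcx := hc x' hx'K
  rw [(hp.iterate n).eq] at hcp
  simp only [ContinuousMap.const_apply] at hcp hcx
  set y := (⇑φ)^[n] x'
  calc |g p| * |g y - g p|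
      = |g y * (g p - c * g p) + g p * (c * g y - g p)| := by
        rw [← abs_mul]; ring_nf
    _ ≤ |g y| * |g p - c * g p| + |g p| * |c * g y - g p| := by
        rw [← abs_mul, ← abs_mul]; exact abs_add_le _ _
    _ ≤ (|g y| + |g p|) * (ε / (|g y| + |g p|)) := by
        rw [add_mul, abs_sub_comm (g p)]; gcongr
    _ = 0 + ε := by field_simp; ring

theorem not_isFixedPt (hg : IsSupercyclicVector φ g) (hmono : Monotone (φ ∘ φ)) (p : ℝ) :
    ¬IsFixedPt φ p := by
  intro hp
  obtain ⟨y, hy⟩ := hg.exists_apply_ne (g p)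
  obtain ⟨J, hJ, hpJ, hyJ, hJφ⟩ := exists_isCompact_mapsTo_or_subset_image
    (φ.continuous.comp φ.continuous) hmono (hp.comp hp) y
  have hK : IsCompact (J ∪ φ '' J) := hJ.union (hJ.image φ.continuous)
  rcases hJφ with hmaps | hexp
  · have := hg.eq_of_mapsTo hK (mapsTo_union_image_of_mapsTo_comp hmaps) hp (.inl hpJ) (.inl hyJ)
    exact hy (congrArg g this)
  · exact hy (hg.apply_eq_of_subset_image hK (union_image_subset_image_of_subset_image_comp hexp)
      hp (.inl hpJ) (.inl hyJ))

end IsSupercyclicVector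

/-- For a continuous `φ : ℝ → ℝ`, the composition operator `C_φ : g ↦ g ∘ φ` on
`C(ℝ)` with the compact-open topology is supercyclic iff it is mixing. -/
theorem compositionOperator_supercyclic_iff_mixing (φ : C(ℝ, ℝ)) :
    (∃ g : C(ℝ, ℝ), Dense {h : C(ℝ, ℝ) | ∃ c : ℝ, ∃ n : ℕ,
        h = c • (g.comp (cmIter φ n))}) ↔
    (∀ U V : Set C(ℝ, ℝ), IsOpen U → IsOpen V → U.Nonempty → V.Nonempty →
      ∃ N : ℕ, ∀ n ≥ N,
        ((fun g : C(ℝ, ℝ) => g.comp (cmIter φ n)) '' U ∩ V).Nonempty) := by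
  constructor
  · rintro ⟨g, hg⟩
    have hg : IsSupercyclicVector φ g := hg
    have hmono : StrictMono φ := by
      refine (φ.continuous.strictMono_of_inj hg.injective).resolve_right fun hanti => ?_
      obtain ⟨p, hp⟩ := hanti.antitone.exists_isFixedPt φ.continuous
      exact hg.not_isFixedPt (hanti.comp hanti).monotone p hp
    have hfix := hg.not_isFixedPt (hmono.comp hmono).monotone
    intro U V hU hV hUne hVne
    exact eventually_atTop.1 (ContinuousMap.eventually_precomp_image_inter_nonempty _
      (fun n => (hmono.iterate n).injective)
      (fun K => eventually_disjoint_image_iterate φ.continuous hmono.monotone hfix)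
      hU hV hUne hVne)
  · intro hmix
    obtain ⟨g, hg⟩ := exists_dense_range_of_forall_image_inter_nonempty
      (fun n g => g.comp (cmIter φ n)) (fun n => ContinuousMap.continuous_precomp _)
      fun U V hU hV hUne hVne => ⟨_, (hmix U V hU hV hUne hVne).choose_spec _ le_rfl⟩
    exact ⟨g, hg.mono <| range_subset_iff.2 fun n => ⟨1, n, (one_smul ℝ _).symm⟩⟩
end

section
/- Let X be a separable locally convex Hausdorff topological vector space over ℝ and let J: X → C(ℝ) be an injective continuous linear map with dense range, where C(ℝ) is the space of continuous functions ℝ → ℝ with the compact-open topology. Assume the family of evaluation functionals {f ↦ (Jf)(a) : a ∈ ℝ} is linearly independent in the topological dual of X. Let φ: ℝ → ℝ be continuous and suppose there is a continuous linear operator C_φ: X → X with J(C_φ f) = (Jf) ∘ φ for every f ∈ X. If C_φ is supercyclic, then φ is strictly increasing and φ(x) ≠ x for every x ∈ ℝ. -/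
open Filter Topology Set Uniformity

namespace SupercyclicAux

variable {g : C(ℝ, ℝ)} {φ : ℝ → ℝ}

/-- The key approximation property extracted from supercyclicity:
every continuous target can be approximated on compacts by scalar multiples of
`g ∘ φ^[n]`. -/
def Approx (g : C(ℝ, ℝ)) (φ : ℝ → ℝ) : Prop :=
  ∀ (t : C(ℝ, ℝ)) (K : Set ℝ), IsCompact K → ∀ ε > 0, ∃ (c : ℝ) (n : ℕ),
    ∀ x ∈ K, |c * g (φ^[n] x) - t x| < ε

lemma approx_two (h : Approx g φ) {p q : ℝ} (hpq : p ≠ q) (u v : ℝ) {ε : ℝ} (hε : 0 < ε) :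
    ∃ (c : ℝ) (n : ℕ), |c * g (φ^[n] p) - u| < ε ∧ |c * g (φ^[n] q) - v| < ε := by
  have hqp : q - p ≠ 0 := sub_ne_zero.mpr (Ne.symm hpq)
  set t : C(ℝ, ℝ) := ⟨fun x => u + (v - u) * ((x - p) / (q - p)), by fun_prop⟩ with ht
  have htp : t p = u := by simp [ht]
  have htq : t q = v := by
    show u + (v - u) * ((q - p) / (q - p)) = v
    rw [div_self hqp]; ring
  obtain ⟨c, n, hc⟩ := h t {p, q} ((Set.toFinite _).isCompact) ε hε
  refine ⟨c, n, ?_, ?_⟩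
  · simpa [htp] using hc p (by simp)
  · simpa [htq] using hc q (by simp)

lemma injective_of_approx (h : Approx g φ) : Function.Injective φ := by
  intro p q hpq
  by_contra hne
  have hiter : ∀ n : ℕ, φ^[n + 1] p = φ^[n + 1] q := fun n => by
    rw [Function.iterate_succ_apply, Function.iterate_succ_apply, hpq]
  by_cases hβ : g q = 0
  · obtain ⟨c, n, h1, h2⟩ := approx_two h hne 0 1 (by norm_num : (0:ℝ) < 1/2)
    cases n with
    | zero => norm_num [hβ] at h2
    | succ n =>
      rw [hiter n] at h1
      have a1 := abs_lt.mp h1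
      have a2 := abs_lt.mp h2
      linarith [a1.1, a1.2, a2.1, a2.2]
  · have hGq : 0 < |g q| := abs_pos.mpr hβ
    have hGp : 0 ≤ |g p| := abs_nonneg _
    set ε : ℝ := min (1/2) (|g q| / (2 * |g p| + 2)) with hεdef
    have hε : 0 < ε := lt_min (by norm_num) (by positivity)
    have hε1 : ε ≤ 1/2 := min_le_left _ _
    have hε2 : ε ≤ |g q| / (2 * |g p| + 2) := min_le_right _ _
    obtain ⟨c, n, h1, h2⟩ := approx_two h hne 1 0 hε
    cases n with
    | zero =>
      simp only [Function.iterate_zero_apply, sub_zero] at h1 h2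
      have hcq : |c| * |g q| < ε := by rwa [← abs_mul]
      have hcp : |c| * |g p| < 1/2 := by
        have hd : |c| * (2 * |g p| + 2) < 1 := by
          have : |c| * |g q| < |g q| / (2 * |g p| + 2) := lt_of_lt_of_le hcq hε2
          have h2p : (0:ℝ) < 2 * |g p| + 2 := by positivity
          rw [div_eq_mul_inv] at this
          calc |c| * (2 * |g p| + 2)
              = (|c| * |g q|) * ((2 * |g p| + 2) / |g q|) := by
                field_simp
            _ < (|g q| * (2 * |g p| + 2)⁻¹) * ((2 * |g p| + 2) / |g q|) := by
                apply mul_lt_mul_of_pos_right this; positivity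
            _ = 1 := by
                field_simp
        nlinarith [abs_nonneg c]
      have : c * g p ≤ |c| * |g p| := by rw [← abs_mul]; exact le_abs_self _
      have := abs_lt.mp h1
      linarith
    | succ n =>
      rw [hiter n] at h1
      have a1 := abs_lt.mp h1
      have a2 := abs_lt.mp h2
      linarith

lemma no_bounded_orbit (h : Approx g φ) {x₀ b : ℝ} (hfix : φ x₀ = x₀) (hb : b ≠ x₀)
    {M : ℝ} (hM : ∀ n : ℕ, |g (φ^[n] b)| ≤ M) : False := by
  have hfixn : ∀ n : ℕ, φ^[n] x₀ = x₀ := fun n => Function.iterate_fixed hfix n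
  by_cases h0 : g x₀ = 0
  · obtain ⟨c, n, h1, _⟩ := approx_two h (Ne.symm hb) 1 0 (by norm_num : (0:ℝ) < 1/2)
    rw [hfixn n, h0] at h1
    norm_num at h1
  · have hG : 0 < |g x₀| := abs_pos.mpr h0
    have hM0 : 0 ≤ M := le_trans (abs_nonneg _) (hM 0)
    set ε : ℝ := min (|g x₀| / 2) (1/2) with hεdef
    have hε : 0 < ε := lt_min (by positivity) (by norm_num)
    have hε1 : ε ≤ |g x₀| / 2 := min_le_left _ _
    have hε2 : ε ≤ 1/2 := min_le_right _ _
    obtain ⟨c, n, h1, h2⟩ := approx_two h (Ne.symm hb) (g x₀) (2 * M + 2) hε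
    rw [hfixn n] at h1
    have hc1 : |c - 1| * |g x₀| < |g x₀| / 2 := by
      rw [← abs_mul]
      have : (c - 1) * g x₀ = c * g x₀ - g x₀ := by ring
      rw [this]
      exact lt_of_lt_of_le h1 hε1
    have hc : |c - 1| < 1/2 := by
      by_contra hcon
      push_neg at hcon
      nlinarith
    have hcabs : |c| < 3/2 := by
      have := abs_lt.mp hc
      cases abs_cases c with
      | inl hc' => rw [hc'.1]; linarith
      | inr hc' => rw [hc'.1]; linarith
    have hval : c * g (φ^[n] b) ≤ 3/2 * M := by
      calc c * g (φ^[n] b) ≤ |c * g (φ^[n] b)| := le_abs_self _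
        _ = |c| * |g (φ^[n] b)| := abs_mul _ _
        _ ≤ (3/2) * M := by
            apply mul_le_mul hcabs.le (hM n) (abs_nonneg _) (by norm_num)
    have := abs_lt.mp h2
    linarith

lemma const_of_cover (h : Approx g φ) {x₀ : ℝ} (hfix : φ x₀ = x₀) {p : ℝ}
    (K : Set ℝ) (hK : IsCompact K) (hx₀K : x₀ ∈ K)
    (hcov : ∀ n : ℕ, ∃ x ∈ K, φ^[n] x = p) : g p = g x₀ := by
  have hfixn : ∀ n : ℕ, φ^[n] x₀ = x₀ := fun n => Function.iterate_fixed hfix n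
  have key : ∀ ε : ℝ, 0 < ε → ∃ c : ℝ, |c * g x₀ - 1| < ε ∧ |c * g p - 1| < ε := by
    intro ε hε
    obtain ⟨c, n, hc⟩ := h 1 K hK ε hε
    refine ⟨c, ?_, ?_⟩
    · have := hc x₀ hx₀K
      rwa [hfixn n, ContinuousMap.one_apply] at this
    · obtain ⟨x, hxK, hxp⟩ := hcov n
      have := hc x hxK
      rwa [hxp, ContinuousMap.one_apply] at this
  have hG : g x₀ ≠ 0 := by
    obtain ⟨c, h1, _⟩ := key (1/2) (by norm_num)
    intro h0
    rw [h0] at h1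
    norm_num at h1
  have hA : 0 < |g x₀| := abs_pos.mpr hG
  by_contra hne
  set d : ℝ := |g p - g x₀| with hd
  have hd0 : 0 < d := abs_pos.mpr (sub_ne_zero.mpr hne)
  set ε : ℝ := min (1/2) (d / (4 * |g x₀| + 1)) with hεdef
  have hε : 0 < ε := lt_min (by norm_num) (by positivity)
  have hε1 : ε ≤ 1/2 := min_le_left _ _
  have hε2 : ε ≤ d / (4 * |g x₀| + 1) := min_le_right _ _
  obtain ⟨c, h1, h2⟩ := key ε hε
  have hCD : |c| * d < 2 * ε := by
    rw [hd, ← abs_mul]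
    have : c * (g p - g x₀) = (c * g p - 1) - (c * g x₀ - 1) := by ring
    rw [this]
    calc |(c * g p - 1) - (c * g x₀ - 1)| ≤ |c * g p - 1| + |c * g x₀ - 1| := abs_sub _ _
      _ < ε + ε := add_lt_add h2 h1
      _ = 2 * ε := by ring
  have hCA : 1 - ε < |c| * |g x₀| := by
    rw [← abs_mul]
    have := abs_lt.mp h1
    calc 1 - ε < c * g x₀ := by linarith
      _ ≤ |c * g x₀| := le_abs_self _
  have hεd : ε * (4 * |g x₀| + 1) ≤ d := by
    exact (le_div_iff₀ (by positivity : (0:ℝ) < 4 * |g x₀| + 1)).mp hε2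
  -- Derive contradiction
  have hCpos : 0 ≤ |c| := abs_nonneg _
  nlinarith [mul_lt_mul_of_pos_right hCD (by positivity : (0:ℝ) < 4 * |g x₀| + 1),
    mul_le_mul_of_nonneg_left hεd hCpos, hCA, hA, hd0, hCpos]

lemma not_const (h : Approx g φ) (hconst : ∀ p : ℝ, g p = g 0) : False := by
  obtain ⟨c, n, h1, h2⟩ := approx_two h (zero_ne_one' ℝ) 0 1 (by norm_num : (0:ℝ) < 1/2)
  rw [hconst (φ^[n] 0)] at h1
  rw [hconst (φ^[n] 1)] at h2
  have a1 := abs_lt.mp h1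
  have a2 := abs_lt.mp h2
  linarith

lemma no_fixed_increasing (h : Approx g φ) (hφc : Continuous φ) (hmono : StrictMono φ)
    {x₀ : ℝ} (hfix : φ x₀ = x₀) : False := by
  by_cases hb : ∃ b, x₀ < b ∧ φ b ≤ b
  · obtain ⟨b, hb1, hb2⟩ := hb
    have horb : ∀ n : ℕ, φ^[n] b ∈ Icc x₀ b := by
      intro n
      induction n with
      | zero => simp only [Function.iterate_zero_apply]; exact ⟨hb1.le, le_rfl⟩
      | succ n ih =>
        rw [Function.iterate_succ_apply']
        refine ⟨?_, ?_⟩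
        · calc x₀ = φ x₀ := hfix.symm
            _ ≤ φ (φ^[n] b) := hmono.monotone ih.1
        · exact le_trans (hmono.monotone ih.2) hb2
    obtain ⟨M, hM⟩ := (isCompact_Icc (a := x₀) (b := b)).exists_bound_of_continuousOn
      g.continuous.continuousOn
    exact no_bounded_orbit h hfix hb1.ne'
      (fun n => by simpa [Real.norm_eq_abs] using hM _ (horb n))
  by_cases ha : ∃ a, a < x₀ ∧ a ≤ φ a
  · obtain ⟨a, ha1, ha2⟩ := ha
    have horb : ∀ n : ℕ, φ^[n] a ∈ Icc a x₀ := by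
      intro n
      induction n with
      | zero => simp only [Function.iterate_zero_apply]; exact ⟨le_rfl, ha1.le⟩
      | succ n ih =>
        rw [Function.iterate_succ_apply']
        refine ⟨le_trans ha2 (hmono.monotone ih.1), ?_⟩
        calc φ (φ^[n] a) ≤ φ x₀ := hmono.monotone ih.2
          _ = x₀ := hfix
    obtain ⟨M, hM⟩ := (isCompact_Icc (a := a) (b := x₀)).exists_bound_of_continuousOn
      g.continuous.continuousOn
    exact no_bounded_orbit h hfix ha1.ne
      (fun n => by simpa [Real.norm_eq_abs] using hM _ (horb n))
  push_neg at hb ha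
  have hconst : ∀ p : ℝ, g p = g x₀ := by
    intro p
    set A : ℝ := min (x₀ - 1) p with hAdef
    set B : ℝ := max (x₀ + 1) p with hBdef
    have hA : A < x₀ := lt_of_le_of_lt (min_le_left _ _) (by linarith)
    have hB : x₀ < B := lt_of_lt_of_le (by linarith) (le_max_left _ _)
    have hAp : A ≤ p := min_le_right _ _
    have hpB : p ≤ B := le_max_right _ _
    have hAB : A ≤ B := le_trans hAp hpB
    have inv : ∀ n : ℕ, φ^[n] A ≤ A ∧ B ≤ φ^[n] B := by
      intro n
      induction n with
      | zero => simp only [Function.iterate_zero_apply]; exact ⟨le_rfl, le_rfl⟩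
      | succ n ih =>
        rw [Function.iterate_succ_apply', Function.iterate_succ_apply']
        exact ⟨le_trans (hmono.monotone ih.1) (ha A hA).le,
          le_trans (hb B hB).le (hmono.monotone ih.2)⟩
    have hcov : ∀ n : ℕ, ∃ x ∈ Icc A B, φ^[n] x = p := by
      intro n
      have hmem : p ∈ Icc (φ^[n] A) (φ^[n] B) :=
        ⟨le_trans (inv n).1 hAp, le_trans hpB (inv n).2⟩
      obtain ⟨x, hx, hxp⟩ := intermediate_value_Icc hAB (hφc.iterate n).continuousOn hmem
      exact ⟨x, hx, hxp⟩
    exact const_of_cover h hfix (Icc A B) isCompact_Icc ⟨hA.le, hB.le⟩ hcov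
  exact not_const h (fun p => (hconst p).trans (hconst 0).symm)

lemma no_anti (h : Approx g φ) (hφc : Continuous φ) (hanti : StrictAnti φ) : False := by
  -- φ has a fixed point by the IVT
  obtain ⟨x₀, hx₀mem, hfix'⟩ :
      ∃ x ∈ Icc (-|φ 0| - 1) (|φ 0| + 1), φ x - x = 0 := by
    have hAB : (-|φ 0| - 1 : ℝ) ≤ |φ 0| + 1 := by
      have := abs_nonneg (φ 0); linarith
    have hcont : ContinuousOn (fun x => φ x - x) (Icc (-|φ 0| - 1) (|φ 0| + 1)) :=
      (hφc.sub continuous_id).continuousOn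
    have hFB : φ (|φ 0| + 1) - (|φ 0| + 1) ≤ 0 := by
      have h1 : φ (|φ 0| + 1) ≤ φ 0 := (hanti.antitone (by positivity))
      have h2 : φ 0 ≤ |φ 0| := le_abs_self _
      linarith
    have hFA : 0 ≤ φ (-|φ 0| - 1) - (-|φ 0| - 1) := by
      have h1 : φ 0 ≤ φ (-|φ 0| - 1) := hanti.antitone (by linarith [abs_nonneg (φ 0)])
      have h2 : -|φ 0| ≤ φ 0 := neg_abs_le _
      linarith
    have := intermediate_value_Icc' hAB hcont (⟨hFB, hFA⟩ : (0:ℝ) ∈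
      Icc (φ (|φ 0| + 1) - (|φ 0| + 1)) (φ (-|φ 0| - 1) - (-|φ 0| - 1)))
    obtain ⟨x, hx, hxval⟩ := this
    exact ⟨x, hx, hxval⟩
  have hfix : φ x₀ = x₀ := by linarith [sub_eq_zero.mp hfix']
  by_cases hcase1 : ∃ b, x₀ < b ∧ φ (φ b) ≤ b
  · obtain ⟨b, hb1, hb2⟩ := hcase1
    have hφb : φ b < x₀ := by
      calc φ b < φ x₀ := hanti hb1
        _ = x₀ := hfix
    have horb : ∀ n : ℕ, φ^[n] b ∈ Icc (φ b) b := by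
      intro n
      induction n with
      | zero => simp only [Function.iterate_zero_apply]; exact ⟨by linarith, le_rfl⟩
      | succ n ih =>
        rw [Function.iterate_succ_apply']
        exact ⟨hanti.antitone ih.2, le_trans (hanti.antitone ih.1) hb2⟩
    obtain ⟨M, hM⟩ := (isCompact_Icc (a := φ b) (b := b)).exists_bound_of_continuousOn
      g.continuous.continuousOn
    exact no_bounded_orbit h hfix hb1.ne'
      (fun n => by simpa [Real.norm_eq_abs] using hM _ (horb n))
  by_cases hcase2 : ∃ a, a < x₀ ∧ a ≤ φ (φ a)
  · obtain ⟨a, ha1, ha2⟩ := hcase2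
    have hφa : x₀ < φ a := by
      calc x₀ = φ x₀ := hfix.symm
        _ < φ a := hanti ha1
    have horb : ∀ n : ℕ, φ^[n] a ∈ Icc a (φ a) := by
      intro n
      induction n with
      | zero => simp only [Function.iterate_zero_apply]; exact ⟨le_rfl, by linarith⟩
      | succ n ih =>
        rw [Function.iterate_succ_apply']
        exact ⟨le_trans ha2 (hanti.antitone ih.2), hanti.antitone ih.1⟩
    obtain ⟨M, hM⟩ := (isCompact_Icc (a := a) (b := φ a)).exists_bound_of_continuousOn
      g.continuous.continuousOn
    exact no_bounded_orbit h hfix ha1.ne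
      (fun n => by simpa [Real.norm_eq_abs] using hM _ (horb n))
  push_neg at hcase1 hcase2
  -- φ is unbounded below and above
  have hbelow : ∀ p : ℝ, ∃ x, φ x ≤ p := by
    intro p
    by_contra hcon
    push_neg at hcon
    set b : ℝ := max (x₀ + 1) (φ p) with hbdef
    have hb : x₀ < b := lt_of_lt_of_le (by linarith) (le_max_left _ _)
    have h1 : p ≤ φ b := (hcon b).le
    have h2 : φ (φ b) ≤ φ p := hanti.antitone h1
    have := hcase1 b hb
    have h3 : φ p ≤ b := le_max_right _ _
    linarith
  have habove : ∀ p : ℝ, ∃ x, p ≤ φ x := by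
    intro p
    by_contra hcon
    push_neg at hcon
    set a : ℝ := min (x₀ - 1) (φ p) with hadef
    have ha : a < x₀ := lt_of_le_of_lt (min_le_left _ _) (by linarith)
    have h1 : φ a < p := hcon a
    have h2 : φ p < φ (φ a) := hanti h1
    have := hcase2 a ha
    have h3 : a ≤ φ p := min_le_right _ _
    linarith
  have hconst : ∀ p : ℝ, g p = g x₀ := by
    intro p
    obtain ⟨x₁, hx₁⟩ := hbelow p
    obtain ⟨x₂, hx₂⟩ := habove p
    set A : ℝ := min x₂ (min (x₀ - 1) p) with hAdef
    set B : ℝ := max x₁ (max (x₀ + 1) p) with hBdef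
    have hA : A < x₀ :=
      lt_of_le_of_lt (le_trans (min_le_right _ _) (min_le_left _ _)) (by linarith)
    have hB : x₀ < B :=
      lt_of_lt_of_le (by linarith) (le_trans (le_max_left _ _) (le_max_right _ _))
    have hAp : A ≤ p := le_trans (min_le_right _ _) (min_le_right _ _)
    have hpB : p ≤ B := le_trans (le_max_right _ _) (le_max_right _ _)
    have hAB : A ≤ B := le_trans hAp hpB
    have hφA : p ≤ φ A := le_trans hx₂ (hanti.antitone (min_le_left _ _))
    have hφB : φ B ≤ p := le_trans (hanti.antitone (le_max_left _ _)) hx₁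
    have inv : ∀ n : ℕ, (φ^[n] A ≤ A ∧ B ≤ φ^[n] B) ∨
        (φ^[n] B ≤ φ B ∧ φ A ≤ φ^[n] A) := by
      intro n
      induction n with
      | zero => simp only [Function.iterate_zero_apply]; exact Or.inl ⟨le_rfl, le_rfl⟩
      | succ n ih =>
        rw [Function.iterate_succ_apply', Function.iterate_succ_apply']
        rcases ih with ⟨h1, h2⟩ | ⟨h1, h2⟩
        · exact Or.inr ⟨hanti.antitone h2, hanti.antitone h1⟩
        · refine Or.inl ⟨?_, ?_⟩
          · exact le_trans (hanti.antitone h2) (hcase2 A hA).le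
          · exact le_trans (hcase1 B hB).le (hanti.antitone h1)
    have hcov : ∀ n : ℕ, ∃ x ∈ Icc A B, φ^[n] x = p := by
      intro n
      have hmem : p ∈ uIcc (φ^[n] A) (φ^[n] B) := by
        rcases inv n with ⟨h1, h2⟩ | ⟨h1, h2⟩
        · exact mem_uIcc.mpr (Or.inl ⟨le_trans h1 hAp, le_trans hpB h2⟩)
        · exact mem_uIcc.mpr (Or.inr ⟨le_trans h1 hφB, le_trans hφA h2⟩)
      have hsub := intermediate_value_uIcc
        (f := φ^[n]) (a := A) (b := B) (hφc.iterate n).continuousOn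
      obtain ⟨x, hx, hxp⟩ := hsub hmem
      rw [uIcc_of_le hAB] at hx
      exact ⟨x, hx, hxp⟩
    exact const_of_cover h hfix (Icc A B) isCompact_Icc ⟨hA.le, hB.le⟩ hcov
  exact not_const h (fun p => (hconst p).trans (hconst 0).symm)

end SupercyclicAux

/-- If `X` is a separable locally convex Hausdorff space densely and continuously
included in `C(ℝ)` (with the evaluations linearly independent), and the composition
operator `C_φ` is supercyclic on `X`, then `φ` is strictly increasing and has no
fixed point. -/
theorem supercyclic_comp_implies_increasing_no_fixed_point
    (X : Type*) [AddCommGroup X] [Module ℝ X] [TopologicalSpace X]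
    [IsTopologicalAddGroup X] [ContinuousSMul ℝ X] [LocallyConvexSpace ℝ X]
    [T2Space X] [TopologicalSpace.SeparableSpace X]
    (J : X →L[ℝ] C(ℝ, ℝ)) (hJinj : Function.Injective J) (hJdense : DenseRange J)
    (hind : LinearIndependent ℝ (fun a : ℝ => (fun f : X => (J f) a : X → ℝ)))
    (φ : ℝ → ℝ) (hφ : Continuous φ)
    (Cφ : X →L[ℝ] X) (hCφ : ∀ (f : X) (x : ℝ), (J (Cφ f)) x = (J f) (φ x))
    (hsc : ∃ f : X, Dense {y : X | ∃ c : ℝ, ∃ n : ℕ, y = c • ((Cφ ^ n) f)}) :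
    StrictMono φ ∧ ∀ x : ℝ, φ x ≠ x := by
  obtain ⟨f, hf⟩ := hsc
  set g : C(ℝ, ℝ) := J f with hg
  have hiterJ : ∀ (n : ℕ) (y : X) (x : ℝ), (J ((Cφ ^ n) y)) x = (J y) (φ^[n] x) := by
    intro n
    induction n with
    | zero => intro y x; simp
    | succ n ih =>
      intro y x
      have hps : (Cφ ^ (n + 1)) y = (Cφ ^ n) (Cφ y) := by
        rw [pow_succ]; rfl
      rw [hps, ih (Cφ y) x, hCφ y, Function.iterate_succ_apply']
  have hApprox : SupercyclicAux.Approx g φ := by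
    intro t K hK ε hε
    have hT : Dense (J '' {y : X | ∃ c : ℝ, ∃ n : ℕ, y = c • ((Cφ ^ n) f)}) :=
      hJdense.dense_image J.continuous hf
    have hU : {h : C(ℝ, ℝ) | ∀ x ∈ K, |h x - t x| < ε} ∈ 𝓝 t := by
      have hV : {fg : C(ℝ, ℝ) × C(ℝ, ℝ) | ∀ x ∈ K, dist (fg.1 x) (fg.2 x) < ε} ∈
          𝓤 C(ℝ, ℝ) := by
        rw [ContinuousMap.mem_compactConvergence_entourage_iff]
        exact ⟨K, {p : ℝ × ℝ | dist p.1 p.2 < ε}, hK, Metric.dist_mem_uniformity hε,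
          fun fg hfg => hfg⟩
      refine Filter.mem_of_superset (UniformSpace.ball_mem_nhds t hV) ?_
      intro h hh x hx
      have := hh x hx
      rw [Real.dist_eq] at this
      rw [abs_sub_comm]
      exact this
    obtain ⟨h, hhU, hhT⟩ := mem_closure_iff_nhds.mp (hT t) _ hU
    obtain ⟨y, hy, rfl⟩ := hhT
    obtain ⟨c, n, rfl⟩ := hy
    refine ⟨c, n, fun x hx => ?_⟩
    have h1 := hhU x hx
    have h2 : (J (c • (Cφ ^ n) f)) x = c * g (φ^[n] x) := by
      rw [map_smul]
      rw [ContinuousMap.smul_apply, hiterJ n f x]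
      simp [hiterJ n f x, hg]
    rwa [h2] at h1
  have hinj := SupercyclicAux.injective_of_approx hApprox
  rcases hφ.strictMono_of_inj hinj with hmono | hanti
  · exact ⟨hmono, fun x hx =>
      SupercyclicAux.no_fixed_increasing hApprox hφ hmono hx⟩
  · exact absurd (SupercyclicAux.no_anti hApprox hφ hanti) (fun x => x)
end

section
/- Let X be a separable locally convex Hausdorff topological vector space over ℝ and let J: X → (ℝ → ℝ) be an injective linear map such that every Jf is continuously differentiable and J is continuous into C¹(ℝ), i.e., for every compact K ⊆ ℝ the seminorm f ↦ sup_{x∈K} max(|(Jf)(x)|, |(Jf)'(x)|) is continuous on X. Assume that for every a ∈ ℝ the functionals δ_a: f ↦ (Jf)(a) and δ_a^{(1)}: f ↦ (Jf)'(a) are linearly independent elements of the topological dual of X. Let φ: ℝ → ℝ be a C¹ function and suppose there is a continuous linear operator C_φ: X → X with J(C_φ f) = (Jf) ∘ φ for every f ∈ X. If φ(a) = a for some a ∈ ℝ, or φ'(a) = 0 for some a ∈ ℝ, then C_φ is not weakly supercyclic. -/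
open Filter Topology

lemma sup_singleton' (g : ℝ → ℝ) (a : ℝ) (h0 : 0 ≤ g a) :
    (⨆ x ∈ ({a} : Set ℝ), g x) = g a := by
  apply le_antisymm
  · apply Real.iSup_le _ h0
    intro x
    apply Real.iSup_le _ h0
    rintro rfl
    rfl
  · have hb : BddAbove (Set.range fun x => ⨆ (_ : x ∈ ({a} : Set ℝ)), g x) := by
      refine ⟨g a, ?_⟩
      rintro y ⟨x, rfl⟩
      apply Real.iSup_le _ h0
      rintro rfl
      rfl
    have h : g a = ⨆ (_ : a ∈ ({a} : Set ℝ)), g a := by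
      haveI : Nonempty (a ∈ ({a} : Set ℝ)) := ⟨rfl⟩
      rw [ciSup_const]
    rw [h]
    exact le_ciSup hb a

lemma cont_of_bound' {X : Type*} [AddCommGroup X] [Module ℝ X] [TopologicalSpace X]
    [IsTopologicalAddGroup X]
    (L : X →ₗ[ℝ] ℝ) (N : X → ℝ) (hN : Continuous N) (hN0 : N 0 = 0)
    (hb : ∀ f, |L f| ≤ N f) : Continuous L := by
  apply continuous_of_continuousAt_zero L.toAddMonoidHom
  rw [ContinuousAt]
  simp only [LinearMap.toAddMonoidHom_coe, map_zero]
  rw [tendsto_zero_iff_norm_tendsto_zero]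
  have hNt : Tendsto N (nhds 0) (nhds 0) := by
    have := hN.continuousAt (x := (0 : X))
    rw [ContinuousAt, hN0] at this
    exact this
  apply squeeze_zero (fun t => norm_nonneg _) _ hNt
  intro t
  simpa using hb t

lemma dep_of_ker' {X : Type*} [AddCommGroup X] [Module ℝ X]
    (L₁ L₂ : X →ₗ[ℝ] ℝ)
    (hpair : ∀ s t : ℝ, (∀ g, s * L₁ g + t * L₂ g = 0) → s = 0 ∧ t = 0)
    (hker : ∀ g, L₁ g = 0 → L₂ g = 0) : False := by
  by_cases hex : ∃ g₀, L₁ g₀ ≠ 0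
  · obtain ⟨g₀, hg₀⟩ := hex
    set c := L₂ g₀ / L₁ g₀ with hc
    have h1 : ∀ g, c * L₁ g + (-1) * L₂ g = 0 := by
      intro g
      have h := hker (g - (L₁ g / L₁ g₀) • g₀) (by
        simp [map_sub, map_smul, smul_eq_mul]
        field_simp
        ring)
      simp only [map_sub, map_smul, smul_eq_mul] at h
      have h2 : L₂ g = (L₁ g / L₁ g₀) * L₂ g₀ := by linarith
      rw [h2, hc]
      field_simp
      ring
    have := (hpair c (-1) h1).2
    norm_num at this
  · push_neg at hex
    have h1 : ∀ g, (1:ℝ) * L₁ g + 0 * L₂ g = 0 := by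
      intro g; simp [hex g]
    have := (hpair 1 0 h1).1
    norm_num at this

/-- If `X` is a separable locally convex Hausdorff space continuously included in
`C¹(ℝ)` (with `δ_a, δ_a'` linearly independent for each `a`), and the symbol `φ`
has a fixed point or a vanishing derivative, then the composition operator `C_φ`
is not weakly supercyclic on `X`. -/
theorem comp_not_weakly_supercyclic_of_fixed_point_or_critical_point
    (X : Type*) [AddCommGroup X] [Module ℝ X] [TopologicalSpace X]
    [IsTopologicalAddGroup X] [ContinuousSMul ℝ X] [LocallyConvexSpace ℝ X]
    [T2Space X] [TopologicalSpace.SeparableSpace X]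
    (J : X →ₗ[ℝ] (ℝ → ℝ)) (hJinj : Function.Injective J)
    (hJC1 : ∀ f : X, ContDiff ℝ (1 : ℕ∞) (J f))
    (hJcont : ∀ K : Set ℝ, IsCompact K →
      Continuous (fun f : X => ⨆ x ∈ K, max |J f x| |deriv (J f) x|))
    (hind : ∀ a : ℝ, LinearIndependent ℝ
      ![(fun f : X => J f a), (fun f : X => deriv (J f) a)])
    (φ : ℝ → ℝ) (hφ : ContDiff ℝ (1 : ℕ∞) φ)
    (Cφ : X →L[ℝ] X) (hCφ : ∀ (f : X) (x : ℝ), J (Cφ f) x = J f (φ x))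
    (hfix : (∃ a : ℝ, φ a = a) ∨ (∃ a : ℝ, deriv φ a = 0)) :
    ¬ ∃ f : X, Dense {y : WeakSpace ℝ X | ∃ c : ℝ, ∃ n : ℕ,
        y = c • ((Cφ ^ n) f)} := by
  rintro ⟨f, hdense⟩
  -- differentiability facts
  have hd : ∀ (g : X) (x : ℝ), DifferentiableAt ℝ (J g) x :=
    fun g x => ((hJC1 g).differentiable (by simp)).differentiableAt
  have hdφ : ∀ x : ℝ, DifferentiableAt ℝ φ x :=
    fun x => (hφ.differentiable (by simp)).differentiableAt
  -- J (Cφ g) = J g ∘ φ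
  have hcomp : ∀ g : X, J (Cφ g) = (J g) ∘ φ := fun g => funext fun x => hCφ g x
  have hderivCφ : ∀ (g : X) (x : ℝ),
      deriv (J (Cφ g)) x = deriv (J g) (φ x) * deriv φ x := by
    intro g x
    rw [hcomp g]
    exact deriv_comp x (hd g (φ x)) (hdφ x)
  -- pick the point a
  obtain ⟨a, ha⟩ : ∃ a : ℝ, φ a = a ∨ deriv φ a = 0 := by
    rcases hfix with ⟨a, h⟩ | ⟨a, h⟩
    · exact ⟨a, Or.inl h⟩
    · exact ⟨a, Or.inr h⟩
  -- the two functionals at a, as linear maps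
  set L₁ : X →ₗ[ℝ] ℝ :=
    { toFun := fun g => J g a
      map_add' := fun x y => by show J (x + y) a = J x a + J y a; rw [map_add]; rfl
      map_smul' := fun c x => by
        show J (c • x) a = (RingHom.id ℝ) c • (J x a)
        rw [map_smul]; rfl } with hL₁def
  set L₂ : X →ₗ[ℝ] ℝ :=
    { toFun := fun g => deriv (J g) a
      map_add' := fun x y => by
        show deriv (J (x + y)) a = deriv (J x) a + deriv (J y) a
        have h : J (x + y) = fun t => J x t + J y t := by rw [map_add]; rfl
        rw [h, deriv_fun_add (hd x a) (hd y a)]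
      map_smul' := fun c x => by
        show deriv (J (c • x)) a = (RingHom.id ℝ) c • deriv (J x) a
        have h : J (c • x) = fun t => c * J x t := by rw [map_smul]; rfl
        rw [h, deriv_const_mul c (hd x a)]
        rfl } with hL₂def
  have hL₁ : ∀ g : X, L₁ g = J g a := fun g => rfl
  have hL₂ : ∀ g : X, L₂ g = deriv (J g) a := fun g => rfl
  -- continuity of the functionals
  have hNcont : Continuous fun g : X => max |J g a| |deriv (J g) a| := by
    have h := hJcont {a} isCompact_singleton
    have heq : (fun g : X => ⨆ x ∈ ({a} : Set ℝ), max |J g x| |deriv (J g) x|)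
        = fun g : X => max |J g a| |deriv (J g) a| := by
      funext g
      exact sup_singleton' _ a (le_trans (abs_nonneg _) (le_max_left _ _))
    rwa [heq] at h
  have hN0 : max |J (0:X) a| |deriv (J (0:X)) a| = 0 := by
    have h0 : J (0:X) = fun _ => (0:ℝ) := by rw [map_zero]; rfl
    rw [h0]
    simp
  have hc₁ : Continuous L₁ := by
    apply cont_of_bound' L₁ _ hNcont hN0
    intro g
    exact le_max_left _ _
  have hc₂ : Continuous L₂ := by
    apply cont_of_bound' L₂ _ hNcont hN0
    intro g
    exact le_max_right _ _
  set L₁c : X →L[ℝ] ℝ := ⟨L₁, hc₁⟩ with hL₁c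
  set L₂c : X →L[ℝ] ℝ := ⟨L₂, hc₂⟩ with hL₂c
  -- continuous map into ℝ² from the weak space
  set T : WeakSpace ℝ X → ℝ × ℝ := fun g => (L₁c g, L₂c g) with hTdef
  have hT1 : Continuous fun x : WeakSpace ℝ X => L₁c x := WeakBilin.eval_continuous _ L₁c
  have hT2 : Continuous fun x : WeakSpace ℝ X => L₂c x := WeakBilin.eval_continuous _ L₂c
  have hT : Continuous T := hT1.prodMk hT2
  -- transfer of density
  have transfer : ∀ C : Set (ℝ × ℝ), IsClosed C →
      (∀ (c : ℝ) (n : ℕ), ((c * J ((Cφ ^ n) f) a, c * deriv (J ((Cφ ^ n) f)) a) : ℝ × ℝ) ∈ C) →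
      ∀ g : X, ((J g a, deriv (J g) a) : ℝ × ℝ) ∈ C := by
    intro C hC hmem g
    have hg : (g : WeakSpace ℝ X) ∈ closure {y : WeakSpace ℝ X | ∃ c : ℝ, ∃ n : ℕ,
        y = c • ((Cφ ^ n) f)} := by
      rw [hdense.closure_eq]; trivial
    have hmap : Set.MapsTo T {y : WeakSpace ℝ X | ∃ c : ℝ, ∃ n : ℕ,
        y = c • ((Cφ ^ n) f)} C := by
      rintro p ⟨c, n, rfl⟩
      have : T (c • ((Cφ ^ n) f) : WeakSpace ℝ X)
          = (c * J ((Cφ ^ n) f) a, c * deriv (J ((Cφ ^ n) f)) a) := by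
        show (L₁c (c • ((Cφ ^ n) f)), L₂c (c • ((Cφ ^ n) f))) = _
        rw [map_smul, map_smul, smul_eq_mul, smul_eq_mul]
        rfl
      rw [this]
      exact hmem c n
    have h := map_mem_closure hT hg hmap
    rwa [hC.closure_eq] at h
  -- linear independence, unpacked
  have hpa : ∀ s t : ℝ, (∀ g : X, s * J g a + t * deriv (J g) a = 0) → s = 0 ∧ t = 0 := by
    intro s t h
    refine LinearIndependent.pair_iff.1 (hind a) s t ?_
    funext g
    simpa using h g
  have hpa' : ∀ s t : ℝ, (∀ g : X, s * deriv (J g) a + t * J g a = 0) → s = 0 ∧ t = 0 := by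
    intro s t h
    have h' : ∀ g : X, t * J g a + s * deriv (J g) a = 0 := fun g => by linarith [h g]
    exact ⟨(hpa t s h').2, (hpa t s h').1⟩
  -- abbreviations
  set u := J f a with hu_def
  set v := deriv (J f) a with hv_def
  set lam := deriv φ a with hlam_def
  rcases ha with ha | ha
  · -- fixed point case
    have horb1 : ∀ (n : ℕ) (g : X), J ((Cφ ^ n) g) a = J g a := by
      intro n
      induction n with
      | zero => intro g; simp
      | succ n ih =>
        intro g
        rw [pow_succ, ContinuousLinearMap.mul_apply, ih (Cφ g), hCφ g a, ha]
    have horb2 : ∀ (n : ℕ) (g : X), deriv (J ((Cφ ^ n) g)) a = lam ^ n * deriv (J g) a := by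
      intro n
      induction n with
      | zero => intro g; simp
      | succ n ih =>
        intro g
        rw [pow_succ, ContinuousLinearMap.mul_apply, ih (Cφ g), hderivCφ g a, ha]
        rw [← hlam_def]
        ring
    by_cases hu : u = 0
    · -- orbit lies on the axis x = 0
      have hmem : ∀ (c : ℝ) (n : ℕ),
          ((c * J ((Cφ ^ n) f) a, c * deriv (J ((Cφ ^ n) f)) a) : ℝ × ℝ)
            ∈ {p : ℝ × ℝ | |p.1| ≤ 0 * |p.2|} := by
        intro c n
        simp only [Set.mem_setOf_eq, horb1 n f, ← hu_def, hu, mul_zero, abs_zero, zero_mul]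
        exact le_refl 0
      have hall := transfer _ (isClosed_le (continuous_fst.abs)
        (continuous_const.mul continuous_snd.abs)) hmem
      refine dep_of_ker' L₂ L₁ hpa' ?_
      intro g _
      have := hall g
      simp only [Set.mem_setOf_eq, Pi.mul_apply, zero_mul] at this
      exact abs_eq_zero.1 (le_antisymm this (abs_nonneg _))
    by_cases hlam1 : |lam| ≤ 1
    · -- cone |y| ≤ (|v|/|u|) |x|
      have hmem : ∀ (c : ℝ) (n : ℕ),
          ((c * J ((Cφ ^ n) f) a, c * deriv (J ((Cφ ^ n) f)) a) : ℝ × ℝ)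
            ∈ {p : ℝ × ℝ | |p.2| ≤ (|v| / |u|) * |p.1|} := by
        intro c n
        simp only [Set.mem_setOf_eq, horb1 n f, horb2 n f, ← hu_def, ← hv_def]
        rw [abs_mul, abs_mul, abs_mul, abs_pow]
        have h1 : |lam| ^ n ≤ 1 := pow_le_one₀ (abs_nonneg _) hlam1
        have h2 : (|v| / |u|) * (|c| * |u|) = |c| * |v| := by
          field_simp
        rw [h2]
        calc |c| * (|lam| ^ n * |v|) ≤ |c| * (1 * |v|) := by
              apply mul_le_mul_of_nonneg_left _ (abs_nonneg c)
              apply mul_le_mul_of_nonneg_right h1 (abs_nonneg _)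
          _ = |c| * |v| := by ring
      have hall := transfer _ (isClosed_le (continuous_snd.abs)
        (continuous_const.mul continuous_fst.abs)) hmem
      refine dep_of_ker' L₁ L₂ hpa ?_
      intro g hg
      have h := hall g
      simp only [Set.mem_setOf_eq] at h
      rw [show J g a = L₁ g from rfl, hg] at h
      simp only [Pi.mul_apply, abs_zero, mul_zero] at h
      exact abs_eq_zero.1 (le_antisymm h (abs_nonneg _))
    · push_neg at hlam1
      by_cases hv : v = 0
      · -- orbit lies on the axis y = 0
        have hmem : ∀ (c : ℝ) (n : ℕ),
            ((c * J ((Cφ ^ n) f) a, c * deriv (J ((Cφ ^ n) f)) a) : ℝ × ℝ)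
              ∈ {p : ℝ × ℝ | |p.2| ≤ 0 * |p.1|} := by
          intro c n
          simp only [Set.mem_setOf_eq, horb2 n f, ← hv_def, hv, mul_zero, abs_zero, zero_mul]
          exact le_refl 0
        have hall := transfer _ (isClosed_le (continuous_snd.abs)
          (continuous_const.mul continuous_fst.abs)) hmem
        refine dep_of_ker' L₁ L₂ hpa ?_
        intro g _
        have := hall g
        simp only [Set.mem_setOf_eq, Pi.mul_apply, zero_mul] at this
        exact abs_eq_zero.1 (le_antisymm this (abs_nonneg _))
      · -- cone |x| ≤ (|u|/|v|) |y|
        have hmem : ∀ (c : ℝ) (n : ℕ),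
            ((c * J ((Cφ ^ n) f) a, c * deriv (J ((Cφ ^ n) f)) a) : ℝ × ℝ)
              ∈ {p : ℝ × ℝ | |p.1| ≤ (|u| / |v|) * |p.2|} := by
          intro c n
          simp only [Set.mem_setOf_eq, horb1 n f, horb2 n f, ← hu_def, ← hv_def]
          rw [abs_mul, abs_mul, abs_mul, abs_pow]
          have h1 : (1:ℝ) ≤ |lam| ^ n := one_le_pow₀ hlam1.le
          have h2 : (|u| / |v|) * (|c| * (|lam| ^ n * |v|)) = |c| * |u| * |lam| ^ n := by
            field_simp
          rw [h2]
          calc |c| * |u| = |c| * |u| * 1 := by ring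
            _ ≤ |c| * |u| * |lam| ^ n := by
                apply mul_le_mul_of_nonneg_left h1 (by positivity)
        have hall := transfer _ (isClosed_le (continuous_fst.abs)
          (continuous_const.mul continuous_snd.abs)) hmem
        refine dep_of_ker' L₂ L₁ hpa' ?_
        intro g hg
        have h := hall g
        simp only [Set.mem_setOf_eq] at h
        rw [show deriv (J g) a = L₂ g from rfl, hg] at h
        simp only [Pi.mul_apply, abs_zero, mul_zero] at h
        exact abs_eq_zero.1 (le_antisymm h (abs_nonneg _))
  · -- critical point case: deriv φ a = 0
    have horb2 : ∀ m : ℕ, deriv (J ((Cφ ^ (m + 1)) f)) a = 0 := by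
      intro m
      rw [pow_succ', ContinuousLinearMap.mul_apply, hderivCφ, ← hlam_def, ha, mul_zero]
    by_cases hu : u = 0
    · -- orbit lies in the union of the axes
      have hmem : ∀ (c : ℝ) (n : ℕ),
          ((c * J ((Cφ ^ n) f) a, c * deriv (J ((Cφ ^ n) f)) a) : ℝ × ℝ)
            ∈ {p : ℝ × ℝ | p.1 * p.2 = 0} := by
        intro c n
        match n with
        | 0 =>
          simp only [Set.mem_setOf_eq, pow_zero, ContinuousLinearMap.one_apply, ← hu_def, hu]
          ring
        | m + 1 =>
          simp only [Set.mem_setOf_eq, horb2 m, mul_zero]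
      have hall := transfer _ (isClosed_eq (continuous_fst.mul continuous_snd)
        continuous_const) hmem
      by_cases h1 : ∀ g : X, J g a = 0
      · exact absurd (hpa 1 0 (fun g => by simp [h1 g])).1 one_ne_zero
      push_neg at h1
      obtain ⟨g₀, hg₀⟩ := h1
      by_cases h2 : ∀ g : X, deriv (J g) a = 0
      · exact absurd (hpa 0 1 (fun g => by simp [h2 g])).2 one_ne_zero
      push_neg at h2
      obtain ⟨g₁, hg₁⟩ := h2
      have e0 : deriv (J g₀) a = 0 := by
        have := hall g₀
        simp only [Set.mem_setOf_eq] at this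
        rcases mul_eq_zero.1 this with h | h
        · exact absurd h hg₀
        · exact h
      have e1 : J g₁ a = 0 := by
        have := hall g₁
        simp only [Set.mem_setOf_eq] at this
        rcases mul_eq_zero.1 this with h | h
        · exact h
        · exact absurd h hg₁
      have hadd1 : J (g₀ + g₁) a = J g₀ a := by
        rw [show J (g₀ + g₁) a = L₁ (g₀ + g₁) from rfl, map_add]
        simp only [hL₁, e1, add_zero]
      have hadd2 : deriv (J (g₀ + g₁)) a = deriv (J g₁) a := by
        rw [show deriv (J (g₀ + g₁)) a = L₂ (g₀ + g₁) from rfl, map_add]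
        simp only [hL₂, e0, zero_add]
      have := hall (g₀ + g₁)
      simp only [Set.mem_setOf_eq, hadd1, hadd2] at this
      rcases mul_eq_zero.1 this with h | h
      · exact hg₀ h
      · exact hg₁ h
    · -- cone |y| ≤ (|v|/|u|) |x|
      have hmem : ∀ (c : ℝ) (n : ℕ),
          ((c * J ((Cφ ^ n) f) a, c * deriv (J ((Cφ ^ n) f)) a) : ℝ × ℝ)
            ∈ {p : ℝ × ℝ | |p.2| ≤ (|v| / |u|) * |p.1|} := by
        intro c n
        match n with
        | 0 =>
          simp only [Set.mem_setOf_eq, pow_zero, ContinuousLinearMap.one_apply,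
            ← hu_def, ← hv_def]
          rw [abs_mul, abs_mul]
          have h2 : (|v| / |u|) * (|c| * |u|) = |c| * |v| := by
            field_simp
          rw [h2]
        | m + 1 =>
          simp only [Set.mem_setOf_eq, horb2 m, mul_zero, abs_zero]
          positivity
      have hall := transfer _ (isClosed_le (continuous_snd.abs)
        (continuous_const.mul continuous_fst.abs)) hmem
      refine dep_of_ker' L₁ L₂ hpa ?_
      intro g hg
      have h := hall g
      simp only [Set.mem_setOf_eq] at h
      rw [show J g a = L₁ g from rfl, hg] at h
      simp only [Pi.mul_apply, abs_zero, mul_zero] at h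
      exact abs_eq_zero.1 (le_antisymm h (abs_nonneg _))
end

section
/- Let X be a separable locally convex Hausdorff topological vector space over ℝ and let J: X → (ℝ → ℝ) be an injective linear map such that every Jf is continuously differentiable and J is continuous into C¹(ℝ), i.e., for every compact K ⊆ ℝ the seminorm f ↦ sup_{x∈K} max(|(Jf)(x)|, |(Jf)'(x)|) is continuous on X. Assume that for every a ∈ ℝ the functionals δ_a: f ↦ (Jf)(a) and δ_a^{(1)}: f ↦ (Jf)'(a) are linearly independent elements of the topological dual of X. Let φ: ℝ → ℝ be a C¹ function and suppose there is a continuous linear operator C_φ: X → X with J(C_φ f) = (Jf) ∘ φ for every f ∈ X. If C_φ is weakly supercyclic, then φ is strongly runaway and φ'(x) > 0 for every x ∈ ℝ. -/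
open Filter Topology
set_option linter.unusedSectionVars false
set_option maxHeartbeats 1000000

section Aux

variable {X : Type*} [AddCommGroup X] [Module ℝ X] [TopologicalSpace X]
  [IsTopologicalAddGroup X] [ContinuousSMul ℝ X]

/-- If all projective-orbit points are mapped by a pair of "independent" continuous
functionals outside a nonempty open subset of `ℝ²`, then the orbit is not weakly dense. -/
lemma orbit_not_dense' (u v : X →L[ℝ] ℝ) (T : ℕ → X)
    (hdet : ∃ z₁ z₂ : X, u z₁ * v z₂ - u z₂ * v z₁ ≠ 0)
    (V : Set (ℝ × ℝ)) (hV : IsOpen V) (w : ℝ × ℝ) (hw : w ∈ V)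
    (hS : ∀ (c : ℝ) (n : ℕ), ((c * u (T n), c * v (T n)) : ℝ × ℝ) ∉ V) :
    ¬ Dense {y : WeakSpace ℝ X | ∃ c : ℝ, ∃ n : ℕ, y = c • T n} := by
  intro hd
  obtain ⟨z₁, z₂, hD⟩ := hdet
  have hu : Continuous fun z : WeakSpace ℝ X => u z :=
    WeakBilin.eval_continuous ((topDualPairing ℝ X).flip) u
  have hv : Continuous fun z : WeakSpace ℝ X => v z :=
    WeakBilin.eval_continuous ((topDualPairing ℝ X).flip) v
  have hT : Continuous fun z : WeakSpace ℝ X => ((u z, v z) : ℝ × ℝ) := hu.prodMk hv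
  set d : ℝ := u z₁ * v z₂ - u z₂ * v z₁ with hdd
  set c₁ : ℝ := (w.1 * v z₂ - w.2 * u z₂) / d with hc₁
  set c₂ : ℝ := (w.2 * u z₁ - w.1 * v z₁) / d with hc₂
  set zs : X := c₁ • z₁ + c₂ • z₂ with hzs
  have hTz : ((u zs, v zs) : ℝ × ℝ) = w := by
    have h1 : u zs = c₁ * u z₁ + c₂ * u z₂ := by
      simp [hzs, map_add, map_smul, smul_eq_mul]
    have h2 : v zs = c₁ * v z₁ + c₂ * v z₂ := by
      simp [hzs, map_add, map_smul, smul_eq_mul]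
    have hw1 : c₁ * u z₁ + c₂ * u z₂ = w.1 := by
      rw [hc₁, hc₂]; field_simp; ring
    have hw2 : c₁ * v z₁ + c₂ * v z₂ = w.2 := by
      rw [hc₁, hc₂]; field_simp; ring
    ext
    · rw [h1, hw1]
    · rw [h2, hw2]
  have hUopen : IsOpen ((fun z : WeakSpace ℝ X => ((u z, v z) : ℝ × ℝ)) ⁻¹' V) :=
    hV.preimage hT
  have hne : ((fun z : WeakSpace ℝ X => ((u z, v z) : ℝ × ℝ)) ⁻¹' V).Nonempty :=
    ⟨zs, by show ((u zs, v zs) : ℝ × ℝ) ∈ V; rw [hTz]; exact hw⟩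
  obtain ⟨s, hsS, hsU⟩ := hd.exists_mem_open hUopen hne
  obtain ⟨c, n, rfl⟩ := hsS
  have hsU' : ((u (c • T n), v (c • T n)) : ℝ × ℝ) ∈ V := hsU
  rw [map_smul, map_smul, smul_eq_mul, smul_eq_mul] at hsU'
  exact hS c n hsU'

/-- A real iSup over a singleton set. -/
lemma mySup_singleton (F : ℝ → ℝ) (a : ℝ) (h0 : 0 ≤ F a) :
    (⨆ x ∈ ({a} : Set ℝ), F x) = F a := by
  have hb : ∀ x : ℝ, (⨆ _ : x ∈ ({a} : Set ℝ), F x) ≤ F a := by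
    intro x
    refine Real.iSup_le (fun hx => ?_) h0
    rw [Set.mem_singleton_iff.mp hx]
  refine le_antisymm (Real.iSup_le hb h0) ?_
  have h : (⨆ _ : a ∈ ({a} : Set ℝ), F a) = F a := ciSup_pos (Set.mem_singleton a)
  rw [← h]
  exact le_ciSup ⟨F a, by rintro y ⟨x, rfl⟩; exact hb x⟩ a

/-- An additive map dominated by a continuous function vanishing at `0` is continuous. -/
lemma continuous_of_dominated' {u : X → ℝ} (hadd : ∀ x y : X, u (x + y) = u x + u y)
    (N : X → ℝ) (hN : Continuous N) (hN0 : N 0 = 0) (hle : ∀ x, |u x| ≤ N x) :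
    Continuous u := by
  let U : X →+ ℝ := AddMonoidHom.mk' u hadd
  have h0 : u 0 = 0 := by
    have h := hadd 0 0
    simp only [add_zero] at h
    linarith
  have hat : ContinuousAt u 0 := by
    have hNt : Tendsto N (𝓝 0) (𝓝 0) := hN.tendsto' 0 0 hN0
    have hNt' : Tendsto (fun x => -N x) (𝓝 (0:X)) (𝓝 0) := by
      simpa using hNt.neg
    have h := tendsto_of_tendsto_of_tendsto_of_le_of_le hNt' hNt
      (fun x => (abs_le.mp (hle x)).1) (fun x => (abs_le.mp (hle x)).2)
    simpa [ContinuousAt, h0] using h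
  exact continuous_of_continuousAt_zero U hat

/-- From linear independence of a pair of functions, get a nonzero determinant pair. -/
lemma exists_det_ne {u v : X → ℝ} (h : LinearIndependent ℝ ![u, v]) :
    ∃ z₁ z₂ : X, u z₁ * v z₂ - u z₂ * v z₁ ≠ 0 := by
  by_contra hc
  push_neg at hc
  rw [linearIndependent_fin2] at h
  obtain ⟨hv, hu⟩ := h
  simp only [Matrix.cons_val_one, Matrix.head_cons, Matrix.cons_val_zero] at hv hu
  have hvz : ∃ z₀, v z₀ ≠ 0 := by
    by_contra hvv
    push_neg at hvv
    exact hv (funext hvv)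
  obtain ⟨z₀, hz₀⟩ := hvz
  apply hu (u z₀ / v z₀)
  funext z
  have h1 := hc z z₀
  have h2 : u z * v z₀ = u z₀ * v z := by linarith
  show u z₀ / v z₀ * v z = u z
  field_simp
  linarith

end Aux

lemma runaway_above {φ : ℝ → ℝ} (hc : Continuous φ) (hm : Monotone φ)
    (h : ∀ x, x < φ x) (K : Set ℝ) (hK : IsCompact K) :
    ∃ n₀ : ℕ, ∀ n ≥ n₀, (φ^[n] '' K) ∩ K = ∅ := by
  rcases K.eq_empty_or_nonempty with rfl | hne
  · exact ⟨0, fun n _ => by simp⟩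
  set lo := sInf K with hlo
  set hi := sSup K with hhi
  have hloK : lo ∈ K := hK.sInf_mem hne
  have hs_mono : Monotone fun n : ℕ => φ^[n] lo :=
    monotone_nat_of_le_succ fun n => by
      rw [Function.iterate_succ_apply']; exact (h _).le
  have hb : ∃ n₀ : ℕ, hi < φ^[n₀] lo := by
    by_contra hcon
    push_neg at hcon
    have hbdd : BddAbove (Set.range fun n : ℕ => φ^[n] lo) := by
      refine ⟨hi, ?_⟩
      rintro y ⟨n, rfl⟩
      exact hcon n
    have htL : Tendsto (fun n : ℕ => φ^[n] lo) atTop (𝓝 (⨆ n : ℕ, φ^[n] lo)) :=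
      tendsto_atTop_ciSup hs_mono hbdd
    set L := ⨆ n : ℕ, φ^[n] lo with hL
    have ht1 : Tendsto (fun n : ℕ => φ^[n + 1] lo) atTop (𝓝 L) :=
      (tendsto_add_atTop_iff_nat 1).mpr htL
    have ht2 : Tendsto (fun n : ℕ => φ (φ^[n] lo)) atTop (𝓝 (φ L)) :=
      (hc.tendsto L).comp htL
    have heq : (fun n : ℕ => φ^[n + 1] lo) = fun n : ℕ => φ (φ^[n] lo) := by
      funext n; rw [Function.iterate_succ_apply']
    rw [heq] at ht1
    exact absurd (tendsto_nhds_unique ht2 ht1) (h L).ne'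
  obtain ⟨n₀, hn₀⟩ := hb
  refine ⟨n₀, fun n hn => ?_⟩
  rw [Set.eq_empty_iff_forall_notMem]
  rintro y ⟨⟨x, hxK, rfl⟩, hyK⟩
  have h1 : φ^[n] lo ≤ φ^[n] x := (hm.iterate n) (csInf_le hK.bddBelow hxK)
  have h2 : φ^[n₀] lo ≤ φ^[n] lo := hs_mono hn
  have h3 : φ^[n] x ≤ hi := le_csSup hK.bddAbove hyK
  linarith

lemma runaway_below {φ : ℝ → ℝ} (hc : Continuous φ) (hm : Monotone φ)
    (h : ∀ x, φ x < x) (K : Set ℝ) (hK : IsCompact K) :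
    ∃ n₀ : ℕ, ∀ n ≥ n₀, (φ^[n] '' K) ∩ K = ∅ := by
  rcases K.eq_empty_or_nonempty with rfl | hne
  · exact ⟨0, fun n _ => by simp⟩
  set lo := sInf K with hlo
  set hi := sSup K with hhi
  have hhiK : hi ∈ K := hK.sSup_mem hne
  have hs_anti : Antitone fun n : ℕ => φ^[n] hi :=
    antitone_nat_of_succ_le fun n => by
      rw [Function.iterate_succ_apply']; exact (h _).le
  have hb : ∃ n₀ : ℕ, φ^[n₀] hi < lo := by
    by_contra hcon
    push_neg at hcon
    have hbdd : BddBelow (Set.range fun n : ℕ => φ^[n] hi) := by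
      refine ⟨lo, ?_⟩
      rintro y ⟨n, rfl⟩
      exact hcon n
    have htL : Tendsto (fun n : ℕ => φ^[n] hi) atTop (𝓝 (⨅ n : ℕ, φ^[n] hi)) :=
      tendsto_atTop_ciInf hs_anti hbdd
    set L := ⨅ n : ℕ, φ^[n] hi with hL
    have ht1 : Tendsto (fun n : ℕ => φ^[n + 1] hi) atTop (𝓝 L) :=
      (tendsto_add_atTop_iff_nat 1).mpr htL
    have ht2 : Tendsto (fun n : ℕ => φ (φ^[n] hi)) atTop (𝓝 (φ L)) :=
      (hc.tendsto L).comp htL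
    have heq : (fun n : ℕ => φ^[n + 1] hi) = fun n : ℕ => φ (φ^[n] hi) := by
      funext n; rw [Function.iterate_succ_apply']
    rw [heq] at ht1
    exact absurd (tendsto_nhds_unique ht2 ht1) (h L).ne
  obtain ⟨n₀, hn₀⟩ := hb
  refine ⟨n₀, fun n hn => ?_⟩
  rw [Set.eq_empty_iff_forall_notMem]
  rintro y ⟨⟨x, hxK, rfl⟩, hyK⟩
  have h1 : φ^[n] x ≤ φ^[n] hi := (hm.iterate n) (le_csSup hK.bddAbove hxK)
  have h2 : φ^[n] hi ≤ φ^[n₀] hi := hs_anti hn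
  have h3 : lo ≤ φ^[n] x := csInf_le hK.bddBelow hyK
  linarith

/-- If `X` is a separable locally convex Hausdorff space continuously included in
`C¹(ℝ)` (with `δ_a, δ_a'` linearly independent for each `a`), and the composition
operator `C_φ` is weakly supercyclic on `X`, then `φ` is strongly runaway and
`φ' > 0` everywhere. -/
theorem weakly_supercyclic_comp_implies_strongly_runaway
    (X : Type*) [AddCommGroup X] [Module ℝ X] [TopologicalSpace X]
    [IsTopologicalAddGroup X] [ContinuousSMul ℝ X] [LocallyConvexSpace ℝ X]
    [T2Space X] [TopologicalSpace.SeparableSpace X]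
    (J : X →ₗ[ℝ] (ℝ → ℝ)) (hJinj : Function.Injective J)
    (hJC1 : ∀ f : X, ContDiff ℝ (1 : ℕ∞) (J f))
    (hJcont : ∀ K : Set ℝ, IsCompact K →
      Continuous (fun f : X => ⨆ x ∈ K, max |J f x| |deriv (J f) x|))
    (hind : ∀ a : ℝ, LinearIndependent ℝ
      ![(fun f : X => J f a), (fun f : X => deriv (J f) a)])
    (φ : ℝ → ℝ) (hφ : ContDiff ℝ (1 : ℕ∞) φ)
    (Cφ : X →L[ℝ] X) (hCφ : ∀ (f : X) (x : ℝ), J (Cφ f) x = J f (φ x))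
    (hwsc : ∃ f : X, Dense {y : WeakSpace ℝ X | ∃ c : ℝ, ∃ n : ℕ,
        y = c • ((Cφ ^ n) f)}) :
    (∀ K : Set ℝ, IsCompact K → ∃ n₀ : ℕ, ∀ n ≥ n₀, (φ^[n] '' K) ∩ K = ∅) ∧
      ∀ x : ℝ, 0 < deriv φ x := by
  classical
  obtain ⟨f, hf⟩ := hwsc
  have hdiff : ∀ h : X, Differentiable ℝ (J h) := fun h => (hJC1 h).differentiable (by norm_num)
  have hφd : Differentiable ℝ φ := hφ.differentiable (by norm_num)
  -- continuity of point evaluations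
  have hNmax : ∀ a : ℝ, Continuous (fun h : X => max |J h a| |deriv (J h) a|) := by
    intro a
    have h1 := hJcont {a} isCompact_singleton
    have h2 : (fun h : X => ⨆ x ∈ ({a} : Set ℝ), max |J h x| |deriv (J h) x|)
        = fun h : X => max |J h a| |deriv (J h) a| := by
      funext h
      exact mySup_singleton _ a (le_trans (abs_nonneg _) (le_max_left _ _))
    rwa [h2] at h1
  have hN0 : ∀ a : ℝ, max |J (0:X) a| |deriv (J (0:X)) a| = 0 := by
    intro a
    rw [map_zero]
    show max |(0:ℝ→ℝ) a| |deriv (0:ℝ→ℝ) a| = 0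
    have : deriv (0:ℝ→ℝ) a = 0 := by
      have : (0:ℝ→ℝ) = fun _ : ℝ => (0:ℝ) := rfl
      rw [this, deriv_const]
    rw [this]
    simp
  have hevalCont : ∀ a : ℝ, Continuous (fun h : X => J h a) := by
    intro a
    refine continuous_of_dominated' (fun x y => by rw [map_add]; rfl)
      _ (hNmax a) (hN0 a) (fun x => le_max_left _ _)
  have hderivCont : ∀ a : ℝ, Continuous (fun h : X => deriv (J h) a) := by
    intro a
    refine continuous_of_dominated' (fun x y => ?_) _ (hNmax a) (hN0 a)
      (fun x => le_max_right _ _)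
    rw [map_add]
    exact deriv_add (hdiff x).differentiableAt (hdiff y).differentiableAt
  -- the bundled evaluation functionals
  let da : ℝ → (X →L[ℝ] ℝ) := fun a =>
    ⟨{ toFun := fun h => J h a,
       map_add' := fun x y => by
         show J (x + y) a = J x a + J y a
         rw [map_add]; rfl,
       map_smul' := fun c x => by
         show J (c • x) a = c * J x a
         rw [map_smul]; rfl }, hevalCont a⟩
  let da' : ℝ → (X →L[ℝ] ℝ) := fun a =>
    ⟨{ toFun := fun h => deriv (J h) a,
       map_add' := fun x y => by
         show deriv (J (x + y)) a = deriv (J x) a + deriv (J y) a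
         rw [map_add]
         exact deriv_add (hdiff x).differentiableAt (hdiff y).differentiableAt,
       map_smul' := fun c x => by
         show deriv (J (c • x)) a = c • deriv (J x) a
         rw [map_smul]
         exact deriv_const_smul c (hdiff x).differentiableAt }, hderivCont a⟩
  have hda_apply : ∀ (a : ℝ) (z : X), (da a) z = J z a := fun a z => rfl
  have hda'_apply : ∀ (a : ℝ) (z : X), (da' a) z = deriv (J z) a := fun a z => rfl
  -- iterates
  have hJiter : ∀ (n : ℕ) (x : ℝ), J ((Cφ ^ n) f) x = J f (φ^[n] x) := by
    intro n
    induction n with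
    | zero => intro x; simp
    | succ n ih =>
      intro x
      rw [pow_succ', ContinuousLinearMap.mul_apply, hCφ, ih,
        ← Function.iterate_succ_apply]
  have hcompn : ∀ n : ℕ, J ((Cφ ^ (n+1)) f) = (J ((Cφ ^ n) f)) ∘ φ := by
    intro n
    funext x
    rw [pow_succ', ContinuousLinearMap.mul_apply, hCφ]
    rfl
  have hDstep : ∀ (n : ℕ) (x : ℝ), deriv (J ((Cφ ^ (n+1)) f)) x
      = deriv (J ((Cφ ^ n) f)) (φ x) * deriv φ x := by
    intro n x
    rw [hcompn n]
    exact deriv_comp (x := x) (hdiff _).differentiableAt hφd.differentiableAt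
  -- step 1: the derivative of φ never vanishes
  have hderiv_ne : ∀ a : ℝ, deriv φ a ≠ 0 := by
    intro a ha
    have hvan : ∀ n : ℕ, deriv (J ((Cφ ^ (n+1)) f)) a = 0 := fun n => by
      rw [hDstep n a, ha, mul_zero]
    obtain ⟨z₁, z₂, hD⟩ := exists_det_ne (hind a)
    by_cases hga : deriv (J f) a = 0
    · refine orbit_not_dense' (da a) (da' a) (fun n => (Cφ ^ n) f) ⟨z₁, z₂, hD⟩
        {q : ℝ × ℝ | q.2 ≠ 0} (isOpen_ne.preimage continuous_snd)
        (0, 1) one_ne_zero ?_ hf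
      intro c n hmem
      apply hmem
      show c * (da' a) ((Cφ ^ n) f) = 0
      have hz : deriv (J ((Cφ ^ n) f)) a = 0 := by
        cases n with
        | zero => simpa using hga
        | succ m => exact hvan m
      rw [hda'_apply, hz, mul_zero]
    · -- use the pair (δ'_a, w) with w = g'(a)•δ_a - g(a)•δ'_a
      set w1 : X →L[ℝ] ℝ := deriv (J f) a • da a - J f a • da' a with hw1
      have hw1_apply : ∀ z : X, w1 z
          = deriv (J f) a * J z a - J f a * deriv (J z) a := by
        intro z
        rw [hw1]
        simp only [ContinuousLinearMap.sub_apply, ContinuousLinearMap.smul_apply,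
          smul_eq_mul]
        rw [hda_apply, hda'_apply]
      refine orbit_not_dense' (da' a) w1 (fun n => (Cφ ^ n) f) ⟨z₁, z₂, ?_⟩
        {q : ℝ × ℝ | q.1 ≠ 0 ∧ q.2 ≠ 0}
        ((isOpen_ne.preimage continuous_fst).inter (isOpen_ne.preimage continuous_snd))
        (1, 1) ⟨one_ne_zero, one_ne_zero⟩ ?_ hf
      · rw [hda'_apply, hda'_apply, hw1_apply, hw1_apply]
        have hring : deriv (J z₁) a * (deriv (J f) a * J z₂ a - J f a * deriv (J z₂) a) -
            deriv (J z₂) a * (deriv (J f) a * J z₁ a - J f a * deriv (J z₁) a)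
            = -(deriv (J f) a) * (J z₁ a * deriv (J z₂) a - J z₂ a * deriv (J z₁) a) := by
          ring
        rw [hring]
        exact mul_ne_zero (neg_ne_zero.mpr hga) hD
      · rintro c n ⟨hq1, hq2⟩
        cases n with
        | zero =>
          apply hq2
          show c * w1 ((Cφ ^ 0) f) = 0
          have h0 : ((Cφ ^ 0) f : X) = f := by simp
          rw [h0, hw1_apply]
          ring
        | succ m =>
          apply hq1
          show c * (da' a) ((Cφ ^ (m+1)) f) = 0
          rw [hda'_apply, hvan m, mul_zero]
  -- step 2: φ has no fixed point
  have hnofix : ∀ p : ℝ, φ p ≠ p := by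
    intro p hp
    have hiter : ∀ n : ℕ, φ^[n] p = p := fun n => Function.iterate_fixed hp n
    have hval : ∀ n : ℕ, J ((Cφ ^ n) f) p = J f p := fun n => by
      rw [hJiter n p, hiter n]
    have hdval : ∀ n : ℕ, deriv (J ((Cφ ^ n) f)) p = deriv (J f) p * (deriv φ p) ^ n := by
      intro n
      induction n with
      | zero => simp
      | succ m ih =>
        rw [hDstep m p, hp, ih]
        ring
    obtain ⟨z₁, z₂, hD⟩ := exists_det_ne (hind p)
    set b := J f p with hb
    set dd := deriv (J f) p with hdd
    set t := deriv φ p with htt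
    by_cases hb0 : b = 0
    · refine orbit_not_dense' (da p) (da' p) (fun n => (Cφ ^ n) f) ⟨z₁, z₂, hD⟩
        {q : ℝ × ℝ | q.1 ≠ 0} (isOpen_ne.preimage continuous_fst)
        (1, 0) one_ne_zero ?_ hf
      intro c n hmem
      apply hmem
      show c * (da p) ((Cφ ^ n) f) = 0
      rw [hda_apply, hval n, hb0, mul_zero]
    · by_cases ht1 : |t| ≤ 1
      · -- cone |y| ≤ (|dd|/|b|) |x|
        refine orbit_not_dense' (da p) (da' p) (fun n => (Cφ ^ n) f) ⟨z₁, z₂, hD⟩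
          {q : ℝ × ℝ | (|dd| / |b|) * |q.1| < |q.2|}
          (isOpen_lt (continuous_const.mul continuous_fst.abs) continuous_snd.abs)
          (0, 1) (by norm_num) ?_ hf
        intro c n hmem
        simp only [Set.mem_setOf_eq] at hmem
        have e1 : (da p) ((Cφ ^ n) f) = b := by rw [hda_apply, hval n]
        have e2 : (da' p) ((Cφ ^ n) f) = dd * t ^ n := by rw [hda'_apply, hdval n]
        rw [e1, e2] at hmem
        rw [abs_mul, abs_mul, abs_mul, abs_pow] at hmem
        have hbpos : 0 < |b| := abs_pos.mpr hb0
        have hle : |c| * (|dd| * |t| ^ n) ≤ |dd| / |b| * (|c| * |b|) := by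
          have h1 : |t| ^ n ≤ 1 := pow_le_one₀ (abs_nonneg t) ht1
          have h2 : |dd| / |b| * (|c| * |b|) = |c| * |dd| := by field_simp
          rw [h2]
          calc |c| * (|dd| * |t| ^ n) = (|c| * |dd|) * |t| ^ n := by ring
            _ ≤ (|c| * |dd|) * 1 :=
                mul_le_mul_of_nonneg_left h1 (mul_nonneg (abs_nonneg c) (abs_nonneg dd))
            _ = |c| * |dd| := mul_one _
        exact absurd hmem (not_lt.mpr hle)
      · push_neg at ht1
        by_cases hd0 : dd = 0
        · refine orbit_not_dense' (da p) (da' p) (fun n => (Cφ ^ n) f) ⟨z₁, z₂, hD⟩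
            {q : ℝ × ℝ | q.2 ≠ 0} (isOpen_ne.preimage continuous_snd)
            (0, 1) one_ne_zero ?_ hf
          intro c n hmem
          apply hmem
          show c * (da' p) ((Cφ ^ n) f) = 0
          rw [hda'_apply, hdval n, hd0]
          ring
        · -- cone |x| ≤ (|b|/|dd|) |y|
          refine orbit_not_dense' (da p) (da' p) (fun n => (Cφ ^ n) f) ⟨z₁, z₂, hD⟩
            {q : ℝ × ℝ | (|b| / |dd|) * |q.2| < |q.1|}
            (isOpen_lt (continuous_const.mul continuous_snd.abs) continuous_fst.abs)
            (1, 0) (by norm_num) ?_ hf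
          intro c n hmem
          simp only [Set.mem_setOf_eq] at hmem
          have e1 : (da p) ((Cφ ^ n) f) = b := by rw [hda_apply, hval n]
          have e2 : (da' p) ((Cφ ^ n) f) = dd * t ^ n := by rw [hda'_apply, hdval n]
          rw [e1, e2] at hmem
          rw [abs_mul, abs_mul, abs_mul, abs_pow] at hmem
          have hdpos : 0 < |dd| := abs_pos.mpr hd0
          have hle : |c| * |b| ≤ |b| / |dd| * (|c| * (|dd| * |t| ^ n)) := by
            have h1 : (1:ℝ) ≤ |t| ^ n := one_le_pow₀ ht1.le
            have h2 : |b| / |dd| * (|c| * (|dd| * |t| ^ n)) = |c| * |b| * |t| ^ n := by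
              field_simp
            rw [h2]
            calc |c| * |b| = (|c| * |b|) * 1 := by ring
              _ ≤ (|c| * |b|) * |t| ^ n :=
                  mul_le_mul_of_nonneg_left h1 (mul_nonneg (abs_nonneg c) (abs_nonneg b))
          exact absurd hmem (not_lt.mpr hle)
  -- helper: a "crossing" gives a fixed point
  have hfix : ∀ x₁ x₂ : ℝ, x₁ < φ x₁ → φ x₂ < x₂ → False := by
    intro x₁ x₂ h1 h2
    have hψ : ContinuousOn (fun x => φ x - x) (Set.uIcc x₁ x₂) :=
      (hφ.continuous.sub continuous_id).continuousOn
    have h0 : (0:ℝ) ∈ Set.uIcc (φ x₁ - x₁) (φ x₂ - x₂) :=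
      Set.mem_uIcc.mpr (Or.inr ⟨by linarith, by linarith⟩)
    obtain ⟨y, _, hy⟩ := intermediate_value_uIcc hψ h0
    have hy' : φ y - y = 0 := hy
    exact hnofix y (by linarith)
  -- step 3: φ' > 0 everywhere
  have hpos : ∀ x : ℝ, 0 < deriv φ x := by
    have hdc : Continuous (deriv φ) := hφ.continuous_deriv le_rfl
    by_contra hcon
    push_neg at hcon
    obtain ⟨x₀, hx₀⟩ := hcon
    have hx₀' : deriv φ x₀ < 0 := hx₀.lt_of_ne (hderiv_ne x₀)
    have hneg : ∀ x, deriv φ x < 0 := by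
      intro x
      rcases lt_or_ge (deriv φ x) 0 with h | h
      · exact h
      · exfalso
        have h' : 0 < deriv φ x := h.lt_of_ne' (hderiv_ne x)
        have h0 : (0:ℝ) ∈ Set.uIcc (deriv φ x₀) (deriv φ x) :=
          Set.mem_uIcc.mpr (Or.inl ⟨hx₀'.le, h'.le⟩)
        obtain ⟨y, _, hy⟩ := intermediate_value_uIcc hdc.continuousOn h0
        exact hderiv_ne y hy
    have hanti : StrictAnti φ := strictAnti_of_deriv_neg hneg
    rcases lt_trichotomy (φ 0) 0 with hlt | heq | hgt
    · refine hfix (φ 0 - 1) 0 ?_ hlt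
      have : φ 0 < φ (φ 0 - 1) := hanti (by linarith)
      linarith
    · exact hnofix 0 heq
    · refine hfix 0 (φ 0 + 1) hgt ?_
      have : φ (φ 0 + 1) < φ 0 := hanti (by linarith)
      linarith
  -- step 4: strongly runaway
  have hmono : StrictMono φ := strictMono_of_deriv_pos hpos
  refine ⟨fun K hK => ?_, hpos⟩
  by_cases hup : ∀ x, x < φ x
  · exact runaway_above hφ.continuous hmono.monotone hup K hK
  · push_neg at hup
    obtain ⟨x₀, hx₀⟩ := hup
    have hdown : ∀ x, φ x < x := by
      intro x
      rcases lt_or_ge (φ x) x with h | h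
      · exact h
      · exfalso
        have h' : x < φ x := h.lt_of_ne' (fun he => hnofix x he)
        have hx₀' : φ x₀ < x₀ := hx₀.lt_of_ne (hnofix x₀)
        exact hfix x x₀ h' hx₀'
    exact runaway_below hφ.continuous hmono.monotone hdown K hK
end

section
/- Let φ: ℝ → ℝ be a polynomial function and let C_φ: C(ℝ) → C(ℝ), g ↦ g ∘ φ, be the composition operator on the space C(ℝ) of continuous functions ℝ → ℝ with the compact-open topology. The following are equivalent: (1) C_φ is mean ergodic; (2) C_φ is power bounded; (3) there exist a, b ∈ ℝ with φ(x) = ax + b for all x ∈ ℝ, where either |a| < 1, or a = −1, or (a = 1 and b = 0). -/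
open Filter Topology Uniformity

lemma cmIter_apply (φ : C(ℝ, ℝ)) (n : ℕ) (x : ℝ) : cmIter φ n x = (⇑φ)^[n] x := rfl

/-- If `φ` moves every point closer to `p`, so do all iterates. -/
lemma iter_abs_le (φ : C(ℝ, ℝ)) (p : ℝ) (hφ : ∀ x, |φ x - p| ≤ |x - p|) :
    ∀ (n : ℕ) (x : ℝ), |(⇑φ)^[n] x - p| ≤ |x - p| := by
  intro n
  induction n with
  | zero => simp
  | succ n ih =>
    intro x
    rw [Function.iterate_succ_apply']
    exact (hφ _).trans (ih x)

/-- Uniform boundedness of iterate orbits implies equicontinuity of the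
composition operators. -/
lemma equicontinuous_of_bound (φ : C(ℝ, ℝ)) (p : ℝ)
    (hφ : ∀ x, |φ x - p| ≤ |x - p|) :
    Equicontinuous (fun n : ℕ => fun g : C(ℝ, ℝ) => g.comp (cmIter φ n)) := by
  intro g₀ U hU
  obtain ⟨⟨K, V⟩, ⟨hK, hV⟩, hsub⟩ :=
    ContinuousMap.hasBasis_compactConvergenceUniformity.mem_iff.mp hU
  obtain ⟨R₀, hR₀⟩ := hK.exists_bound_of_continuousOn
    (f := fun x : ℝ => x - p) ((continuous_id.sub continuous_const).continuousOn)
  set R : ℝ := max R₀ 0 with hR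
  have hRK : ∀ x ∈ K, |x - p| ≤ R := fun x hx => (hR₀ x hx).trans (le_max_left _ _)
  refine (nhds_basis_uniformity'
    (ContinuousMap.hasBasis_compactConvergenceUniformity (α := ℝ) (β := ℝ))).eventually_iff.mpr
    ⟨(Metric.closedBall p R, V), ⟨isCompact_closedBall _ _, hV⟩, ?_⟩
  intro g hg n
  apply hsub
  intro x hx
  have hmem : (⇑φ)^[n] x ∈ Metric.closedBall p R := by
    rw [Metric.mem_closedBall, Real.dist_eq]
    exact (iter_abs_le φ p hφ n x).trans (hRK x hx)
  exact hg _ hmem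

/-- If some orbit escapes to infinity, the composition operators are not
equicontinuous. -/
lemma not_equicontinuous_of_escape (φ : C(ℝ, ℝ)) (x₀ : ℝ)
    (hx : Tendsto (fun n : ℕ => |(⇑φ)^[n] x₀|) atTop atTop) :
    ¬ Equicontinuous (fun n : ℕ => fun g : C(ℝ, ℝ) => g.comp (cmIter φ n)) := by
  intro hE
  have hU : {fg : C(ℝ, ℝ) × C(ℝ, ℝ) |
      ∀ x ∈ ({x₀} : Set ℝ), (fg.1 x, fg.2 x) ∈ {q : ℝ × ℝ | dist q.1 q.2 < 1}} ∈
      𝓤 C(ℝ, ℝ) :=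
    ContinuousMap.hasBasis_compactConvergenceUniformity.mem_of_mem
      (i := (({x₀} : Set ℝ), {q : ℝ × ℝ | dist q.1 q.2 < 1}))
      ⟨isCompact_singleton, Metric.dist_mem_uniformity one_pos⟩
  have h0 := hE 0 _ hU
  rw [(nhds_basis_uniformity'
    (ContinuousMap.hasBasis_compactConvergenceUniformity (α := ℝ) (β := ℝ))).eventually_iff] at h0
  obtain ⟨⟨L, V⟩, ⟨hL, hV⟩, hball⟩ := h0
  obtain ⟨r, hr⟩ : ∃ r, ∀ y ∈ L, |y| ≤ r := by
    obtain ⟨r, hr⟩ := hL.isBounded.subset_closedBall 0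
    exact ⟨r, fun y hy => by simpa [Real.dist_eq] using hr hy⟩
  obtain ⟨n, hn⟩ := (hx.eventually_ge_atTop (r + 2)).exists
  set g : C(ℝ, ℝ) := ⟨fun x => max 0 (|x| - (r + 1)),
    continuous_const.max (continuous_abs.sub continuous_const)⟩ with hgdef
  have hgL : ∀ y ∈ L, g y = 0 := by
    intro y hy
    have := hr y hy
    simp only [hgdef, ContinuousMap.coe_mk]
    exact max_eq_left (by linarith)
  have hgball : g ∈ UniformSpace.ball (0 : C(ℝ, ℝ))
      {fg : C(ℝ, ℝ) × C(ℝ, ℝ) | ∀ x ∈ L, (fg.1 x, fg.2 x) ∈ V} := by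
    intro y hy
    have : ((0 : C(ℝ, ℝ)) y, g y) = (0, 0) := by simp [hgL y hy]
    rw [this]
    exact refl_mem_uniformity hV
  have hcontra := hball hgball n x₀ rfl
  simp only [ContinuousMap.comp_apply, ContinuousMap.zero_apply, cmIter_apply] at hcontra
  have : g ((⇑φ)^[n] x₀) ≥ 1 := by
    simp only [hgdef, ContinuousMap.coe_mk]
    have := hn
    exact le_max_of_le_right (by linarith)
  have hd : dist (0 : ℝ) (g ((⇑φ)^[n] x₀)) < 1 := hcontra
  rw [Real.dist_eq, zero_sub, abs_neg, abs_of_nonneg (by linarith)] at hd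
  linarith

/-- Cesàro convergence in `C(ℝ)` from uniform-on-compacts convergence. -/
lemma cesaro_cm (u : ℕ → C(ℝ, ℝ)) (h : C(ℝ, ℝ))
    (hu : ∀ K : Set ℝ, IsCompact K →
      TendstoUniformlyOn (fun n x => u n x) (⇑h) atTop K) :
    Tendsto (fun n : ℕ => (n : ℝ)⁻¹ • ∑ k ∈ Finset.Icc 1 n, u k) atTop (𝓝 h) := by
  rw [ContinuousMap.tendsto_iff_forall_isCompact_tendstoUniformlyOn]
  intro K hK
  rw [Metric.tendstoUniformlyOn_iff]
  intro ε hε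
  obtain ⟨N, hN⟩ := eventually_atTop.mp
    ((Metric.tendstoUniformlyOn_iff.mp (hu K hK)) (ε / 4) (by positivity))
  have hB : ∀ k : ℕ, ∃ Bk : ℝ, ∀ x ∈ K, |h x - u k x| ≤ Bk := by
    intro k
    obtain ⟨Bk, hBk⟩ := hK.exists_bound_of_continuousOn
      (f := fun x => h x - u k x)
      ((h.continuous.sub (u k).continuous).continuousOn)
    exact ⟨Bk, fun x hx => hBk x hx⟩
  choose B hBspec using hB
  set C : ℝ := ∑ k ∈ Finset.range N, max (B k) 0 with hC
  have hC0 : 0 ≤ C := Finset.sum_nonneg fun k _ => le_max_right _ _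
  have hCtend : Tendsto (fun n : ℕ => (n : ℝ)⁻¹ * C) atTop (𝓝 0) := by
    simpa using (tendsto_inv_atTop_nhds_zero_nat (𝕜 := ℝ)).mul_const C
  filter_upwards [eventually_ge_atTop 1,
    hCtend.eventually_lt_const (by positivity : (0:ℝ) < ε/4)] with n hn1 hn2 x hx
  have hnpos : (0 : ℝ) < n := by exact_mod_cast hn1
  have happly : ((n : ℝ)⁻¹ • ∑ k ∈ Finset.Icc 1 n, u k) x
      = (n : ℝ)⁻¹ * ∑ k ∈ Finset.Icc 1 n, u k x := by simp
  rw [happly]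
  have hcard : (Finset.Icc 1 n).card = n := by rw [Nat.card_Icc]; omega
  have hhx : h x = (n : ℝ)⁻¹ * ∑ _k ∈ Finset.Icc 1 n, h x := by
    rw [Finset.sum_const, hcard, nsmul_eq_mul]
    field_simp
  rw [Real.dist_eq, hhx, ← mul_sub, ← Finset.sum_sub_distrib, abs_mul,
    abs_of_nonneg (by positivity : (0:ℝ) ≤ (n:ℝ)⁻¹)]
  have hterm : ∀ k ∈ Finset.Icc 1 n,
      |h x - u k x| ≤ (if k ∈ Finset.range N then max (B k) 0 else 0) + ε / 4 := by
    intro k _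
    by_cases hkN : k ∈ Finset.range N
    · rw [if_pos hkN]
      have := (hBspec k x hx).trans (le_max_left (B k) 0)
      linarith
    · rw [if_neg hkN]
      have hkge : N ≤ k := Nat.le_of_not_lt (by simpa using hkN)
      have := hN k hkge x hx
      rw [Real.dist_eq] at this
      linarith
  have hsum1 : ∑ k ∈ Finset.Icc 1 n, |h x - u k x|
      ≤ (∑ k ∈ Finset.Icc 1 n, (if k ∈ Finset.range N then max (B k) 0 else 0))
        + (n : ℝ) * (ε / 4) := by
    have := Finset.sum_le_sum hterm
    rwa [Finset.sum_add_distrib, Finset.sum_const, hcard, nsmul_eq_mul] at this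
  have hsum2 : (∑ k ∈ Finset.Icc 1 n, (if k ∈ Finset.range N then max (B k) 0 else 0)) ≤ C := by
    rw [Finset.sum_ite_mem]
    exact Finset.sum_le_sum_of_subset_of_nonneg Finset.inter_subset_right
      (fun k _ _ => le_max_right _ _)
  calc (n:ℝ)⁻¹ * |∑ k ∈ Finset.Icc 1 n, (h x - u k x)|
      ≤ (n:ℝ)⁻¹ * ∑ k ∈ Finset.Icc 1 n, |h x - u k x| := by
        gcongr
        exact Finset.abs_sum_le_sum_abs _ _
    _ ≤ (n:ℝ)⁻¹ * (C + (n : ℝ) * (ε / 4)) := by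
        gcongr
        exact hsum1.trans (by linarith)
    _ = (n:ℝ)⁻¹ * C + ε / 4 := by field_simp
    _ < ε := by linarith

lemma sum_ite_odd {M : Type*} [AddCommMonoid M] (A B : M) (n : ℕ) :
    ∑ k ∈ Finset.Icc 1 n, (if Odd k then A else B) = ((n + 1) / 2) • A + (n / 2) • B := by
  induction n with
  | zero => simp
  | succ n ih =>
    rw [Finset.sum_Icc_succ_top (by omega), ih]
    by_cases hodd : Odd (n + 1)
    · rw [if_pos hodd]
      obtain ⟨m, hm⟩ := hodd
      have hn : n = 2 * m := by omega
      subst hn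
      have e1 : (2 * m + 1 + 1) / 2 = m + 1 := by omega
      have e2 : (2 * m + 1) / 2 = m := by omega
      have e3 : 2 * m / 2 = m := by omega
      rw [e1, e2, e3]
      simp only [succ_nsmul]
      abel
    · rw [if_neg hodd]
      rw [Nat.odd_iff] at hodd
      obtain ⟨m, hm⟩ : ∃ m, n = 2 * m + 1 := ⟨n / 2, by omega⟩
      subst hm
      have e1 : (2 * m + 1 + 1 + 1) / 2 = m + 1 := by omega
      have e2 : (2 * m + 1 + 1) / 2 = m + 1 := by omega
      have e3 : (2 * m + 1) / 2 = m := by omega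
      rw [e1, e2, e3]
      simp only [succ_nsmul]
      abel

lemma tendsto_halfdiv (c : ℕ → ℕ) (hc : ∀ n : ℕ, (n : ℝ) - 1 ≤ 2 * (c n : ℝ) ∧ 2 * (c n : ℝ) ≤ (n : ℝ) + 1) :
    Tendsto (fun n : ℕ => (n : ℝ)⁻¹ * (c n : ℝ)) atTop (𝓝 2⁻¹) := by
  have h1 : Tendsto (fun n : ℕ => 2⁻¹ - (n : ℝ)⁻¹) atTop (𝓝 2⁻¹) := by
    simpa using (tendsto_const_nhds (x := (2:ℝ)⁻¹)).sub (tendsto_inv_atTop_nhds_zero_nat (𝕜 := ℝ))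
  have h2 : Tendsto (fun n : ℕ => 2⁻¹ + (n : ℝ)⁻¹) atTop (𝓝 2⁻¹) := by
    simpa using (tendsto_const_nhds (x := (2:ℝ)⁻¹)).add (tendsto_inv_atTop_nhds_zero_nat (𝕜 := ℝ))
  refine tendsto_of_tendsto_of_tendsto_of_le_of_le' h1 h2 ?_ ?_
  · filter_upwards [eventually_ge_atTop 1] with n hn
    have hnpos : (0 : ℝ) < n := by exact_mod_cast hn
    have h := (hc n).1
    rw [← sub_nonneg]
    have e : (n:ℝ)⁻¹ * (c n : ℝ) - (2⁻¹ - (n:ℝ)⁻¹) = ((2 * (c n : ℝ) - ((n:ℝ) - 1)) + 1) / (2 * n) := by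
      field_simp
      ring
    rw [e]
    exact div_nonneg (by linarith) (by positivity)
  · filter_upwards [eventually_ge_atTop 1] with n hn
    have hnpos : (0 : ℝ) < n := by exact_mod_cast hn
    have h := (hc n).2
    rw [← sub_nonneg]
    have e : (2⁻¹ + (n:ℝ)⁻¹) - (n:ℝ)⁻¹ * (c n : ℝ) = ((((n:ℝ) + 1) - 2 * (c n : ℝ)) + 1) / (2 * n) := by
      field_simp
      ring
    rw [e]
    exact div_nonneg (by linarith) (by positivity)

lemma iter_affine (φ : C(ℝ, ℝ)) (a b p : ℝ) (hab : ∀ x, φ x = a * x + b)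
    (hp : a * p + b = p) : ∀ (n : ℕ) (x : ℝ), (⇑φ)^[n] x = a ^ n * (x - p) + p := by
  intro n
  induction n with
  | zero => intro x; simp
  | succ n ih =>
    intro x
    rw [Function.iterate_succ_apply', ih, hab]
    linear_combination hp

lemma iter_translate (φ : C(ℝ, ℝ)) (b : ℝ) (hab : ∀ x, φ x = x + b) :
    ∀ (n : ℕ) (x : ℝ), (⇑φ)^[n] x = x + n * b := by
  intro n
  induction n with
  | zero => intro x; simp
  | succ n ih =>
    intro x
    rw [Function.iterate_succ_apply', ih, hab]
    push_cast
    ring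

/-- Uniform-on-compacts convergence of `g ∘ φ^[n]` to the constant `g p` in the
contractive affine case. -/
lemma tendstoUniformlyOn_comp_iter (φ : C(ℝ, ℝ)) (a b : ℝ) (hab : ∀ x, φ x = a * x + b)
    (ha : |a| < 1) (g : C(ℝ, ℝ)) (K : Set ℝ) (hK : IsCompact K) :
    TendstoUniformlyOn (fun (n : ℕ) (x : ℝ) => g ((⇑φ)^[n] x))
      (fun _ => g (b / (1 - a))) atTop K := by
  have ha1 : (1 : ℝ) - a ≠ 0 := by
    have := (abs_lt.mp ha).2
    intro hc; linarith
  set p : ℝ := b / (1 - a) with hpdef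
  have hp : a * p + b = p := by
    rw [hpdef]
    field_simp
    ring
  have hiter := iter_affine φ a b p hab hp
  obtain ⟨R₀, hR₀⟩ := hK.exists_bound_of_continuousOn
    (f := fun x : ℝ => x - p) ((continuous_id.sub continuous_const).continuousOn)
  set R : ℝ := max R₀ 0 with hRdef
  have hR0 : 0 ≤ R := le_max_right _ _
  have hRK : ∀ x ∈ K, |x - p| ≤ R := fun x hx => (hR₀ x hx).trans (le_max_left _ _)
  set L : Set ℝ := Set.Icc (p - R) (p + R) with hLdef
  have hpL : p ∈ L := Set.mem_Icc.mpr ⟨by linarith, by linarith⟩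
  have hmemL : ∀ (n : ℕ), ∀ x ∈ K, (⇑φ)^[n] x ∈ L := by
    intro n x hx
    have h1 : |(⇑φ)^[n] x - p| ≤ R := by
      rw [hiter n x, add_sub_cancel_right, abs_mul, abs_pow]
      calc |a| ^ n * |x - p| ≤ 1 * R := by
            apply mul_le_mul (pow_le_one₀ (abs_nonneg a) ha.le) (hRK x hx) (abs_nonneg _) one_pos.le
        _ = R := one_mul R
    have h2 := abs_le.mp h1
    exact Set.mem_Icc.mpr ⟨by linarith [h2.1], by linarith [h2.2]⟩
  have hUC := (isCompact_Icc (a := p - R) (b := p + R)).uniformContinuousOn_of_continuous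
    g.continuous.continuousOn
  rw [Metric.tendstoUniformlyOn_iff]
  intro ε hε
  obtain ⟨δ, hδ0, hδ⟩ := Metric.uniformContinuousOn_iff.mp hUC ε hε
  have htend : Tendsto (fun n : ℕ => |a| ^ n * R) atTop (𝓝 0) := by
    simpa using (tendsto_pow_atTop_nhds_zero_of_lt_one (abs_nonneg a) ha).mul_const R
  filter_upwards [htend.eventually_lt_const hδ0] with n hn x hx
  have hd : dist ((⇑φ)^[n] x) p < δ := by
    rw [Real.dist_eq, hiter n x, add_sub_cancel_right, abs_mul, abs_pow]
    calc |a| ^ n * |x - p| ≤ |a| ^ n * R :=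
          mul_le_mul_of_nonneg_left (hRK x hx) (pow_nonneg (abs_nonneg a) n)
      _ < δ := hn
  have := hδ _ (hmemL n x hx) p hpL hd
  rw [dist_comm]
  exact this

lemma escape_of_large (φ : C(ℝ, ℝ)) (M : ℝ) (hM : 1 ≤ M)
    (h : ∀ x : ℝ, M ≤ |x| → 2 * |x| ≤ |φ x|) :
    Tendsto (fun n : ℕ => |(⇑φ)^[n] M|) atTop atTop := by
  have hM0 : (0 : ℝ) < M := by linarith
  have key : ∀ n : ℕ, 2 ^ n * M ≤ |(⇑φ)^[n] M| := by
    intro n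
    induction n with
    | zero => simpa [abs_of_pos hM0] using le_refl M
    | succ n ih =>
      have hpow : (1 : ℝ) ≤ 2 ^ n := one_le_pow₀ (by norm_num)
      have h1 : M ≤ |(⇑φ)^[n] M| := by nlinarith
      rw [Function.iterate_succ_apply']
      calc 2 ^ (n + 1) * M = 2 * (2 ^ n * M) := by ring
        _ ≤ 2 * |(⇑φ)^[n] M| := by linarith
        _ ≤ |φ ((⇑φ)^[n] M)| := h _ h1
  refine tendsto_atTop_mono key ?_
  exact (tendsto_pow_atTop_atTop_of_one_lt (by norm_num : (1:ℝ) < 2)).atTop_mul_const hM0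

section
open Polynomial

/-- For a polynomial of degree at least 2 there is a threshold beyond which
`|P(x)| ≥ 2|x|`. -/
lemma poly_growth (P : Polynomial ℝ) (hdeg : 2 ≤ P.natDegree) :
    ∃ M : ℝ, 1 ≤ M ∧ ∀ x : ℝ, M ≤ |x| → 2 * |x| ≤ |P.eval x| := by
  have hP0 : P ≠ 0 := fun hc => by simp [hc] at hdeg
  set Q : Polynomial ℝ := P * P - C 4 * X ^ 2 with hQdef
  have hndPP : (P * P).natDegree = 2 * P.natDegree := by
    rw [natDegree_mul hP0 hP0]; ring
  have hnd4 : (C (4:ℝ) * X ^ 2).natDegree = 2 := natDegree_C_mul_X_pow 2 4 (by norm_num)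
  have hltdeg : (C (4:ℝ) * X ^ 2).degree < (P * P).degree := by
    rw [degree_eq_natDegree (mul_ne_zero hP0 hP0), hndPP,
      degree_C_mul_X_pow 2 (by norm_num : (4:ℝ) ≠ 0)]
    exact_mod_cast (by omega : 2 < 2 * P.natDegree)
  have hQnd : Q.natDegree = 2 * P.natDegree := by
    rw [hQdef, natDegree_sub_eq_left_of_natDegree_lt (by rw [hndPP, hnd4]; omega), hndPP]
  have hQlc : Q.leadingCoeff = P.leadingCoeff ^ 2 := by
    rw [hQdef, leadingCoeff_sub_of_degree_lt hltdeg, leadingCoeff_mul, sq]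
  have hQlc0 : 0 < Q.leadingCoeff := by
    rw [hQlc, sq]
    exact mul_self_pos.mpr (leadingCoeff_ne_zero.mpr hP0)
  have hQdeg : 0 < Q.degree := natDegree_pos_iff_degree_pos.mp (by omega)
  have hQtop : Tendsto (fun x : ℝ => Q.eval x) atTop atTop :=
    Q.tendsto_atTop_of_leadingCoeff_nonneg hQdeg hQlc0.le
  -- the reflected polynomial
  set Q' : Polynomial ℝ := Q.comp (-X) with hQ'def
  have hndX : (-X : Polynomial ℝ).natDegree = 1 := by simp
  have hQ'nd : Q'.natDegree = Q.natDegree := by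
    rw [hQ'def, natDegree_comp, hndX, mul_one]
  have hQ'lc : Q'.leadingCoeff = Q.leadingCoeff := by
    rw [hQ'def, leadingCoeff_comp (by rw [hndX]; norm_num)]
    have : (-X : Polynomial ℝ).leadingCoeff = -1 := by simp
    rw [this, hQnd]
    rw [Even.neg_one_pow ⟨P.natDegree, by ring⟩, mul_one]
  have hQ'deg : 0 < Q'.degree := natDegree_pos_iff_degree_pos.mp (by omega)
  have hQ'top : Tendsto (fun x : ℝ => Q'.eval x) atTop atTop :=
    Q'.tendsto_atTop_of_leadingCoeff_nonneg hQ'deg (hQ'lc ▸ hQlc0.le)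
  obtain ⟨M₁, hM₁⟩ := eventually_atTop.mp (hQtop.eventually_ge_atTop 0)
  obtain ⟨M₂, hM₂⟩ := eventually_atTop.mp (hQ'top.eventually_ge_atTop 0)
  refine ⟨max 1 (max M₁ M₂), le_max_left _ _, ?_⟩
  intro x hx
  have hQx : 0 ≤ Q.eval x := by
    rcases le_or_gt 0 x with hx0 | hx0
    · have : M₁ ≤ x := by
        have := le_trans (le_max_left M₁ M₂) (le_max_right 1 (max M₁ M₂))
        rw [abs_of_nonneg hx0] at hx
        linarith
      exact hM₁ x this
    · have hx' : M₂ ≤ -x := by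
        have := le_trans (le_max_right M₁ M₂) (le_max_right 1 (max M₁ M₂))
        rw [abs_of_neg hx0] at hx
        linarith
      have := hM₂ (-x) hx'
      rw [hQ'def] at this
      simpa using this
  have heval : Q.eval x = (P.eval x) * (P.eval x) - 4 * x ^ 2 := by
    simp [hQdef]
  rw [heval] at hQx
  nlinarith [abs_nonneg (P.eval x), abs_nonneg x, sq_abs (P.eval x), sq_abs x,
    abs_mul_abs_self (P.eval x), abs_mul_abs_self x]

end


/-- Escape lemma: if `φ` is polynomial and not of the tame affine form, some
orbit escapes to infinity in absolute value. -/
lemma exists_escape (φ : C(ℝ, ℝ)) (P : Polynomial ℝ) (hP : ∀ x : ℝ, φ x = P.eval x)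
    (h3 : ¬ ∃ a b : ℝ, (∀ x : ℝ, φ x = a * x + b) ∧
      (|a| < 1 ∨ a = -1 ∨ (a = 1 ∧ b = 0))) :
    ∃ x₀ : ℝ, Tendsto (fun n : ℕ => |(⇑φ)^[n] x₀|) atTop atTop := by
  by_cases hdeg : 2 ≤ P.natDegree
  · obtain ⟨M, hM1, hM⟩ := poly_growth P hdeg
    refine ⟨M, escape_of_large φ M hM1 ?_⟩
    intro x hx
    rw [hP x]
    exact hM x hx
  · -- affine case
    push_neg at hdeg
    set a : ℝ := P.coeff 1 with hadef
    set b : ℝ := P.coeff 0 with hbdef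
    have hlin : ∀ x : ℝ, φ x = a * x + b := by
      intro x
      rw [hP x, Polynomial.eval_eq_sum_range' (by omega : P.natDegree < 2)]
      rw [Finset.sum_range_succ, Finset.sum_range_succ]
      simp
      ring
    have hcond : ¬ (|a| < 1 ∨ a = -1 ∨ (a = 1 ∧ b = 0)) := fun hc => h3 ⟨a, b, hlin, hc⟩
    push_neg at hcond
    obtain ⟨ha1, ha2, ha3⟩ := hcond
    by_cases haone : a = 1
    · -- translation case
      have hb : b ≠ 0 := ha3 haone
      have htr : ∀ x : ℝ, φ x = x + b := fun x => by rw [hlin x, haone, one_mul]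
      refine ⟨0, ?_⟩
      have hit := iter_translate φ b htr
      have : ∀ n : ℕ, (n : ℝ) * |b| - 0 ≤ |(⇑φ)^[n] (0:ℝ)| := by
        intro n
        rw [hit n 0, zero_add, abs_mul, Nat.abs_cast]
        simp
      refine tendsto_atTop_mono this ?_
      refine tendsto_atTop_add_const_right _ _ ?_
      exact Tendsto.atTop_mul_const (abs_pos.mpr hb) tendsto_natCast_atTop_atTop
    · -- expanding case, |a| > 1
      have hagt : 1 < |a| := by
        rcases lt_or_eq_of_le ha1 with h | h
        · exact h
        · exfalso
          rcases (abs_eq (by norm_num : (0:ℝ) ≤ 1)).mp h.symm with h' | h'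
          · exact haone h'
          · exact ha2 h'
      have ha1' : (1 : ℝ) - a ≠ 0 := fun hc => haone (by linarith)
      set p : ℝ := b / (1 - a) with hpdef
      have hp : a * p + b = p := by
        rw [hpdef]
        field_simp
        ring
      have hiter := iter_affine φ a b p hlin hp
      refine ⟨p + 1, ?_⟩
      have hlow : ∀ n : ℕ, |a| ^ n - |p| ≤ |(⇑φ)^[n] (p + 1)| := by
        intro n
        rw [hiter n (p + 1), add_sub_cancel_left, mul_one]
        have h1 : |a ^ n| ≤ |a ^ n + p| + |p| := by
          calc |a ^ n| = |(a ^ n + p) + (-p)| := by ring_nf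
            _ ≤ |a ^ n + p| + |(-p)| := abs_add_le _ _
            _ = |a ^ n + p| + |p| := by rw [abs_neg]
        rw [← abs_pow]
        linarith
      refine tendsto_atTop_mono hlow ?_
      refine tendsto_atTop_add_const_right _ _ ?_
      exact tendsto_pow_atTop_atTop_of_one_lt hagt

/-- Escaping orbits rule out mean ergodicity. -/
lemma not_me_of_escape (φ : C(ℝ, ℝ)) (x₀ : ℝ)
    (hx : Tendsto (fun n : ℕ => |(⇑φ)^[n] x₀|) atTop atTop) :
    ¬ ∀ g : C(ℝ, ℝ), ∃ h : C(ℝ, ℝ), Tendsto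
        (fun n : ℕ => (n : ℝ)⁻¹ • ∑ k ∈ Finset.Icc 1 n, g.comp (cmIter φ k))
        atTop (nhds h) := by
  intro hme
  obtain ⟨h, hh⟩ := hme ⟨fun x => |x|, continuous_abs⟩
  set L : ℝ := h x₀ with hLdef
  have hev : Tendsto
      (fun n : ℕ => ((n : ℝ)⁻¹ • ∑ k ∈ Finset.Icc 1 n,
        (⟨fun x => |x|, continuous_abs⟩ : C(ℝ, ℝ)).comp (cmIter φ k)) x₀)
      atTop (𝓝 L) :=
    ((continuous_eval_const x₀).tendsto h).comp hh
  have hev' : Tendsto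
      (fun n : ℕ => (n : ℝ)⁻¹ * ∑ k ∈ Finset.Icc 1 n, |(⇑φ)^[k] x₀|)
      atTop (𝓝 L) := by
    refine hev.congr fun n => ?_
    simp [cmIter]
  set Cc : ℝ := 4 * (|L| + 1) with hCcdef
  obtain ⟨N, hN⟩ := eventually_atTop.mp (hx.eventually_ge_atTop Cc)
  set N' : ℕ := max N 1 with hN'def
  have hfinal : ∀ᶠ n : ℕ in atTop,
      (2 * (|L| + 1) : ℝ) ≤ (n : ℝ)⁻¹ * ∑ k ∈ Finset.Icc 1 n, |(⇑φ)^[k] x₀| := by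
    filter_upwards [eventually_ge_atTop (2 * N')] with n hn
    have hn1 : 1 ≤ n := le_trans (by omega) hn
    have hnpos : (0 : ℝ) < n := by exact_mod_cast hn1
    have hsub : Finset.Icc N' n ⊆ Finset.Icc 1 n :=
      Finset.Icc_subset_Icc (by omega) le_rfl
    have hCc0 : (0:ℝ) ≤ Cc := by positivity
    have hlow : ((Finset.Icc N' n).card : ℝ) * Cc
        ≤ ∑ k ∈ Finset.Icc N' n, |(⇑φ)^[k] x₀| := by
      have := Finset.card_nsmul_le_sum (Finset.Icc N' n)
        (fun k => |(⇑φ)^[k] x₀|) Cc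
        (fun k hk => hN k (le_trans (le_max_left N 1) (Finset.mem_Icc.mp hk).1))
      rwa [nsmul_eq_mul] at this
    have hcard : ((Finset.Icc N' n).card : ℝ) = (n : ℝ) + 1 - (N' : ℝ) := by
      rw [Nat.card_Icc]
      have : N' ≤ n + 1 := by omega
      push_cast [Nat.cast_sub this]
      ring
    have hcardge : (n : ℝ) / 2 ≤ ((Finset.Icc N' n).card : ℝ) := by
      rw [hcard]
      have : (2 * N' : ℕ) ≤ n := hn
      have h2 : (2 : ℝ) * (N' : ℝ) ≤ (n : ℝ) := by exact_mod_cast this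
      linarith
    have hsum : (n : ℝ) / 2 * Cc ≤ ∑ k ∈ Finset.Icc 1 n, |(⇑φ)^[k] x₀| := by
      calc (n : ℝ) / 2 * Cc ≤ ((Finset.Icc N' n).card : ℝ) * Cc := by
            exact mul_le_mul_of_nonneg_right hcardge hCc0
        _ ≤ ∑ k ∈ Finset.Icc N' n, |(⇑φ)^[k] x₀| := hlow
        _ ≤ ∑ k ∈ Finset.Icc 1 n, |(⇑φ)^[k] x₀| :=
            Finset.sum_le_sum_of_subset_of_nonneg hsub (fun k _ _ => abs_nonneg _)
    calc (2 * (|L| + 1) : ℝ) = (n : ℝ)⁻¹ * ((n : ℝ) / 2 * Cc) := by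
          field_simp [hCcdef]
          ring
      _ ≤ (n : ℝ)⁻¹ * ∑ k ∈ Finset.Icc 1 n, |(⇑φ)^[k] x₀| := by
          exact mul_le_mul_of_nonneg_left hsum (by positivity)
  have hle : (2 * (|L| + 1) : ℝ) ≤ L := ge_of_tendsto hev' hfinal
  have h1 : L ≤ |L| := le_abs_self L
  have h2 : (0:ℝ) ≤ |L| := abs_nonneg L
  linarith

/-- The tame affine condition produces a center toward which `φ` is 1-Lipschitz. -/
lemma cond_to_bound (φ : C(ℝ, ℝ)) (a b : ℝ) (hab : ∀ x : ℝ, φ x = a * x + b)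
    (hcond : |a| < 1 ∨ a = -1 ∨ (a = 1 ∧ b = 0)) :
    ∃ p : ℝ, ∀ x : ℝ, |φ x - p| ≤ |x - p| := by
  rcases hcond with ha | ha | ⟨ha, hb⟩
  · have ha1' : (1 : ℝ) - a ≠ 0 := by
      have := (abs_lt.mp ha).2
      intro hc; linarith
    refine ⟨b / (1 - a), ?_⟩
    have hp : a * (b / (1 - a)) + b = b / (1 - a) := by field_simp; ring
    intro x
    have he : φ x - b / (1 - a) = a * (x - b / (1 - a)) := by
      rw [hab]; linear_combination hp
    rw [he, abs_mul]
    calc |a| * |x - b / (1 - a)| ≤ 1 * |x - b / (1 - a)| :=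
          mul_le_mul_of_nonneg_right ha.le (abs_nonneg _)
      _ = |x - b / (1 - a)| := one_mul _
  · refine ⟨b / 2, fun x => ?_⟩
    have he : φ x - b / 2 = -(x - b / 2) := by rw [hab, ha]; ring
    rw [he, abs_neg]
  · refine ⟨0, fun x => ?_⟩
    rw [hab, ha, hb]
    norm_num

/-- Under the tame affine condition, the composition operator is mean ergodic. -/
lemma me_of_cond (φ : C(ℝ, ℝ)) (a b : ℝ) (hab : ∀ x : ℝ, φ x = a * x + b)
    (hcond : |a| < 1 ∨ a = -1 ∨ (a = 1 ∧ b = 0)) (g : C(ℝ, ℝ)) :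
    ∃ h : C(ℝ, ℝ), Tendsto
      (fun n : ℕ => (n : ℝ)⁻¹ • ∑ k ∈ Finset.Icc 1 n, g.comp (cmIter φ k))
      atTop (nhds h) := by
  rcases hcond with ha | ha | ⟨ha, hb⟩
  · refine ⟨ContinuousMap.const ℝ (g (b / (1 - a))), ?_⟩
    apply cesaro_cm
    intro K hK
    exact tendstoUniformlyOn_comp_iter φ a b hab ha g K hK
  · -- a = -1 : period two
    have hinv : ∀ x : ℝ, φ (φ x) = x := by
      intro x; rw [hab, hab, ha]; ring
    have h2 : (⇑φ)^[2] = id := by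
      funext x
      show (⇑φ)^[2] x = x
      rw [Function.iterate_succ_apply', Function.iterate_one]
      exact hinv x
    have hcomp : ∀ k : ℕ, g.comp (cmIter φ k) = if Odd k then g.comp φ else g := by
      intro k
      rcases Nat.even_or_odd k with hk | hk
      · rw [if_neg (by simpa [Nat.not_odd_iff_even] using hk)]
        obtain ⟨m, hm⟩ := hk
        have hk2 : k = 2 * m := by omega
        have hit : (⇑φ)^[k] = id := by
          rw [hk2, Function.iterate_mul, h2, Function.iterate_id]
        ext x
        simp [cmIter, hit]
      · rw [if_pos hk]
        obtain ⟨m, hm⟩ := hk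
        have hit : ∀ x : ℝ, (⇑φ)^[k] x = φ x := by
          intro x
          have h2m : (⇑φ)^[2 * m] = id := by
            rw [Function.iterate_mul, h2, Function.iterate_id]
          rw [hm, Function.iterate_add_apply, h2m]
          simp
        ext x
        simp [cmIter, hit]
    have hsum : ∀ n : ℕ, ∑ k ∈ Finset.Icc 1 n, g.comp (cmIter φ k)
        = ((n + 1) / 2) • (g.comp φ) + (n / 2) • g := by
      intro n
      rw [← sum_ite_odd]
      exact Finset.sum_congr rfl fun k _ => hcomp k
    refine ⟨(2⁻¹ : ℝ) • (g.comp φ) + (2⁻¹ : ℝ) • g, ?_⟩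
    have hc1 : Tendsto (fun n : ℕ => (n : ℝ)⁻¹ * (((n + 1) / 2 : ℕ) : ℝ)) atTop (𝓝 2⁻¹) := by
      apply tendsto_halfdiv
      intro n
      have h1 : n ≤ 2 * ((n + 1) / 2) + 1 := by omega
      have h2' : 2 * ((n + 1) / 2) ≤ n + 1 := by omega
      constructor
      · have : (n : ℝ) ≤ 2 * (((n + 1) / 2 : ℕ) : ℝ) + 1 := by exact_mod_cast h1
        linarith
      · exact_mod_cast h2'
    have hc2 : Tendsto (fun n : ℕ => (n : ℝ)⁻¹ * ((n / 2 : ℕ) : ℝ)) atTop (𝓝 2⁻¹) := by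
      apply tendsto_halfdiv
      intro n
      have h1 : n ≤ 2 * (n / 2) + 1 := by omega
      have h2' : 2 * (n / 2) ≤ n + 1 := by omega
      constructor
      · have : (n : ℝ) ≤ 2 * ((n / 2 : ℕ) : ℝ) + 1 := by exact_mod_cast h1
        linarith
      · exact_mod_cast h2'
    refine Tendsto.congr (fun n => ?_)
      ((hc1.smul_const (g.comp φ)).add (hc2.smul_const g))
    rw [hsum n, smul_add, ← Nat.cast_smul_eq_nsmul ℝ, ← Nat.cast_smul_eq_nsmul ℝ,
      smul_smul, smul_smul]
  · -- identity case
    have hid : ∀ x : ℝ, φ x = x := fun x => by rw [hab, ha, hb]; ring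
    refine ⟨g, ?_⟩
    apply cesaro_cm
    intro K hK
    have hfix : ∀ (n : ℕ) (x : ℝ), (g.comp (cmIter φ n)) x = g x := by
      intro n x
      simp [cmIter, Function.iterate_fixed (hid x) n]
    rw [Metric.tendstoUniformlyOn_iff]
    intro ε hε
    filter_upwards with n x hx
    rw [hfix n x]
    simpa using hε

/-- For a polynomial symbol `φ`, the composition operator `C_φ` on `C(ℝ)` (with the
compact-open topology) is mean ergodic iff it is power bounded iff
`φ(x) = ax + b` with `|a| < 1`, `a = -1`, or `a = 1 ∧ b = 0`. -/
theorem comp_polynomial_meanErgodic_iff_powerBounded_iff_affine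
    (φ : C(ℝ, ℝ)) (hpoly : ∃ P : Polynomial ℝ, ∀ x : ℝ, φ x = P.eval x) :
    ((∀ g : C(ℝ, ℝ), ∃ h : C(ℝ, ℝ), Tendsto
        (fun n : ℕ => (n : ℝ)⁻¹ • ∑ k ∈ Finset.Icc 1 n, g.comp (cmIter φ k))
        atTop (nhds h)) ↔
      Equicontinuous (fun n : ℕ => fun g : C(ℝ, ℝ) => g.comp (cmIter φ n))) ∧
    (Equicontinuous (fun n : ℕ => fun g : C(ℝ, ℝ) => g.comp (cmIter φ n)) ↔
      ∃ a b : ℝ, (∀ x : ℝ, φ x = a * x + b) ∧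
        (|a| < 1 ∨ a = -1 ∨ (a = 1 ∧ b = 0))) := by
  obtain ⟨P, hP⟩ := hpoly
  by_cases h3 : ∃ a b : ℝ, (∀ x : ℝ, φ x = a * x + b) ∧
      (|a| < 1 ∨ a = -1 ∨ (a = 1 ∧ b = 0))
  · obtain ⟨a, b, hab, hcond⟩ := h3
    obtain ⟨p, hp⟩ := cond_to_bound φ a b hab hcond
    have hEC := equicontinuous_of_bound φ p hp
    have hME := me_of_cond φ a b hab hcond
    exact ⟨iff_of_true hME hEC, iff_of_true hEC ⟨a, b, hab, hcond⟩⟩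
  · obtain ⟨x₀, hx⟩ := exists_escape φ P hP h3
    exact ⟨iff_of_false (not_me_of_escape φ x₀ hx) (not_equicontinuous_of_escape φ x₀ hx),
      iff_of_false (not_equicontinuous_of_escape φ x₀ hx) h3⟩
end

section
/- Let m ∈ ℕ and φ ∈ C^m(ℝ), and suppose there exist D > 0 and p ∈ ℕ such that |(φ^[n])^{(j)}(x)| ≤ D(1+x²)^p for all 0 ≤ j ≤ m, all n ∈ ℕ and all x ∈ ℝ. Then for every r ∈ ℕ there exists C > 0 such that every f ∈ C^m(ℝ) satisfying |f^{(i)}(x)| ≤ (1+x²)^r for all 0 ≤ i ≤ m and all x ∈ ℝ satisfies |(f ∘ φ^[n])^{(i)}(x)| ≤ C(1+x²)^{p(2r+m)} for all 0 ≤ i ≤ m, all n ∈ ℕ and all x ∈ ℝ. (This expresses that if the sequence of iterates {φ^[n]} is bounded in O^m(ℝ), then the composition operator C_φ is power bounded on O^m(ℝ).) -/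
/-- If the iterates of `φ` are uniformly bounded in `O^m(ℝ)` (with constants `D`, `p`),
then the composition operator `C_φ` is power bounded on `O^m(ℝ)`: on each "ball"
`{f : |f^{(i)}(x)| ≤ (1+x²)^r}` all the compositions `f ∘ φ^[n]` satisfy a common
bound `C (1+x²)^{p(2r+m)}`. -/
theorem comp_powerBounded_Om_of_iterates_bounded (m : ℕ) (hm : 1 ≤ m)
    (φ : ℝ → ℝ) (hφ : ContDiff ℝ (m : ℕ∞) φ)
    (D : ℝ) (hD : 0 < D) (p : ℕ)
    (hbound : ∀ j ≤ m, ∀ n : ℕ, 1 ≤ n → ∀ x : ℝ,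
      |iteratedDeriv j (φ^[n]) x| ≤ D * (1 + x ^ 2) ^ p) :
    ∀ r : ℕ, ∃ C > (0 : ℝ), ∀ f : ℝ → ℝ, ContDiff ℝ (m : ℕ∞) f →
      (∀ i ≤ m, ∀ x : ℝ, |iteratedDeriv i f x| ≤ (1 + x ^ 2) ^ r) →
      ∀ i ≤ m, ∀ n : ℕ, 1 ≤ n → ∀ x : ℝ,
        |iteratedDeriv i (f ∘ φ^[n]) x| ≤ C * (1 + x ^ 2) ^ (p * (2 * r + m)) := by
  intro r
  refine ⟨(m.factorial : ℝ) * (1 + D ^ 2) ^ r * (D + 1) ^ m, by positivity, ?_⟩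
  intro f hf hfb i hi n hn x
  have hφn : ContDiff ℝ (m : ℕ∞) (φ^[n]) := by
    clear hn
    induction n with
    | zero => simpa using contDiff_id
    | succ k ih =>
      rw [Function.iterate_succ']
      exact hφ.comp ih
  have h1x : (1 : ℝ) ≤ 1 + x ^ 2 := by nlinarith [sq_nonneg x]
  have h1x0 : (0 : ℝ) < 1 + x ^ 2 := by linarith
  -- bound on φ^[n] x
  have hy : |φ^[n] x| ≤ D * (1 + x ^ 2) ^ p := by
    simpa using hbound 0 (Nat.zero_le m) n hn x
  have hy2 : 1 + (φ^[n] x) ^ 2 ≤ (1 + D ^ 2) * ((1 + x ^ 2) ^ p) ^ 2 := by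
    have h1 : (φ^[n] x) ^ 2 ≤ (D * (1 + x ^ 2) ^ p) ^ 2 := by
      rw [← sq_abs]
      exact pow_le_pow_left₀ (abs_nonneg _) hy 2
    have h2 : (1 : ℝ) ≤ ((1 + x ^ 2) ^ p) ^ 2 := one_le_pow₀ (one_le_pow₀ h1x)
    nlinarith [sq_nonneg ((1 + x ^ 2) ^ p)]
  set Cg : ℝ := (1 + D ^ 2) ^ r * (1 + x ^ 2) ^ (2 * p * r) with hCg
  set Df : ℝ := (D + 1) * (1 + x ^ 2) ^ p with hDf
  have hDf1 : (1 : ℝ) ≤ Df := by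
    have : (1 : ℝ) ≤ (1 + x ^ 2) ^ p := one_le_pow₀ h1x
    nlinarith
  have hC : ∀ j, j ≤ i → ‖iteratedFDeriv ℝ j f (φ^[n] x)‖ ≤ Cg := by
    intro j hj
    rw [norm_iteratedFDeriv_eq_norm_iteratedDeriv, Real.norm_eq_abs]
    calc |iteratedDeriv j f (φ^[n] x)| ≤ (1 + (φ^[n] x) ^ 2) ^ r :=
          hfb j (hj.trans hi) _
      _ ≤ ((1 + D ^ 2) * ((1 + x ^ 2) ^ p) ^ 2) ^ r := by
          apply pow_le_pow_left₀ (by nlinarith [sq_nonneg (φ^[n] x)]) hy2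
      _ = Cg := by
          rw [hCg, mul_pow, ← pow_mul, ← pow_mul]
          ring_nf
  have hDb : ∀ j, 1 ≤ j → j ≤ i → ‖iteratedFDeriv ℝ j (φ^[n]) x‖ ≤ Df ^ j := by
    intro j hj1 hji
    rw [norm_iteratedFDeriv_eq_norm_iteratedDeriv, Real.norm_eq_abs]
    calc |iteratedDeriv j (φ^[n]) x| ≤ D * (1 + x ^ 2) ^ p :=
          hbound j (hji.trans hi) n hn x
      _ ≤ Df := by
          have : (1 : ℝ) ≤ (1 + x ^ 2) ^ p := one_le_pow₀ h1x
          rw [hDf]; nlinarith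
      _ ≤ Df ^ j := le_self_pow₀ (by linarith) (by omega)
  have key := norm_iteratedFDeriv_comp_le hf hφn (by exact_mod_cast hi) x hC hDb
  rw [norm_iteratedFDeriv_eq_norm_iteratedDeriv, Real.norm_eq_abs] at key
  calc |iteratedDeriv i (f ∘ φ^[n]) x| ≤ (i.factorial : ℝ) * Cg * Df ^ i := key
    _ ≤ (m.factorial : ℝ) * (1 + D ^ 2) ^ r * (D + 1) ^ m * (1 + x ^ 2) ^ (p * (2 * r + m)) := by
        rw [hCg, hDf, mul_pow]
        have hfac : (i.factorial : ℝ) ≤ m.factorial := by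
          exact_mod_cast Nat.factorial_le hi
        have hD1 : (D + 1) ^ i ≤ (D + 1) ^ m :=
          pow_le_pow_right₀ (by linarith) hi
        have hxp : (1 + x ^ 2) ^ (2 * p * r) * ((1 + x ^ 2) ^ p) ^ i ≤
            (1 + x ^ 2) ^ (p * (2 * r + m)) := by
          rw [← pow_mul, ← pow_add]
          apply pow_le_pow_right₀ h1x
          ring_nf
          exact Nat.add_le_add_left (Nat.mul_le_mul_left p hi) _
        calc (i.factorial : ℝ) * ((1 + D ^ 2) ^ r * (1 + x ^ 2) ^ (2 * p * r)) *
              ((D + 1) ^ i * ((1 + x ^ 2) ^ p) ^ i)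
            = ((i.factorial : ℝ) * (1 + D ^ 2) ^ r * (D + 1) ^ i) *
              ((1 + x ^ 2) ^ (2 * p * r) * ((1 + x ^ 2) ^ p) ^ i) := by ring
          _ ≤ ((m.factorial : ℝ) * (1 + D ^ 2) ^ r * (D + 1) ^ m) *
              ((1 + x ^ 2) ^ (p * (2 * r + m))) := by
              apply mul_le_mul _ hxp (by positivity) (by positivity)
              apply mul_le_mul (mul_le_mul hfac le_rfl (by positivity) (by positivity))
                hD1 (by positivity) (by positivity)
          _ = (m.factorial : ℝ) * (1 + D ^ 2) ^ r * (D + 1) ^ m *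
              (1 + x ^ 2) ^ (p * (2 * r + m)) := by ring
end

section
/- Let φ: ℝ → ℝ be a C^∞ function such that for every i ∈ ℕ₀ there exist C > 0 and p ∈ ℕ with |(φ^[n])^{(i)}(x)| ≤ C(1+x²)^p for all n ∈ ℕ and all x ∈ ℝ. Then for every C^∞ function f: ℝ → ℝ of temperate growth and every i ∈ ℕ₀ there exist C′ > 0 and p′ ∈ ℕ such that |(f ∘ φ^[n])^{(i)}(x)| ≤ C′(1+x²)^{p′} for all n ∈ ℕ and all x ∈ ℝ. (This expresses that if the sequence of iterates {φ^[n]} is bounded in O_M(ℝ), then the composition operator C_φ is power bounded on O_M(ℝ).) -/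
lemma contDiff_iterate_aux (φ : ℝ → ℝ) (hφ : ContDiff ℝ (⊤ : ℕ∞) φ) (n : ℕ) :
    ContDiff ℝ (⊤ : ℕ∞) (φ^[n]) := by
  induction n with
  | zero => simpa using contDiff_id
  | succ k ih => rw [Function.iterate_succ']; exact hφ.comp ih

/-- If the iterates of `φ` are bounded in `O_M(ℝ)`, then the composition operator
`C_φ` is power bounded on `O_M(ℝ)`: for every slowly increasing `f` the compositions
`f ∘ φ^[n]` satisfy bounds uniform in `n`. -/
theorem comp_powerBounded_OM_of_iterates_bounded (φ : ℝ → ℝ)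
    (hφ : ContDiff ℝ (⊤ : ℕ∞) φ)
    (hbound : ∀ i : ℕ, ∃ C > (0 : ℝ), ∃ p : ℕ, ∀ n : ℕ, 1 ≤ n → ∀ x : ℝ,
      |iteratedDeriv i (φ^[n]) x| ≤ C * (1 + x ^ 2) ^ p) :
    ∀ f : ℝ → ℝ, ContDiff ℝ (⊤ : ℕ∞) f →
      (∀ j : ℕ, ∃ C > (0 : ℝ), ∃ p : ℕ, ∀ x : ℝ,
        |iteratedDeriv j f x| ≤ C * (1 + x ^ 2) ^ p) →
      ∀ i : ℕ, ∃ C' > (0 : ℝ), ∃ p' : ℕ, ∀ n : ℕ, 1 ≤ n → ∀ x : ℝ,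
        |iteratedDeriv i (f ∘ φ^[n]) x| ≤ C' * (1 + x ^ 2) ^ p' := by
  intro f hf hfb i
  choose Cφ hCφpos pφ hCφ using hbound
  choose Cf hCfpos pf hCf using hfb
  -- aggregated constants
  set A : ℝ := ∑ j ∈ Finset.range (i + 1), Cf j with hA
  set P : ℕ := ∑ j ∈ Finset.range (i + 1), pf j with hP
  set B : ℝ := 1 + ∑ j ∈ Finset.range (i + 1), Cφ j with hB
  set Q : ℕ := ∑ j ∈ Finset.range (i + 1), pφ j with hQ
  have hApos : 0 < A := Finset.sum_pos (fun j _ => hCfpos j) ⟨0, by simp⟩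
  have hsumφnonneg : 0 ≤ ∑ j ∈ Finset.range (i + 1), Cφ j :=
    Finset.sum_nonneg fun j _ => (hCφpos j).le
  have hB1 : (1 : ℝ) ≤ B := by simp [hB]; linarith
  have hBpos : 0 < B := lt_of_lt_of_le one_pos hB1
  have hK : (0:ℝ) < 1 + (Cφ 0) ^ 2 := by positivity
  refine ⟨(i.factorial : ℝ) * (A * (1 + (Cφ 0) ^ 2) ^ P) * B ^ i, by positivity,
    2 * pφ 0 * P + Q * i, ?_⟩
  intro n hn x
  have hone : (1:ℝ) ≤ 1 + x ^ 2 := by nlinarith [sq_nonneg x]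
  have hpow : ∀ q : ℕ, (1:ℝ) ≤ (1 + x ^ 2) ^ q := fun q => one_le_pow₀ hone
  set D : ℝ := B * (1 + x ^ 2) ^ Q with hD
  have hD1 : (1:ℝ) ≤ D := by rw [hD]; nlinarith [hpow Q]
  set C : ℝ := A * (1 + (Cφ 0) ^ 2) ^ P * (1 + x ^ 2) ^ (2 * pφ 0 * P) with hCdef
  have hgC : ContDiff ℝ (⊤ : ℕ∞) (φ^[n]) := contDiff_iterate_aux φ hφ n
  -- bound on φ^[n] x
  have hy : |φ^[n] x| ≤ Cφ 0 * (1 + x ^ 2) ^ pφ 0 := by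
    have := hCφ 0 n hn x
    simpa using this
  have hy2 : 1 + (φ^[n] x) ^ 2 ≤ (1 + (Cφ 0) ^ 2) * (1 + x ^ 2) ^ (2 * pφ 0) := by
    have h1 : (φ^[n] x) ^ 2 ≤ (Cφ 0) ^ 2 * ((1 + x ^ 2) ^ pφ 0) ^ 2 := by
      have := sq_abs (φ^[n] x)
      nlinarith [abs_nonneg (φ^[n] x), hy,
        mul_pos (hCφpos 0) (lt_of_lt_of_le one_pos (hpow (pφ 0)))]
    have h2 : ((1 + x ^ 2) ^ pφ 0) ^ 2 = (1 + x ^ 2) ^ (2 * pφ 0) := by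
      rw [← pow_mul, mul_comm]
    rw [h2] at h1
    have h3 : (1:ℝ) ≤ (1 + x ^ 2) ^ (2 * pφ 0) := hpow _
    nlinarith [sq_nonneg (Cφ 0)]
  -- main estimate via Faà di Bruno bound
  have key : ‖iteratedFDeriv ℝ i (f ∘ φ^[n]) x‖ ≤ (i.factorial : ℝ) * C * D ^ i := by
    apply norm_iteratedFDeriv_comp_le hf hgC (by exact_mod_cast le_top) x
    · intro j hj
      rw [norm_iteratedFDeriv_eq_norm_iteratedDeriv, Real.norm_eq_abs]
      have h1 : |iteratedDeriv j f (φ^[n] x)| ≤ Cf j * (1 + (φ^[n] x) ^ 2) ^ pf j :=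
        hCf j _
      have hb : (1:ℝ) ≤ 1 + (φ^[n] x) ^ 2 := by nlinarith [sq_nonneg (φ^[n] x)]
      have h2 : (1 + (φ^[n] x) ^ 2) ^ pf j ≤
          ((1 + (Cφ 0) ^ 2) * (1 + x ^ 2) ^ (2 * pφ 0)) ^ pf j :=
        pow_le_pow_left₀ (by linarith) hy2 _
      have h3 : ((1 + (Cφ 0) ^ 2) * (1 + x ^ 2) ^ (2 * pφ 0)) ^ pf j ≤
          ((1 + (Cφ 0) ^ 2) * (1 + x ^ 2) ^ (2 * pφ 0)) ^ P := by
        apply pow_le_pow_right₀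
        · have := hpow (2 * pφ 0)
          nlinarith [sq_nonneg (Cφ 0)]
        · exact Finset.single_le_sum (f := fun j => pf j) (fun k _ => Nat.zero_le _)
            (Finset.mem_range.mpr (Nat.lt_succ_of_le hj))
      have h4 : Cf j ≤ A :=
        Finset.single_le_sum (f := fun j => Cf j) (fun k _ => (hCfpos k).le)
          (Finset.mem_range.mpr (Nat.lt_succ_of_le hj))
      have h5 : ((1 + (Cφ 0) ^ 2) * (1 + x ^ 2) ^ (2 * pφ 0)) ^ P
          = (1 + (Cφ 0) ^ 2) ^ P * (1 + x ^ 2) ^ (2 * pφ 0 * P) := by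
        rw [mul_pow, ← pow_mul]
      calc |iteratedDeriv j f (φ^[n] x)|
          ≤ Cf j * (1 + (φ^[n] x) ^ 2) ^ pf j := h1
        _ ≤ A * (((1 + (Cφ 0) ^ 2) * (1 + x ^ 2) ^ (2 * pφ 0)) ^ P) :=
            mul_le_mul h4 (le_trans h2 h3) (by positivity) hApos.le
        _ = C := by rw [hCdef, h5]; ring
    · intro j hj1 hji
      rw [norm_iteratedFDeriv_eq_norm_iteratedDeriv, Real.norm_eq_abs]
      have h1 : |iteratedDeriv j (φ^[n]) x| ≤ Cφ j * (1 + x ^ 2) ^ pφ j := hCφ j n hn x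
      have h2 : Cφ j * (1 + x ^ 2) ^ pφ j ≤ B * (1 + x ^ 2) ^ Q := by
        have hc : Cφ j ≤ B := by
          have := Finset.single_le_sum (f := fun j => Cφ j) (fun k _ => (hCφpos k).le)
            (Finset.mem_range.mpr (Nat.lt_succ_of_le hji))
          linarith
        have hq : (1 + x ^ 2) ^ pφ j ≤ (1 + x ^ 2) ^ Q :=
          pow_le_pow_right₀ hone
            (Finset.single_le_sum (f := fun j => pφ j) (fun k _ => Nat.zero_le _)
              (Finset.mem_range.mpr (Nat.lt_succ_of_le hji)))
        exact mul_le_mul hc hq (by positivity) hBpos.le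
      have h3 : D ≤ D ^ j := le_self_pow₀ hD1 (by omega)
      calc |iteratedDeriv j (φ^[n]) x| ≤ D := le_trans h1 h2
        _ ≤ D ^ j := h3
  have hnorm : |iteratedDeriv i (f ∘ φ^[n]) x| = ‖iteratedFDeriv ℝ i (f ∘ φ^[n]) x‖ := by
    rw [norm_iteratedFDeriv_eq_norm_iteratedDeriv, Real.norm_eq_abs]
  rw [hnorm]
  refine le_trans key ?_
  have hDi : D ^ i = B ^ i * (1 + x ^ 2) ^ (Q * i) := by
    rw [hD, mul_pow, ← pow_mul]
  have heq : (i.factorial : ℝ) * C * D ^ i =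
      (i.factorial : ℝ) * (A * (1 + (Cφ 0) ^ 2) ^ P) * B ^ i *
        (1 + x ^ 2) ^ (2 * pφ 0 * P + Q * i) := by
    rw [hCdef, hDi, pow_add]; ring
  rw [heq]
end

section
/- Let m ∈ ℕ₀ and let f ∈ C^m(ℝ). Let φ ∈ C^m(ℝ) and let (φ_k)_{k∈ℕ} be a sequence in C^m(ℝ) such that for every 0 ≤ i ≤ m the derivatives φ_k^{(i)} converge to φ^{(i)} uniformly on every compact subset of ℝ as k → ∞. Then for every 0 ≤ i ≤ m, (f ∘ φ_k)^{(i)} converges to (f ∘ φ)^{(i)} uniformly on every compact subset of ℝ as k → ∞. (That is, the superposition operator S_f: C^m(ℝ) → C^m(ℝ), φ ↦ f ∘ φ, is sequentially continuous for the topology of local uniform convergence of all derivatives up to order m.) -/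
open Filter Topology

/-- Local uniform convergence of all derivatives up to order `n`. -/
def SupConv (n : ℕ) (F : ℕ → ℝ → ℝ) (g : ℝ → ℝ) : Prop :=
  ∀ i ≤ n, ∀ K : Set ℝ, IsCompact K →
    TendstoUniformlyOn (fun k => iteratedDeriv i (F k)) (iteratedDeriv i g) atTop K

lemma tuo_comp {f φ : ℝ → ℝ} {Φ : ℕ → ℝ → ℝ} (hf : Continuous f)
    {K : Set ℝ} (hK : IsCompact K) (hφ : Continuous φ)
    (h : TendstoUniformlyOn Φ φ atTop K) :
    TendstoUniformlyOn (fun k x => f (Φ k x)) (fun x => f (φ x)) atTop K := by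
  rw [Metric.tendstoUniformlyOn_iff] at h ⊢
  intro ε hε
  set C : Set ℝ := Metric.cthickening 1 (φ '' K) with hC
  have hCc : IsCompact C := (hK.image hφ).cthickening
  have hfc : UniformContinuousOn f C :=
    hCc.uniformContinuousOn_of_continuous hf.continuousOn
  rw [Metric.uniformContinuousOn_iff] at hfc
  obtain ⟨δ, hδ, hδ'⟩ := hfc ε hε
  filter_upwards [h (min δ 1) (lt_min hδ one_pos)] with k hk x hx
  have h1 : dist (φ x) (Φ k x) < min δ 1 := hk x hx
  have hφx : φ x ∈ C := Metric.self_subset_cthickening _ ⟨x, hx, rfl⟩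
  have hΦx : Φ k x ∈ C := by
    refine Metric.mem_cthickening_of_dist_le (Φ k x) (φ x) 1 (φ '' K) ⟨x, hx, rfl⟩ ?_
    rw [dist_comm]
    exact le_of_lt (lt_of_lt_of_le h1 (min_le_right _ _))
  exact hδ' _ hφx _ hΦx (lt_of_lt_of_le h1 (min_le_left _ _))

lemma tuo_mul {F G : ℕ → ℝ → ℝ} {g h : ℝ → ℝ} {K : Set ℝ} (hK : IsCompact K)
    (hg : ContinuousOn g K) (hh : ContinuousOn h K)
    (h1 : TendstoUniformlyOn F g atTop K) (h2 : TendstoUniformlyOn G h atTop K) :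
    TendstoUniformlyOn (fun k x => F k x * G k x) (fun x => g x * h x) atTop K := by
  rw [Metric.tendstoUniformlyOn_iff] at h1 h2 ⊢
  obtain ⟨C, hC⟩ := hK.exists_bound_of_continuousOn hg
  obtain ⟨D, hD⟩ := hK.exists_bound_of_continuousOn hh
  intro ε hε
  set M : ℝ := |C| + |D| + 1 with hM
  have hM1 : 1 ≤ M := by nlinarith [abs_nonneg C, abs_nonneg D]
  have hgM : ∀ x ∈ K, |g x| ≤ M := fun x hx =>
    le_trans (le_trans (hC x hx) (le_abs_self C)) (by nlinarith [abs_nonneg D])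
  have hhM : ∀ x ∈ K, |h x| ≤ M := fun x hx =>
    le_trans (le_trans (hD x hx) (le_abs_self D)) (by nlinarith [abs_nonneg C])
  have hMpos : (0:ℝ) < 2 * M + 2 := by nlinarith
  set δ : ℝ := min (ε / (2 * M + 2)) 1 with hδdef
  have hδpos : 0 < δ := lt_min (by positivity) one_pos
  filter_upwards [h1 δ hδpos, h2 δ hδpos] with k hk1 hk2 x hx
  have e1 : |g x - F k x| < δ := by
    have := hk1 x hx; rwa [Real.dist_eq] at this
  have e2 : |h x - G k x| < δ := by
    have := hk2 x hx; rwa [Real.dist_eq] at this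
  rw [Real.dist_eq]
  have hF : |F k x| ≤ M + 1 := by
    have hle : |F k x| ≤ |g x| + |g x - F k x| := by
      have := abs_sub_abs_le_abs_sub (F k x) (g x)
      rw [abs_sub_comm] at this
      linarith
    have hδ1 : δ ≤ 1 := min_le_right _ _
    have := hgM x hx
    linarith
  have key : |g x * h x - F k x * G k x| ≤ (M + 1) * δ + M * δ := by
    have expand : g x * h x - F k x * G k x
        = F k x * (h x - G k x) + (g x - F k x) * h x := by ring
    rw [expand]
    refine le_trans (abs_add_le _ _) ?_
    rw [abs_mul, abs_mul]
    have t1 : |F k x| * |h x - G k x| ≤ (M + 1) * δ :=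
      mul_le_mul hF (le_of_lt e2) (abs_nonneg _) (by linarith)
    have t2 : |g x - F k x| * |h x| ≤ δ * M :=
      mul_le_mul (le_of_lt e1) (hhM x hx) (abs_nonneg _) (le_of_lt hδpos)
    linarith
  have hfin : (M + 1) * δ + M * δ < ε := by
    have hδle : δ ≤ ε / (2 * M + 2) := min_le_left _ _
    have hE : (2 * M + 2) * (ε / (2 * M + 2)) = ε := by field_simp
    nlinarith
  linarith

lemma supconv_shift {n : ℕ} {F : ℕ → ℝ → ℝ} {g : ℝ → ℝ}
    (h : SupConv (n + 1) F g) :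
    SupConv n (fun k => deriv (F k)) (deriv g) := by
  intro i hi K hK
  have := h (i + 1) (Nat.succ_le_succ hi) K hK
  simpa only [iteratedDeriv_succ'] using this

lemma supconv_mono {j n : ℕ} (hjn : j ≤ n) {F : ℕ → ℝ → ℝ} {g : ℝ → ℝ}
    (h : SupConv n F g) : SupConv j F g :=
  fun i hi K hK => h i (le_trans hi hjn) K hK

lemma contdiff_mono {j n : ℕ} (hjn : j ≤ n) {f : ℝ → ℝ}
    (hf : ContDiff ℝ (n : ℕ∞) f) : ContDiff ℝ (j : ℕ∞) f :=
  hf.of_le (by exact_mod_cast hjn)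

lemma iteratedDeriv_add' {n : ℕ} {f g : ℝ → ℝ} (hf : ContDiff ℝ (n : ℕ∞) f)
    (hg : ContDiff ℝ (n : ℕ∞) g) :
    iteratedDeriv n (fun x => f x + g x)
      = fun x => iteratedDeriv n f x + iteratedDeriv n g x := by
  funext x
  simp only [iteratedDeriv_eq_iteratedFDeriv]
  rw [show (fun x => f x + g x) = f + g from rfl,
    iteratedFDeriv_add_apply (by exact_mod_cast hf.contDiffAt) (by exact_mod_cast hg.contDiffAt)]
  rfl

lemma cast_succ_eq (n : ℕ) :
    (((n + 1 : ℕ) : ℕ∞) : WithTop ℕ∞) = ((n : ℕ∞) : WithTop ℕ∞) + 1 := by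
  push_cast
  rfl

lemma contdiff_deriv_of_succ {n : ℕ} {f : ℝ → ℝ}
    (hf : ContDiff ℝ ((n + 1 : ℕ) : ℕ∞) f) :
    Differentiable ℝ f ∧ ContDiff ℝ (n : ℕ∞) (deriv f) := by
  rw [cast_succ_eq n, contDiff_succ_iff_deriv] at hf
  exact ⟨hf.1, hf.2.2⟩

lemma contdiff_of_succ {n : ℕ} {f : ℝ → ℝ}
    (hf : ContDiff ℝ ((n + 1 : ℕ) : ℕ∞) f) :
    ContDiff ℝ (n : ℕ∞) f := by
  apply hf.of_le
  rw [cast_succ_eq n]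
  exact le_self_add

/-- Products preserve `SupConv`. -/
lemma supconv_mul : ∀ (n : ℕ) (g h : ℝ → ℝ) (G H : ℕ → ℝ → ℝ),
    ContDiff ℝ (n : ℕ∞) g → ContDiff ℝ (n : ℕ∞) h →
    (∀ k, ContDiff ℝ (n : ℕ∞) (G k)) → (∀ k, ContDiff ℝ (n : ℕ∞) (H k)) →
    SupConv n G g → SupConv n H h →
    SupConv n (fun k => fun x => G k x * H k x) (fun x => g x * h x) := by
  intro n
  induction n with
  | zero =>
    intro g h G H hg hh hG hH h1 h2 i hi K hK
    interval_cases i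
    simp only [iteratedDeriv_zero]
    exact tuo_mul hK hg.continuous.continuousOn hh.continuous.continuousOn
      (by simpa only [iteratedDeriv_zero] using h1 0 le_rfl K hK)
      (by simpa only [iteratedDeriv_zero] using h2 0 le_rfl K hK)
  | succ n ih =>
    intro g h G H hg hh hG hH h1 h2 i hi K hK
    match i, hi with
    | 0, _ =>
      simp only [iteratedDeriv_zero]
      exact tuo_mul hK hg.continuous.continuousOn hh.continuous.continuousOn
        (by simpa only [iteratedDeriv_zero] using h1 0 (Nat.zero_le _) K hK)
        (by simpa only [iteratedDeriv_zero] using h2 0 (Nat.zero_le _) K hK)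
    | (j + 1), hi =>
      have hj : j ≤ n := Nat.succ_le_succ_iff.mp hi
      obtain ⟨hgd, hg'⟩ := contdiff_deriv_of_succ hg
      obtain ⟨hhd, hh'⟩ := contdiff_deriv_of_succ hh
      have hGd : ∀ k, Differentiable ℝ (G k) := fun k => (contdiff_deriv_of_succ (hG k)).1
      have hHd : ∀ k, Differentiable ℝ (H k) := fun k => (contdiff_deriv_of_succ (hH k)).1
      have hG' : ∀ k, ContDiff ℝ (n : ℕ∞) (deriv (G k)) :=
        fun k => (contdiff_deriv_of_succ (hG k)).2
      have hH' : ∀ k, ContDiff ℝ (n : ℕ∞) (deriv (H k)) :=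
        fun k => (contdiff_deriv_of_succ (hH k)).2
      have hgn := contdiff_of_succ hg
      have hhn := contdiff_of_succ hh
      have hGn : ∀ k, ContDiff ℝ (n : ℕ∞) (G k) := fun k => contdiff_of_succ (hG k)
      have hHn : ∀ k, ContDiff ℝ (n : ℕ∞) (H k) := fun k => contdiff_of_succ (hH k)
      have dmul : ∀ (a b : ℝ → ℝ), Differentiable ℝ a → Differentiable ℝ b →
          deriv (fun x => a x * b x) = fun x => deriv a x * b x + a x * deriv b x := by
        intro a b ha hb
        funext x
        exact deriv_mul (ha x) (hb x)
      have p1 : SupConv n (fun k => fun x => deriv (G k) x * H k x)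
          (fun x => deriv g x * h x) :=
        ih (deriv g) h (fun k => deriv (G k)) H hg' hhn hG' hHn
          (supconv_shift h1) (supconv_mono (Nat.le_succ n) h2)
      have p2 : SupConv n (fun k => fun x => G k x * deriv (H k) x)
          (fun x => g x * deriv h x) :=
        ih g (deriv h) G (fun k => deriv (H k)) hgn hh' hGn hH'
          (supconv_mono (Nat.le_succ n) h1) (supconv_shift h2)
      have hc1 : ContDiff ℝ (n : ℕ∞) (fun x => deriv g x * h x) := hg'.mul hhn
      have hc2 : ContDiff ℝ (n : ℕ∞) (fun x => g x * deriv h x) := hgn.mul hh'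
      have hck1 : ∀ k, ContDiff ℝ (n : ℕ∞) (fun x => deriv (G k) x * H k x) :=
        fun k => (hG' k).mul (hHn k)
      have hck2 : ∀ k, ContDiff ℝ (n : ℕ∞) (fun x => G k x * deriv (H k) x) :=
        fun k => (hGn k).mul (hH' k)
      have goal_eq : ∀ (k : ℕ), iteratedDeriv (j + 1) (fun x => G k x * H k x)
          = fun x => iteratedDeriv j (fun x => deriv (G k) x * H k x) x
              + iteratedDeriv j (fun x => G k x * deriv (H k) x) x := by
        intro k
        rw [iteratedDeriv_succ', dmul _ _ (hGd k) (hHd k),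
          iteratedDeriv_add' (contdiff_mono hj (hck1 k)) (contdiff_mono hj (hck2 k))]
      have lim_eq : iteratedDeriv (j + 1) (fun x => g x * h x)
          = fun x => iteratedDeriv j (fun x => deriv g x * h x) x
              + iteratedDeriv j (fun x => g x * deriv h x) x := by
        rw [iteratedDeriv_succ', dmul _ _ hgd hhd,
          iteratedDeriv_add' (contdiff_mono hj hc1) (contdiff_mono hj hc2)]
      have T := (p1 j hj K hK).add (p2 j hj K hK)
      simp only [goal_eq, lim_eq]
      exact T

/-- Composition with a `C^n` function preserves `SupConv`. -/
lemma supconv_comp : ∀ (n : ℕ) (f φ : ℝ → ℝ) (Φ : ℕ → ℝ → ℝ),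
    ContDiff ℝ (n : ℕ∞) f → ContDiff ℝ (n : ℕ∞) φ →
    (∀ k, ContDiff ℝ (n : ℕ∞) (Φ k)) → SupConv n Φ φ →
    SupConv n (fun k => f ∘ Φ k) (f ∘ φ) := by
  intro n
  induction n with
  | zero =>
    intro f φ Φ hf hφ hΦ h i hi K hK
    interval_cases i
    simp only [iteratedDeriv_zero]
    exact tuo_comp hf.continuous hK hφ.continuous
      (by simpa only [iteratedDeriv_zero] using h 0 le_rfl K hK)
  | succ n ih =>
    intro f φ Φ hf hφ hΦ h i hi K hK
    match i, hi with
    | 0, _ =>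
      simp only [iteratedDeriv_zero]
      exact tuo_comp hf.continuous hK hφ.continuous
        (by simpa only [iteratedDeriv_zero] using h 0 (Nat.zero_le _) K hK)
    | (j + 1), hi =>
      have hj : j ≤ n := Nat.succ_le_succ_iff.mp hi
      obtain ⟨hfd, hf'⟩ := contdiff_deriv_of_succ hf
      obtain ⟨hφd, hφ'⟩ := contdiff_deriv_of_succ hφ
      have hΦd : ∀ k, Differentiable ℝ (Φ k) := fun k => (contdiff_deriv_of_succ (hΦ k)).1
      have hΦ' : ∀ k, ContDiff ℝ (n : ℕ∞) (deriv (Φ k)) :=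
        fun k => (contdiff_deriv_of_succ (hΦ k)).2
      have hφn := contdiff_of_succ hφ
      have hΦn : ∀ k, ContDiff ℝ (n : ℕ∞) (Φ k) := fun k => contdiff_of_succ (hΦ k)
      have hfn := contdiff_of_succ hf
      have dcomp : ∀ (ψ : ℝ → ℝ), Differentiable ℝ ψ →
          deriv (f ∘ ψ) = fun x => deriv f (ψ x) * deriv ψ x := by
        intro ψ hψ
        funext x
        exact deriv_comp x (hfd _) (hψ x)
      -- SupConv of deriv f ∘ Φ at level n  (from ih applied to deriv f)
      have c1 : SupConv n (fun k => (deriv f) ∘ Φ k) ((deriv f) ∘ φ) :=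
        ih (deriv f) φ Φ hf' hφn hΦn (supconv_mono (Nat.le_succ n) h)
      have c2 : SupConv n (fun k => deriv (Φ k)) (deriv φ) := supconv_shift h
      have hgc : ContDiff ℝ (n : ℕ∞) ((deriv f) ∘ φ) := hf'.comp hφn
      have hGc : ∀ k, ContDiff ℝ (n : ℕ∞) ((deriv f) ∘ Φ k) :=
        fun k => hf'.comp (hΦn k)
      have P : SupConv n
          (fun k => fun x => ((deriv f) ∘ Φ k) x * deriv (Φ k) x)
          (fun x => ((deriv f) ∘ φ) x * deriv φ x) :=
        supconv_mul n ((deriv f) ∘ φ) (deriv φ)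
          (fun k => (deriv f) ∘ Φ k) (fun k => deriv (Φ k))
          hgc hφ' hGc hΦ' c1 c2
      have goal_eq : ∀ k : ℕ, iteratedDeriv (j + 1) (f ∘ Φ k)
          = iteratedDeriv j (fun x => ((deriv f) ∘ Φ k) x * deriv (Φ k) x) := by
        intro k
        rw [iteratedDeriv_succ', dcomp _ (hΦd k)]
        rfl
      have lim_eq : iteratedDeriv (j + 1) (f ∘ φ)
          = iteratedDeriv j (fun x => ((deriv f) ∘ φ) x * deriv φ x) := by
        rw [iteratedDeriv_succ', dcomp _ hφd]
        rfl
      have T := P j hj K hK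
      simp only [goal_eq, lim_eq]
      exact T

/-- The superposition operator `S_f : φ ↦ f ∘ φ` on `C^m(ℝ)` is sequentially
continuous for the topology of uniform convergence on compact sets of all
derivatives up to order `m`. -/
theorem superposition_sequentially_continuous (m : ℕ) (f : ℝ → ℝ)
    (hf : ContDiff ℝ (m : ℕ∞) f)
    (φ : ℝ → ℝ) (hφ : ContDiff ℝ (m : ℕ∞) φ)
    (Φ : ℕ → ℝ → ℝ) (hΦ : ∀ k : ℕ, ContDiff ℝ (m : ℕ∞) (Φ k))
    (hconv : ∀ i ≤ m, ∀ K : Set ℝ, IsCompact K →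
      TendstoUniformlyOn (fun k : ℕ => iteratedDeriv i (Φ k))
        (iteratedDeriv i φ) atTop K) :
    ∀ i ≤ m, ∀ K : Set ℝ, IsCompact K →
      TendstoUniformlyOn (fun k : ℕ => iteratedDeriv i (f ∘ Φ k))
        (iteratedDeriv i (f ∘ φ)) atTop K := by
  exact supconv_comp m f φ Φ hf hφ hΦ hconv
end

section
/- Let m ∈ ℕ₀, let X be a barrelled locally convex Hausdorff topological vector space over ℝ, and let J: X → (ℝ → ℝ) be an injective linear map such that every Jf belongs to C^m(ℝ) and, for every compact K ⊆ ℝ and every 0 ≤ i ≤ m, the seminorm f ↦ sup_{x∈K}|(Jf)^{(i)}(x)| is continuous on X. Assume: (i) there is e ∈ X with Je equal to the identity function on ℝ; (ii) for all f, g ∈ X there is h ∈ X with Jh = (Jf) ∘ (Jg); (iii) a sequence (x_k) in X converges in X to x ∈ X if and only if (x_k) is bounded in X and, for every 0 ≤ i ≤ m, (J x_k)^{(i)} converges to (J x)^{(i)} uniformly on every compact subset of ℝ. Let (g_k)_{k∈ℕ} be a sequence in X such that for each k there is a continuous linear operator C_k: X → X with J(C_k f) = (Jf) ∘ (J g_k)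 for all f ∈ X. Then there exists a continuous linear operator C: X → X with C_k f → C f in X for every f ∈ X (i.e., (C_k) converges in the strong operator topology) if and only if (g_k) converges in X and the family {C_k : k ∈ ℕ} is equicontinuous. -/
open Filter Topology

namespace CompSOTAux

/-- Uniform convergence on all compact subsets of ℝ. -/
def UC (u : ℕ → ℝ → ℝ) (l : ℝ → ℝ) : Prop :=
  ∀ K : Set ℝ, IsCompact K → TendstoUniformlyOn u l atTop K

/-- `C^i` convergence: uniform convergence of all iterated derivatives up to order `i`
on all compact sets. -/
def CC (i : ℕ) (u : ℕ → ℝ → ℝ) (l : ℝ → ℝ) : Prop :=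
  ∀ j ≤ i, UC (fun k => iteratedDeriv j (u k)) (iteratedDeriv j l)

theorem cc_mono {i i' : ℕ} (h : i ≤ i') {u l} (hc : CC i' u l) : CC i u l :=
  fun j hj => hc j (hj.trans h)

theorem cc_uc {i : ℕ} {u l} (hc : CC i u l) : UC u l := by
  simpa only [iteratedDeriv_zero] using hc 0 (Nat.zero_le _)

theorem cc_deriv {i : ℕ} {u l} (hc : CC (i + 1) u l) :
    CC i (fun k => deriv (u k)) (deriv l) := by
  intro j hj
  simpa only [← iteratedDeriv_succ'] using hc (j + 1) (by omega)

theorem cc_succ_of {i : ℕ} {u l} (huc : UC u l)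
    (hd : CC i (fun k => deriv (u k)) (deriv l)) : CC (i + 1) u l := by
  intro j hj
  cases j with
  | zero => simpa only [iteratedDeriv_zero] using huc
  | succ j => simp only [iteratedDeriv_succ']; exact hd j (by omega)

theorem uc_comp {F l : ℝ → ℝ} {u : ℕ → ℝ → ℝ} (hF : Continuous F) (hl : Continuous l)
    (h : UC u l) : UC (fun k => F ∘ u k) (F ∘ l) := by
  intro K hK
  have hK' : IsCompact (Metric.cthickening 1 (l '' K)) := (hK.image hl).cthickening
  have hFu : UniformContinuousOn F (Metric.cthickening 1 (l '' K)) :=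
    hK'.uniformContinuousOn_of_continuous hF.continuousOn
  rw [Metric.tendstoUniformlyOn_iff]
  intro ε hε
  rw [Metric.uniformContinuousOn_iff] at hFu
  obtain ⟨δ, hδ, hδ'⟩ := hFu ε hε
  filter_upwards [Metric.tendstoUniformlyOn_iff.mp (h K hK) (min δ 1)
    (lt_min hδ one_pos)] with k hk x hx
  have h1 : l x ∈ Metric.cthickening 1 (l '' K) :=
    Metric.self_subset_cthickening _ (Set.mem_image_of_mem l hx)
  have h2 : u k x ∈ Metric.cthickening 1 (l '' K) :=
    Metric.mem_cthickening_of_dist_le (u k x) (l x) 1 _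
      (Set.mem_image_of_mem l hx)
      (by rw [dist_comm]; exact (hk x hx).le.trans (min_le_right _ _))
  exact hδ' _ h1 _ h2 ((hk x hx).trans_le (min_le_left _ _))

theorem uc_mul {la lb : ℝ → ℝ} {a b : ℕ → ℝ → ℝ} (hla : Continuous la) (hlb : Continuous lb)
    (ha : UC a la) (hb : UC b lb) :
    UC (fun k x => a k x * b k x) (fun x => la x * lb x) := by
  intro K hK
  obtain ⟨Ma, hMa⟩ := hK.exists_bound_of_continuousOn hla.continuousOn
  obtain ⟨Mb, hMb⟩ := hK.exists_bound_of_continuousOn hlb.continuousOn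
  set M : ℝ := max Ma (max Mb 0) with hM
  have hM0 : 0 ≤ M := le_max_of_le_right (le_max_right _ _)
  have hMa' : ∀ x ∈ K, |la x| ≤ M := fun x hx => (hMa x hx).trans (le_max_left _ _)
  have hMb' : ∀ x ∈ K, |lb x| ≤ M := fun x hx =>
    (hMb x hx).trans (le_max_of_le_right (le_max_left _ _))
  rw [Metric.tendstoUniformlyOn_iff]
  intro ε hε
  set δ : ℝ := min 1 (ε / (2 * M + 2)) with hδdef
  have hδ : 0 < δ := lt_min one_pos (div_pos hε (by linarith))
  filter_upwards [Metric.tendstoUniformlyOn_iff.mp (ha K hK) δ hδ,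
    Metric.tendstoUniformlyOn_iff.mp (hb K hK) δ hδ] with k hka hkb x hx
  have h1 : |la x - a k x| < δ := by
    have := hka x hx; rwa [Real.dist_eq] at this
  have h2 : |lb x - b k x| < δ := by
    have := hkb x hx; rwa [Real.dist_eq] at this
  have hbk : |b k x| ≤ M + 1 := by
    have : |b k x| ≤ |lb x| + |lb x - b k x| := by
      have := abs_sub_abs_le_abs_sub (b k x) (lb x)
      rw [abs_sub_comm (b k x) (lb x)] at this
      linarith
    have hδ1 : δ ≤ 1 := min_le_left _ _
    linarith [hMb' x hx]
  rw [Real.dist_eq]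
  have key : |la x * lb x - a k x * b k x| ≤ |la x| * |lb x - b k x| + |b k x| * |la x - a k x| := by
    have : la x * lb x - a k x * b k x = la x * (lb x - b k x) + (la x - a k x) * b k x := by ring
    rw [this]
    calc |la x * (lb x - b k x) + (la x - a k x) * b k x|
        ≤ |la x * (lb x - b k x)| + |(la x - a k x) * b k x| := abs_add_le _ _
      _ = |la x| * |lb x - b k x| + |b k x| * |la x - a k x| := by
          rw [abs_mul, abs_mul]; ring
  have hδε : (2 * M + 1) * δ < ε := by
    have h2' : δ ≤ ε / (2 * M + 2) := min_le_right _ _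
    have h3' : δ * (2 * M + 2) ≤ ε := (le_div_iff₀ (by linarith : (0:ℝ) < 2 * M + 2)).mp h2'
    nlinarith [hδ]
  calc |la x * lb x - a k x * b k x|
      ≤ |la x| * |lb x - b k x| + |b k x| * |la x - a k x| := key
    _ ≤ M * δ + (M + 1) * δ := by
        have := hMa' x hx
        have h1' := h1.le
        have h2' := h2.le
        have := abs_nonneg (la x - a k x)
        have := abs_nonneg (lb x - b k x)
        nlinarith [abs_nonneg (la x), abs_nonneg (b k x)]
    _ = (2 * M + 1) * δ := by ring
    _ < ε := hδε


theorem iteratedDeriv_add_fun {n : ℕ} {f g : ℝ → ℝ} (hf : ContDiff ℝ n f)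
    (hg : ContDiff ℝ n g) :
    iteratedDeriv n (fun x => f x + g x) = fun x => iteratedDeriv n f x + iteratedDeriv n g x := by
  funext x
  have : (fun x => f x + g x) = f + g := rfl
  rw [this]
  simp only [iteratedDeriv]
  rw [iteratedFDeriv_add_apply hf.contDiffAt hg.contDiffAt]
  rfl

theorem cc_add {i : ℕ} {a b : ℕ → ℝ → ℝ} {la lb : ℝ → ℝ}
    (ha' : ∀ k, ContDiff ℝ i (a k)) (hla' : ContDiff ℝ i la)
    (hb' : ∀ k, ContDiff ℝ i (b k)) (hlb' : ContDiff ℝ i lb)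
    (ha : CC i a la) (hb : CC i b lb) :
    CC i (fun k x => a k x + b k x) (fun x => la x + lb x) := by
  intro j hj K hK
  have hj' : (j : WithTop ℕ∞) ≤ (i : WithTop ℕ∞) := by exact_mod_cast hj
  have e1 : ∀ k, iteratedDeriv j (fun x => a k x + b k x)
      = fun x => iteratedDeriv j (a k) x + iteratedDeriv j (b k) x :=
    fun k => iteratedDeriv_add_fun ((ha' k).of_le hj') ((hb' k).of_le hj')
  have e2 : iteratedDeriv j (fun x => la x + lb x)
      = fun x => iteratedDeriv j la x + iteratedDeriv j lb x :=
    iteratedDeriv_add_fun (hla'.of_le hj') (hlb'.of_le hj')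
  simp only [e1, e2]
  exact (ha j hj K hK).add (hb j hj K hK)

theorem cc_mul : ∀ (i : ℕ) (a b : ℕ → ℝ → ℝ) (la lb : ℝ → ℝ),
    (∀ k, ContDiff ℝ i (a k)) → ContDiff ℝ i la →
    (∀ k, ContDiff ℝ i (b k)) → ContDiff ℝ i lb →
    CC i a la → CC i b lb →
    CC i (fun k x => a k x * b k x) (fun x => la x * lb x) := by
  intro i
  induction i with
  | zero =>
    intro a b la lb ha' hla' hb' hlb' ha hb j hj
    obtain rfl : j = 0 := Nat.le_zero.mp hj
    simp only [iteratedDeriv_zero]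
    exact uc_mul hla'.continuous hlb'.continuous (cc_uc ha) (cc_uc hb)
  | succ i IH =>
    intro a b la lb ha' hla' hb' hlb' ha hb
    have hcast : ((i + 1 : ℕ) : WithTop ℕ∞) = (i : WithTop ℕ∞) + 1 := by exact_mod_cast rfl
    have hle : (i : WithTop ℕ∞) ≤ ((i + 1 : ℕ) : WithTop ℕ∞) := by exact_mod_cast Nat.le_succ i
    have hone : (1 : WithTop ℕ∞) ≤ ((i + 1 : ℕ) : WithTop ℕ∞) := by
      exact_mod_cast Nat.succ_le_succ (Nat.zero_le i)
    have hda : ∀ k, Differentiable ℝ (a k) := fun k => (ha' k).differentiable (Nat.cast_ne_zero.mpr (Nat.succ_ne_zero i))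
    have hdb : ∀ k, Differentiable ℝ (b k) := fun k => (hb' k).differentiable (Nat.cast_ne_zero.mpr (Nat.succ_ne_zero i))
    have hdla : Differentiable ℝ la := hla'.differentiable (Nat.cast_ne_zero.mpr (Nat.succ_ne_zero i))
    have hdlb : Differentiable ℝ lb := hlb'.differentiable (Nat.cast_ne_zero.mpr (Nat.succ_ne_zero i))
    have hda' : ∀ k, ContDiff ℝ i (deriv (a k)) := fun k =>
      (contDiff_succ_iff_deriv.mp (hcast ▸ ha' k)).2.2
    have hdb' : ∀ k, ContDiff ℝ i (deriv (b k)) := fun k =>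
      (contDiff_succ_iff_deriv.mp (hcast ▸ hb' k)).2.2
    have hdla' : ContDiff ℝ i (deriv la) := (contDiff_succ_iff_deriv.mp (hcast ▸ hla')).2.2
    have hdlb' : ContDiff ℝ i (deriv lb) := (contDiff_succ_iff_deriv.mp (hcast ▸ hlb')).2.2
    apply cc_succ_of
    · exact uc_mul hla'.continuous hlb'.continuous (cc_uc ha) (cc_uc hb)
    · have e1 : ∀ k, deriv (fun x => a k x * b k x)
          = fun x => deriv (a k) x * b k x + a k x * deriv (b k) x := by
        intro k; funext x; exact deriv_mul ((hda k) x) ((hdb k) x)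
      have e2 : deriv (fun x => la x * lb x)
          = fun x => deriv la x * lb x + la x * deriv lb x := by
        funext x; exact deriv_mul (hdla x) (hdlb x)
      simp only [e1, e2]
      apply cc_add
      · exact fun k => (hda' k).mul ((hb' k).of_le hle)
      · exact hdla'.mul (hlb'.of_le hle)
      · exact fun k => ((ha' k).of_le hle).mul (hdb' k)
      · exact (hla'.of_le hle).mul hdlb'
      · exact IH _ _ _ _ hda' hdla' (fun k => (hb' k).of_le hle) (hlb'.of_le hle)
          (cc_deriv ha) (cc_mono (Nat.le_succ i) hb)
      · exact IH _ _ _ _ (fun k => (ha' k).of_le hle) (hla'.of_le hle) hdb' hdlb'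
          (cc_mono (Nat.le_succ i) ha) (cc_deriv hb)

theorem cc_comp : ∀ (i : ℕ) (F : ℝ → ℝ) (u : ℕ → ℝ → ℝ) (l : ℝ → ℝ),
    ContDiff ℝ i F → (∀ k, ContDiff ℝ i (u k)) → ContDiff ℝ i l →
    CC i u l → CC i (fun k => F ∘ u k) (F ∘ l) := by
  intro i
  induction i with
  | zero =>
    intro F u l hF hu hl h j hj
    obtain rfl : j = 0 := Nat.le_zero.mp hj
    simp only [iteratedDeriv_zero]
    exact uc_comp hF.continuous hl.continuous (cc_uc h)
  | succ i IH =>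
    intro F u l hF hu hl h
    have hcast : ((i + 1 : ℕ) : WithTop ℕ∞) = (i : WithTop ℕ∞) + 1 := by exact_mod_cast rfl
    have hle : (i : WithTop ℕ∞) ≤ ((i + 1 : ℕ) : WithTop ℕ∞) := by exact_mod_cast Nat.le_succ i
    have hone : (1 : WithTop ℕ∞) ≤ ((i + 1 : ℕ) : WithTop ℕ∞) := by
      exact_mod_cast Nat.succ_le_succ (Nat.zero_le i)
    have hdF : Differentiable ℝ F := hF.differentiable (Nat.cast_ne_zero.mpr (Nat.succ_ne_zero i))
    have hdu : ∀ k, Differentiable ℝ (u k) := fun k => (hu k).differentiable (Nat.cast_ne_zero.mpr (Nat.succ_ne_zero i))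
    have hdl : Differentiable ℝ l := hl.differentiable (Nat.cast_ne_zero.mpr (Nat.succ_ne_zero i))
    have hdF' : ContDiff ℝ i (deriv F) := (contDiff_succ_iff_deriv.mp (hcast ▸ hF)).2.2
    have hdu' : ∀ k, ContDiff ℝ i (deriv (u k)) := fun k =>
      (contDiff_succ_iff_deriv.mp (hcast ▸ hu k)).2.2
    have hdl' : ContDiff ℝ i (deriv l) := (contDiff_succ_iff_deriv.mp (hcast ▸ hl)).2.2
    apply cc_succ_of
    · exact uc_comp hF.continuous hl.continuous (cc_uc h)
    · have e1 : ∀ k, deriv (F ∘ u k) = fun x => deriv F (u k x) * deriv (u k) x := by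
        intro k; funext x; exact deriv_comp x (hdF _) ((hdu k) x)
      have e2 : deriv (F ∘ l) = fun x => deriv F (l x) * deriv l x := by
        funext x; exact deriv_comp x (hdF _) (hdl x)
      simp only [e1, e2]
      exact cc_mul i (fun k x => deriv F (u k x)) (fun k => deriv (u k))
        (fun x => deriv F (l x)) (deriv l)
        (fun k => hdF'.comp ((hu k).of_le hle)) (hdF'.comp (hl.of_le hle))
        hdu' hdl'
        (IH (deriv F) u l hdF' (fun k => (hu k).of_le hle) (hl.of_le hle)
          (cc_mono (Nat.le_succ i) h))
        (cc_deriv h)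

end CompSOTAux

/-- Corollary on convergence of composition operators in the strong operator topology:
under the stated assumptions on a barrelled space `X ↪ C^m(ℝ)` closed under composition
and containing the identity, a sequence of composition operators `C_k f = f ∘ g_k`
converges in the strong operator topology iff `(g_k)` converges in `X` and `(C_k)` is
equicontinuous. -/
theorem comp_sequence_SOT_convergence_iff (m : ℕ) (X : Type*)
    [AddCommGroup X] [Module ℝ X] [UniformSpace X] [IsUniformAddGroup X]
    [ContinuousSMul ℝ X] [LocallyConvexSpace ℝ X] [T2Space X] [BarrelledSpace ℝ X]
    (J : X →ₗ[ℝ] (ℝ → ℝ)) (hJinj : Function.Injective J)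
    (hJCm : ∀ f : X, ContDiff ℝ (m : ℕ∞) (J f))
    (hJcont : ∀ K : Set ℝ, IsCompact K → ∀ i ≤ m,
      Continuous (fun f : X => ⨆ x ∈ K, |iteratedDeriv i (J f) x|))
    (e : X) (he : J e = fun x : ℝ => x)
    (hcomp : ∀ f g : X, ∃ h : X, J h = (J f) ∘ (J g))
    (hconv : ∀ (u : ℕ → X) (l : X),
      Tendsto u atTop (nhds l) ↔
        (Bornology.IsVonNBounded ℝ (Set.range u) ∧
          ∀ i ≤ m, ∀ K : Set ℝ, IsCompact K →
            TendstoUniformlyOn (fun k : ℕ => iteratedDeriv i (J (u k)))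
              (iteratedDeriv i (J l)) atTop K))
    (g : ℕ → X) (Ck : ℕ → X →L[ℝ] X)
    (hCk : ∀ (k : ℕ) (f : X), J (Ck k f) = (J f) ∘ (J (g k))) :
    (∃ C : X →L[ℝ] X, ∀ f : X, Tendsto (fun k : ℕ => Ck k f) atTop (nhds (C f))) ↔
      ((∃ glim : X, Tendsto g atTop (nhds glim)) ∧
        Equicontinuous (fun k : ℕ => (Ck k : X → X))) := by
  classical
  have hq : WithSeminorms (gaugeSeminormFamily ℝ X) := with_gaugeSeminormFamily
  constructor
  · rintro ⟨C, hC⟩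
    have hge : ∀ k, Ck k e = g k := fun k => hJinj (by rw [hCk k e, he]; rfl)
    refine ⟨⟨C e, Filter.Tendsto.congr hge (hC e)⟩, ?_⟩
    have hB : ∀ s x, BddAbove (Set.range fun k => gaugeSeminormFamily ℝ X s (Ck k x)) :=
      fun s x => (((hq.continuous_seminorm s).tendsto _).comp (hC x)).bddAbove_range
    exact (hq.banach_steinhaus (𝓕 := Ck) hB).equicontinuous
  · rintro ⟨⟨glim, hg⟩, hEq⟩
    obtain ⟨-, hgc⟩ := (hconv g glim).mp hg
    choose Cf hCf using fun f => hcomp f glim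
    have hUE : UniformEquicontinuous ((↑) ∘ Ck) :=
      uniformEquicontinuous_of_equicontinuousAt_zero Ck (hEq 0)
    have hbdd := (hq.uniformEquicontinuous_iff_bddAbove_and_continuous_iSup
      (fun k => (Ck k).toLinearMap)).mp hUE
    have hVb : ∀ f : X, Bornology.IsVonNBounded ℝ (Set.range fun k => Ck k f) := by
      intro f
      rw [hq.isVonNBounded_iff_seminorm_bounded]
      intro s
      obtain ⟨hba, -⟩ := hbdd s
      rw [Seminorm.bddAbove_range_iff] at hba
      obtain ⟨r, hr⟩ := hba f
      have hrk : ∀ k, gaugeSeminormFamily ℝ X s (Ck k f) ≤ r := by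
        intro k
        have := hr (Set.mem_range_self (f := fun i => ((gaugeSeminormFamily ℝ X s).comp
          (Ck i).toLinearMap) f) k)
        simpa using this
      have h0 : (0 : ℝ) ≤ r := le_trans (apply_nonneg _ _) (hrk 0)
      refine ⟨r + 1, by linarith, ?_⟩
      rintro x ⟨k, rfl⟩
      exact lt_of_le_of_lt (hrk k) (by linarith)
    have hJf' : ∀ f : X, ContDiff ℝ (m : ℕ) (J f) := by
      intro f
      have := hJCm f
      exact_mod_cast this
    have hm : CompSOTAux.CC m (fun k => J (g k)) (J glim) := fun j hj K hK => hgc j hj K hK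
    have key : ∀ f : X, Tendsto (fun k => Ck k f) atTop (nhds (Cf f)) := by
      intro f
      rw [hconv]
      refine ⟨hVb f, ?_⟩
      intro i hi K hK
      have hcc := CompSOTAux.cc_comp m (J f) (fun k => J (g k)) (J glim) (hJf' f)
        (fun k => hJf' (g k)) (hJf' glim) hm i hi K hK
      simpa only [hCk, hCf] using hcc
    exact ⟨hq.continuousLinearMapOfTendsto Ck (tendsto_pi_nhds.mpr key), key⟩
end

section
/- Let m ∈ ℕ₀, let X be a topological vector space over ℝ, and let J: X → (ℝ → ℝ) be an injective linear map such that every Jf belongs to C^m(ℝ) and, for every compact K ⊆ ℝ and every 0 ≤ i ≤ m, the seminorm f ↦ sup_{x∈K}|(Jf)^{(i)}(x)| is continuous on X. Assume there is e ∈ X with Je equal to the identity function on ℝ, and that for all f, g ∈ X there is h ∈ X with Jh = (Jf) ∘ (Jg). Let g ∈ X, put φ := Jg, and suppose there is a continuous linear operator C_φ: X → X with J(C_φ f) = (Jf) ∘ φ for all f ∈ X. If C_φ is mean ergodic, i.e., for every f ∈ X the Cesàro means (1/n)∑_{k=1}^n C_φ^k f converge in X, then: (1) for every 0 ≤ i ≤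 m the sequence of functions ((1/n)∑_{k=1}^n φ^[k])^{(i)} converges uniformly on every compact subset of ℝ as n → ∞; (2) for every 0 ≤ i ≤ m, the functions (1/n)·(φ^[n])^{(i)} converge to 0 uniformly on every compact subset of ℝ as n → ∞. -/
open Filter Topology

private lemma iterD_zero' (i : ℕ) (x : ℝ) : iteratedDeriv i (0 : ℝ → ℝ) x = 0 := by
  have h : iteratedFDeriv ℝ i (0 : ℝ → ℝ) = 0 := iteratedFDeriv_zero_fun
  simp [iteratedDeriv_eq_iteratedFDeriv, h]

private lemma iterD_sub' {i : ℕ} {f g : ℝ → ℝ} (hf : ContDiff ℝ i f) (hg : ContDiff ℝ i g)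
    (x : ℝ) : iteratedDeriv i (f - g) x = iteratedDeriv i f x - iteratedDeriv i g x := by
  have hng : ContDiff ℝ i (-g) := hg.neg
  simp only [iteratedDeriv_eq_iteratedFDeriv]
  rw [sub_eq_add_neg, iteratedFDeriv_add_apply hf.contDiffAt hng.contDiffAt, iteratedFDeriv_neg_apply]
  rw [sub_eq_add_neg]
  simp

private lemma iterD_smul' {i : ℕ} (c : ℝ) {f : ℝ → ℝ} (hf : ContDiff ℝ i f) (x : ℝ) :
    iteratedDeriv i (c • f) x = c * iteratedDeriv i f x := by
  simp only [iteratedDeriv_eq_iteratedFDeriv]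
  rw [iteratedFDeriv_const_smul_apply hf.contDiffAt]
  simp

private lemma aux_unif {X : Type*} [AddCommGroup X] [Module ℝ X] [TopologicalSpace X]
    [IsTopologicalAddGroup X] (m : ℕ) (J : X →ₗ[ℝ] (ℝ → ℝ))
    (hJCm : ∀ f : X, ContDiff ℝ (m : ℕ∞) (J f))
    (hJcont : ∀ K : Set ℝ, IsCompact K → ∀ i ≤ m,
      Continuous (fun f : X => ⨆ x ∈ K, |iteratedDeriv i (J f) x|))
    {i : ℕ} (him : i ≤ m) {K : Set ℝ} (hK : IsCompact K)
    {u : ℕ → X} {L : X} (hu : Tendsto u atTop (nhds L)) :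
    TendstoUniformlyOn (fun n => iteratedDeriv i (J (u n))) (iteratedDeriv i (J L)) atTop K := by
  have hCi : ∀ f : X, ContDiff ℝ i (J f) := fun f => (hJCm f).of_le (by exact_mod_cast him)
  set p : X → ℝ := fun f => ⨆ x ∈ K, |iteratedDeriv i (J f) x| with hp
  have hpc : Continuous p := hJcont K hK i him
  have h0 : Tendsto (fun n => u n - L) atTop (nhds 0) := by
    rw [← tendsto_sub_nhds_zero_iff] at hu; exact hu
  have hp0 : p 0 = 0 := by
    have hz : ∀ x : ℝ, |iteratedDeriv i (J 0) x| = 0 := by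
      intro x; rw [map_zero]; simp [iterD_zero' i x]
    simp only [hp, hz, Real.iSup_const_zero]
  have hps : Tendsto (fun n => p (u n - L)) atTop (nhds 0) := by
    have := (hpc.tendsto 0).comp h0
    rwa [hp0] at this
  rw [Metric.tendstoUniformlyOn_iff]
  intro ε hε
  filter_upwards [hps.eventually_lt_const hε] with n hn x hx
  have hcont : Continuous fun x => |iteratedDeriv i (J (u n - L)) x| :=
    ((hCi _).continuous_iteratedDeriv i (by exact_mod_cast le_rfl)).abs
  have hbdd : BddAbove ((fun x => |iteratedDeriv i (J (u n - L)) x|) '' K) :=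
    (hK.image hcont).bddAbove
  obtain ⟨C, hC⟩ := hbdd
  have hC' : ∀ y ∈ K, |iteratedDeriv i (J (u n - L)) y| ≤ C := fun y hy =>
    hC (Set.mem_image_of_mem _ hy)
  have hb : ∀ y : ℝ, (⨆ _ : y ∈ K, |iteratedDeriv i (J (u n - L)) y|) ≤ max C 0 := by
    intro y
    by_cases hy : y ∈ K
    · have h1 : (⨆ _ : y ∈ K, |iteratedDeriv i (J (u n - L)) y|)
          = |iteratedDeriv i (J (u n - L)) y| := ciSup_pos hy
      rw [h1]; exact le_max_of_le_left (hC' y hy)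
    · have : IsEmpty (y ∈ K) := ⟨hy⟩
      rw [Real.iSup_of_isEmpty]; exact le_max_right _ _
  have hle : |iteratedDeriv i (J (u n - L)) x| ≤ p (u n - L) := by
    have h1 : (⨆ _ : x ∈ K, |iteratedDeriv i (J (u n - L)) x|)
        = |iteratedDeriv i (J (u n - L)) x| := ciSup_pos hx
    calc |iteratedDeriv i (J (u n - L)) x|
        = ⨆ _ : x ∈ K, |iteratedDeriv i (J (u n - L)) x| := h1.symm
      _ ≤ ⨆ y : ℝ, ⨆ _ : y ∈ K, |iteratedDeriv i (J (u n - L)) y| :=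
          le_ciSup ⟨max C 0, by rintro _ ⟨y, rfl⟩; exact hb y⟩ x
  have heq : iteratedDeriv i (J (u n - L)) x
      = iteratedDeriv i (J (u n)) x - iteratedDeriv i (J L) x := by
    rw [map_sub, iterD_sub' (hCi _) (hCi _)]
  rw [Real.dist_eq, abs_sub_comm]
  calc |iteratedDeriv i (J (u n)) x - iteratedDeriv i (J L) x|
      = |iteratedDeriv i (J (u n - L)) x| := by rw [heq]
    _ ≤ p (u n - L) := hle
    _ < ε := hn

/-- If the composition operator `C_φ` (with symbol `φ = J g ∈ X ↪ C^m(ℝ)`) is mean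
ergodic on `X`, then the Cesàro means of the iterates of `φ` converge, and
`φ^[n]/n → 0`, in `C^m(ℝ)` (uniformly on compact sets for all derivatives up to
order `m`). -/
theorem meanErgodic_comp_implies_cesaro_convergence (m : ℕ) (X : Type*)
    [AddCommGroup X] [Module ℝ X] [TopologicalSpace X]
    [IsTopologicalAddGroup X] [ContinuousSMul ℝ X]
    (J : X →ₗ[ℝ] (ℝ → ℝ)) (hJinj : Function.Injective J)
    (hJCm : ∀ f : X, ContDiff ℝ (m : ℕ∞) (J f))
    (hJcont : ∀ K : Set ℝ, IsCompact K → ∀ i ≤ m,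
      Continuous (fun f : X => ⨆ x ∈ K, |iteratedDeriv i (J f) x|))
    (e : X) (he : J e = fun x : ℝ => x)
    (hcomp : ∀ f g : X, ∃ h : X, J h = (J f) ∘ (J g))
    (g : X) (φ : ℝ → ℝ) (hφ : φ = J g)
    (Cφ : X →L[ℝ] X) (hCφ : ∀ (f : X) (x : ℝ), J (Cφ f) x = J f (φ x))
    (hME : ∀ f : X, ∃ l : X, Tendsto
      (fun n : ℕ => (n : ℝ)⁻¹ • ∑ k ∈ Finset.Icc 1 n, (Cφ ^ k) f)
      atTop (nhds l)) :
    (∀ i ≤ m, ∃ F : ℝ → ℝ, ∀ K : Set ℝ, IsCompact K →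
      TendstoUniformlyOn
        (fun n : ℕ => iteratedDeriv i
          (fun x : ℝ => (n : ℝ)⁻¹ * ∑ k ∈ Finset.Icc 1 n, φ^[k] x))
        F atTop K) ∧
    (∀ i ≤ m, ∀ K : Set ℝ, IsCompact K →
      TendstoUniformlyOn
        (fun (n : ℕ) (x : ℝ) => (n : ℝ)⁻¹ * iteratedDeriv i (φ^[n]) x)
        (fun _ : ℝ => 0) atTop K) := by
  -- J of the iterates of `Cφ` applied to `e` are the iterates of `φ`
  have hiter : ∀ k : ℕ, J ((Cφ ^ k) e) = φ^[k] := by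
    intro k
    induction k with
    | zero => simp; exact he
    | succ k ih =>
      have h1 : (Cφ ^ (k + 1)) e = Cφ ((Cφ ^ k) e) := by
        rw [pow_succ']; rfl
      funext x
      rw [h1, hCφ, ih, Function.iterate_succ_apply]
  obtain ⟨l, hl⟩ := hME e
  have hJu : ∀ n : ℕ, J ((n : ℝ)⁻¹ • ∑ k ∈ Finset.Icc 1 n, (Cφ ^ k) e)
      = fun x : ℝ => (n : ℝ)⁻¹ * ∑ k ∈ Finset.Icc 1 n, φ^[k] x := by
    intro n
    funext x
    rw [map_smul, map_sum]
    simp only [Pi.smul_apply, Finset.sum_apply, hiter, smul_eq_mul]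
  constructor
  · intro i him
    refine ⟨iteratedDeriv i (J l), fun K hK => ?_⟩
    have h := aux_unif m J hJCm hJcont him hK hl
    simpa only [hJu] using h
  · intro i him K hK
    -- the key identity relating `n⁻¹ • Cφ^n e` to Cesàro means
    have hkey : ∀ n : ℕ, 1 ≤ n → (n : ℝ)⁻¹ • (Cφ ^ n) e
        = ((n : ℝ)⁻¹ • ∑ k ∈ Finset.Icc 1 n, (Cφ ^ k) e)
          - (((n : ℝ) - 1) * (n : ℝ)⁻¹) •
            ((↑(n - 1) : ℝ)⁻¹ • ∑ k ∈ Finset.Icc 1 (n - 1), (Cφ ^ k) e) := by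
      intro n hn
      obtain ⟨j, rfl⟩ : ∃ j, n = j + 1 := ⟨n - 1, (Nat.succ_pred_eq_of_pos hn).symm⟩
      simp only [Nat.add_sub_cancel]
      rcases Nat.eq_zero_or_pos j with rfl | hj
      · simp
      · have hsum : ∑ k ∈ Finset.Icc 1 (j + 1), (Cφ ^ k) e
            = (∑ k ∈ Finset.Icc 1 j, (Cφ ^ k) e) + (Cφ ^ (j + 1)) e :=
          Finset.sum_Icc_succ_top (by omega) _
        have hjne : (j : ℝ) ≠ 0 := Nat.cast_ne_zero.mpr (by omega)
        have hcast : ((j + 1 : ℕ) : ℝ) = (j : ℝ) + 1 := by push_cast; ring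
        rw [hsum, smul_add, hcast]
        have hs : ((((j : ℝ) + 1) - 1) * ((j : ℝ) + 1)⁻¹) •
            ((j : ℝ)⁻¹ • ∑ k ∈ Finset.Icc 1 j, (Cφ ^ k) e)
            = ((j : ℝ) + 1)⁻¹ • ∑ k ∈ Finset.Icc 1 j, (Cφ ^ k) e := by
          rw [smul_smul]
          congr 1
          field_simp
          ring
        rw [hs]
        abel
    have hc' : Tendsto (fun n : ℕ => ((n : ℝ) - 1) * (n : ℝ)⁻¹) atTop (nhds 1) := by
      have h1 : Tendsto (fun n : ℕ => 1 - (n : ℝ)⁻¹) atTop (nhds 1) := by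
        simpa using (tendsto_const_nhds (x := (1:ℝ))).sub tendsto_inv_atTop_nhds_zero_nat
      apply h1.congr'
      filter_upwards [eventually_ge_atTop 1] with n hn
      have hne : (n : ℝ) ≠ 0 := Nat.cast_ne_zero.mpr (by omega)
      rw [sub_mul, mul_inv_cancel₀ hne, one_mul]
    have hA1 : Tendsto (fun n : ℕ =>
        (↑(n - 1) : ℝ)⁻¹ • ∑ k ∈ Finset.Icc 1 (n - 1), (Cφ ^ k) e) atTop (nhds l) :=
      hl.comp (tendsto_sub_atTop_nat 1)
    have key : Tendsto (fun n : ℕ => (n : ℝ)⁻¹ • (Cφ ^ n) e) atTop (nhds (0 : X)) := by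
      have h2 := hl.sub (hc'.smul hA1)
      rw [one_smul, sub_self] at h2
      apply h2.congr'
      filter_upwards [eventually_ge_atTop 1] with n hn
      exact (hkey n hn).symm
    have h := aux_unif m J hJCm hJcont him hK key
    have hJ0 : iteratedDeriv i (J (0 : X)) = fun _ : ℝ => (0 : ℝ) := by
      funext x; rw [map_zero]; exact iterD_zero' i x
    rw [hJ0] at h
    have hfun : (fun (n : ℕ) (x : ℝ) => (n : ℝ)⁻¹ * iteratedDeriv i (φ^[n]) x)
        = fun n : ℕ => iteratedDeriv i (J ((n : ℝ)⁻¹ • (Cφ ^ n) e)) := by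
      funext n x
      have hc : ContDiff ℝ i (φ^[n]) := by
        rw [← hiter n]; exact (hJCm _).of_le (by exact_mod_cast him)
      rw [map_smul, hiter, iterD_smul' _ hc]
    rw [hfun]
    exact h
end
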